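/- arXiv:1312.2531 — 9 statements merged into one kernel-verified Lean document; each statement's English description precedes it below -/
import Mathlib

section
/- Let G = (V, E) be a connected finite simple graph, let a, b ∈ V be two distinct vertices, let v ∉ V be a new vertex, and let G' = (V ∪ {v}, E ∪ {{a,v}, {v,b}}) be the graph obtained by adding v together with the two edges {a,v} and {v,b}. Then α(G') ≥ 3·α(G). -/
open SimpleGraph

/-- The number of edge covers of a finite simple graph: subsets `E'` of the edge set
such that every vertex is incident to at least one edge of `E'`. -/
noncomputable def edgeCoverCount {V : Type*} (G : SimpleGraph V) : ℕ :=
  {E' : Set (Sym2 V) | E' ⊆ G.edgeSet ∧ ∀ v : V, ∃ e ∈ E', v ∈ e}.ncard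

/-!
Every edge cover `E'` of `G` extends to an edge cover of the new graph by adding any of the three
nonempty subsets of the two new edges `{a, v}, {v, b}`, which are distinct because `a ≠ b`. These
`3 · α(G)` extensions are pairwise distinct: the new edges are exactly those containing `v`, and
the old cover is recovered as the preimage of the rest.
-/

namespace Sym2

variable {V : Type*}

theorem none_notMem_map_some (e : Sym2 V) : (none : Option V) ∉ e.map some := by
  rw [Sym2.mem_map]
  rintro ⟨x, -, hx⟩
  exact Option.some_ne_none x hx

theorem injOn_image_map_some_union :
    Set.InjOn (fun p : Set (Sym2 V) × Set (Sym2 (Option V)) => Sym2.map some '' p.1 ∪ p.2)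
      {p | ∀ e ∈ p.2, none ∈ e} := by
  have recover_fst : ∀ p : Set (Sym2 V) × Set (Sym2 (Option V)), (∀ e ∈ p.2, none ∈ e) →
      Sym2.map some ⁻¹' (Sym2.map some '' p.1 ∪ p.2) = p.1 := by
    intro p hp
    rw [Set.preimage_union, Set.preimage_image_eq _ (Sym2.map.injective (Option.some_injective V)),
      Set.union_eq_left]
    exact fun e he => absurd (hp _ he) (none_notMem_map_some e)
  have recover_snd : ∀ p : Set (Sym2 V) × Set (Sym2 (Option V)), (∀ e ∈ p.2, none ∈ e) →
      (Sym2.map some '' p.1 ∪ p.2) ∩ {e | none ∈ e} = p.2 := by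
    intro p hp
    rw [Set.union_inter_distrib_right, Set.inter_eq_left.mpr (show p.2 ⊆ {e | none ∈ e} from hp),
      Set.union_eq_right]
    rintro _ ⟨⟨e, -, rfl⟩, he⟩
    exact (none_notMem_map_some e he).elim
  intro p hp q hq hpq
  simp only at hpq
  ext1
  · rw [← recover_fst p hp, ← recover_fst q hq, hpq]
  · rw [← recover_snd p hp, ← recover_snd q hq, hpq]

end Sym2

namespace SimpleGraph

variable {V : Type*}

def edgeCovers (G : SimpleGraph V) : Set (Set (Sym2 V)) :=
  {E' | E' ⊆ G.edgeSet ∧ ∀ v : V, ∃ e ∈ E', v ∈ e}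

theorem edgeCoverCount_eq_ncard_edgeCovers (G : SimpleGraph V) :
    edgeCoverCount G = (edgeCovers G).ncard :=
  rfl

theorem image_map_some_union_mem_edgeCovers (G : SimpleGraph V)
    {N X : Set (Sym2 (Option V))} (hXN : X ⊆ N) (hXdiag : ∀ e ∈ X, ¬ e.IsDiag)
    (hXnone : ∃ e ∈ X, none ∈ e) {E' : Set (Sym2 V)} (hE' : E' ∈ G.edgeCovers) :
    Sym2.map some '' E' ∪ X ∈ (fromEdgeSet (Sym2.map some '' G.edgeSet ∪ N)).edgeCovers := by
  obtain ⟨hE'G, hE'cover⟩ := hE'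
  constructor
  · rw [edgeSet_fromEdgeSet]
    rintro _ (⟨e, he, rfl⟩ | he)
    · exact ⟨Or.inl ⟨e, hE'G he, rfl⟩,
        (Sym2.isDiag_map (Option.some_injective V)).not.mpr (G.not_isDiag_of_mem_edgeSet (hE'G he))⟩
    · exact ⟨Or.inr (hXN he), hXdiag _ he⟩
  · rintro (_ | x)
    · obtain ⟨e, he, hnone⟩ := hXnone
      exact ⟨e, Or.inr he, hnone⟩
    · obtain ⟨e, he, hx⟩ := hE'cover x
      exact ⟨e.map some, Or.inl ⟨e, he, rfl⟩, Sym2.mem_map.mpr ⟨x, hx, rfl⟩⟩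

end SimpleGraph

theorem edgeCoverCount_add_vertex_general {V : Type*} [Fintype V] (G : SimpleGraph V)
    (a b : V) (hab : a ≠ b) :
    3 * edgeCoverCount G ≤
      edgeCoverCount (SimpleGraph.fromEdgeSet
        ((Sym2.map (some : V → Option V)) '' G.edgeSet ∪
          {s((some a : Option V), (none : Option V)), s((none : Option V), (some b : Option V))})) := by
  set e₁ : Sym2 (Option V) := s(some a, none)
  set e₂ : Sym2 (Option V) := s(none, some b)
  have he : e₁ ≠ e₂ := by simp [e₁, e₂, hab]
  set S : Set (Set (Sym2 (Option V))) := {{e₁}, {e₂}, {e₁, e₂}}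
  have hS : S.ncard = 3 := Set.ncard_eq_three.mpr ⟨_, _, _, by simpa using he,
    by simp [Set.ext_iff, he.symm], by simp [Set.ext_iff, he], rfl⟩
  have hSedges : ∀ X ∈ S, X ⊆ {e₁, e₂} ∧ (∀ e ∈ X, ¬ e.IsDiag) ∧ ∃ e ∈ X, none ∈ e := by
    simp [S, e₁, e₂]
  rw [edgeCoverCount_eq_ncard_edgeCovers, edgeCoverCount_eq_ncard_edgeCovers, mul_comm, ← hS,
    ← Set.ncard_prod]
  refine Set.ncard_le_ncard_of_injOn _ ?_ (Sym2.injOn_image_map_some_union.mono ?_)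
  · rintro ⟨E', X⟩ ⟨hE', hX⟩
    obtain ⟨hXN, hXdiag, hXnone⟩ := hSedges X hX
    exact G.image_map_some_union_mem_edgeCovers hXN hXdiag hXnone hE'
  · rintro ⟨E', X⟩ ⟨-, hX⟩ e he
    rcases (hSedges X hX).1 he with rfl | rfl <;> simp [e₁, e₂]

/-- Adding a new vertex (`none` in `Option V`) joined to two distinct existing vertices
`a` and `b` of a connected finite simple graph at least triples the number of edge covers. -/
theorem edgeCoverCount_add_vertex {V : Type*} [Fintype V] (G : SimpleGraph V)
    (hG : G.Connected) (a b : V) (hab : a ≠ b) :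
    3 * edgeCoverCount G ≤
      edgeCoverCount (SimpleGraph.fromEdgeSet
        ((Sym2.map (some : V → Option V)) '' G.edgeSet ∪
          {s((some a : Option V), (none : Option V)), s((none : Option V), (some b : Option V))})) :=
  edgeCoverCount_add_vertex_general G a b hab
end

section
/- Let G = (V, E) be a connected finite simple graph, let a, b ∈ V, let v_1, …, v_n ∉ V be n ≥ 2 new distinct vertices, and let G' = (V ∪ {v_1,…,v_n}, E ∪ {{a,v_1}, {v_1,v_2}, …, {v_{n-1},v_n}, {v_n,b}}) be the graph obtained by adding the path a, v_1, …, v_n, b. Then α(G') ≥ 5·α(G). -/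
open SimpleGraph

/-
Every edge cover `C` of `G` extends to an edge cover of the enlarged graph by adding a set `S` of
path edges that covers the new vertices, and `C ∪ S` determines both `C` and `S`, because the
path edges are exactly the edges meeting a new vertex. So it suffices to find five such `S`:
all path edges with one of `∅`, `{a v₁}`, `{vₙ b}`, `{a v₁, vₙ b}` or `{v₁ v₂}` removed
(for `n ≥ 2` every new vertex still has a path edge left).
-/

section Extension

variable {V U : Type*}

def newVertexCovers (P : Set (Sym2 (V ⊕ U))) : Set (Set (Sym2 (V ⊕ U))) :=
  {S | S ⊆ P ∧ ∀ u, ∃ e ∈ S, Sum.inr u ∈ e}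

lemma newVertexCovers_finite {P : Set (Sym2 (V ⊕ U))} (hP : P.Finite) :
    (newVertexCovers P).Finite :=
  hP.finite_subsets.subset fun _ hS => hS.1

lemma eq_of_map_inl_image_union_eq {C C' : Set (Sym2 V)} {S S' : Set (Sym2 (V ⊕ U))}
    (hS : ∀ e ∈ S, ∃ u, Sum.inr u ∈ e) (hS' : ∀ e ∈ S', ∃ u, Sum.inr u ∈ e)
    (h : Sym2.map Sum.inl '' C ∪ S = Sym2.map Sum.inl '' C' ∪ S') : C = C' ∧ S = S' := by
  set R : Set (Sym2 (V ⊕ U)) := {e | ∃ u, Sum.inr u ∈ e}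
  have hR : ∀ D : Set (Sym2 V), Disjoint (Sym2.map Sum.inl '' D) R := by
    intro D
    rw [Set.disjoint_left]
    rintro _ ⟨e, -, rfl⟩ ⟨u, hu⟩
    simp at hu
  have hsplit : ∀ (D : Set (Sym2 V)) (T : Set (Sym2 (V ⊕ U))), T ⊆ R →
      (Sym2.map Sum.inl '' D ∪ T) ∩ R = T ∧
        (Sym2.map Sum.inl '' D ∪ T) \ R = Sym2.map Sum.inl '' D := by
    intro D T hT
    rw [Set.union_inter_distrib_right, (hR D).inter_eq, Set.inter_eq_left.mpr hT,
      Set.union_sdiff_distrib, (hR D).sdiff_eq_left, Set.sdiff_eq_empty.mpr hT]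
    simp
  obtain ⟨hS₁, hC₁⟩ := hsplit C S hS
  obtain ⟨hS₂, hC₂⟩ := hsplit C' S' hS'
  refine ⟨Set.image_injective.mpr (Sym2.map.injective Sum.inl_injective) (?_ :
    Sym2.map (Sum.inl : V → V ⊕ U) '' C = Sym2.map Sum.inl '' C'), ?_⟩
  · rw [← hC₁, ← hC₂, h]
  · rw [← hS₁, ← hS₂, h]

theorem edgeCoverCount_mul_ncard_newVertexCovers_le [Finite V] [Finite U] (G : SimpleGraph V)
    {P : Set (Sym2 (V ⊕ U))} (hP_diag : ∀ e ∈ P, ¬ e.IsDiag)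
    (hP_new : ∀ e ∈ P, ∃ u, Sum.inr u ∈ e) :
    edgeCoverCount G * (newVertexCovers P).ncard ≤
      edgeCoverCount (fromEdgeSet (Sym2.map Sum.inl '' G.edgeSet ∪ P)) := by
  rw [edgeCoverCount, edgeCoverCount, ← Set.ncard_prod]
  refine Set.ncard_le_ncard_of_injOn (fun p => Sym2.map Sum.inl '' p.1 ∪ p.2) ?_ ?_
  · rintro ⟨C, S⟩ ⟨⟨hCG, hCcov⟩, hSP, hScov⟩
    refine ⟨?_, ?_⟩
    · rw [edgeSet_fromEdgeSet]
      rintro _ (⟨e, he, rfl⟩ | he)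
      · exact ⟨Or.inl ⟨e, hCG he, rfl⟩,
          (Sym2.isDiag_map Sum.inl_injective).not.mpr (G.not_isDiag_of_mem_edgeSet (hCG he))⟩
      · exact ⟨Or.inr (hSP he), hP_diag _ (hSP he)⟩
    · rintro (v | u)
      · obtain ⟨e, he, hv⟩ := hCcov v
        exact ⟨_, Or.inl ⟨e, he, rfl⟩, Sym2.mem_map.mpr ⟨v, hv, rfl⟩⟩
      · obtain ⟨e, he, hu⟩ := hScov u
        exact ⟨e, Or.inr he, hu⟩
  · rintro ⟨C, S⟩ ⟨-, hSP, -⟩ ⟨C', S'⟩ ⟨-, hSP', -⟩ h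
    obtain ⟨rfl, rfl⟩ := eq_of_map_inl_image_union_eq (fun e he => hP_new e (hSP he))
      (fun e he => hP_new e (hSP' he)) h
    rfl

end Extension

lemma sdiff_image_injective {α ι : Type*} {P : Set α} {f : ι → α} (hf : f.Injective)
    (hfP : Set.range f ⊆ P) : Function.Injective fun s : Set ι => P \ f '' s := by
  intro s t h
  have hsub : ∀ r : Set ι, f '' r ⊆ P := fun r => (Set.image_subset_range f r).trans hfP
  apply Set.image_injective.mpr hf
  simpa only [Set.sdiff_sdiff_cancel_left (hsub _)] using congrArg (P \ ·) h

section Path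

variable {V : Type*} (a b : V) {n : ℕ} (hn : 2 ≤ n)

def startEdge : Sym2 (V ⊕ Fin n) := s(Sum.inl a, Sum.inr ⟨0, Nat.zero_lt_of_lt hn⟩)

def endEdge : Sym2 (V ⊕ Fin n) := s(Sum.inr ⟨n - 1, Nat.sub_one_lt_of_lt hn⟩, Sum.inl b)

def secondEdge : Sym2 (V ⊕ Fin n) := s(Sum.inr ⟨0, Nat.zero_lt_of_lt hn⟩, Sum.inr ⟨1, hn⟩)

def pathEdges : Set (Sym2 (V ⊕ Fin n)) :=
  {e | ∃ i j : Fin n, (i : ℕ) + 1 = (j : ℕ) ∧ e = s(Sum.inr i, Sum.inr j)} ∪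
    {startEdge a hn, endEdge b hn}

lemma pathEdges_finite : (pathEdges a b hn).Finite := by
  refine Set.Finite.union ((Set.finite_range fun p : Fin n × Fin n =>
    (s(Sum.inr p.1, Sum.inr p.2) : Sym2 (V ⊕ Fin n))).subset ?_) (Set.toFinite _)
  rintro _ ⟨i, j, -, rfl⟩
  exact ⟨(i, j), rfl⟩

lemma pathEdges_not_isDiag : ∀ e ∈ pathEdges a b hn, ¬ e.IsDiag := by
  rintro _ (⟨i, j, hij, rfl⟩ | rfl | rfl)
  · simp only [Sym2.mk_isDiag_iff, Sum.inr.injEq]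
    omega
  all_goals simp [startEdge, endEdge]

lemma pathEdges_exists_inr_mem : ∀ e ∈ pathEdges a b hn, ∃ u, Sum.inr u ∈ e := by
  rintro _ (⟨i, -, -, rfl⟩ | rfl | rfl)
  · exact ⟨i, Sym2.mem_mk_left _ _⟩
  · exact ⟨_, Sym2.mem_mk_right _ _⟩
  · exact ⟨_, Sym2.mem_mk_left _ _⟩

lemma exists_inner_pathEdge_mem (i : Fin n) :
    ∃ e ∈ pathEdges a b hn, Sum.inr i ∈ e ∧ e ≠ startEdge a hn ∧ e ≠ endEdge b hn := by
  by_cases hi : (i : ℕ) + 1 < n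
  · exact ⟨s(Sum.inr i, Sum.inr ⟨i + 1, hi⟩), Or.inl ⟨_, _, rfl, rfl⟩,
      by simp [startEdge, endEdge]⟩
  · exact ⟨s(Sum.inr ⟨i - 1, by omega⟩, Sum.inr i), Or.inl ⟨_, _, by simp; omega, rfl⟩,
      by simp [startEdge, endEdge]⟩

lemma pathEdges_sdiff_mem_newVertexCovers_of_subset {T : Set (Sym2 (V ⊕ Fin n))}
    (hT : T ⊆ {startEdge a hn, endEdge b hn}) :
    pathEdges a b hn \ T ∈ newVertexCovers (pathEdges a b hn) := by
  refine ⟨Set.sdiff_subset, fun i => ?_⟩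
  obtain ⟨e, he, hi, h0, h1⟩ := exists_inner_pathEdge_mem a b hn i
  exact ⟨e, ⟨he, fun heT => by rcases hT heT with h | h <;> contradiction⟩, hi⟩

lemma pathEdges_sdiff_secondEdge_mem_newVertexCovers :
    pathEdges a b hn \ {secondEdge hn} ∈ newVertexCovers (pathEdges a b hn) := by
  refine ⟨Set.sdiff_subset, fun i => ?_⟩
  by_cases h0 : (i : ℕ) = 0
  · refine ⟨startEdge a hn, ⟨Or.inr (Or.inl rfl), by simp [startEdge, secondEdge]⟩, ?_⟩
    simp [startEdge, ← h0]
  by_cases hi : (i : ℕ) + 1 < n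
  · refine ⟨s(Sum.inr i, Sum.inr ⟨i + 1, hi⟩), ⟨Or.inl ⟨_, _, rfl, rfl⟩, ?_⟩, by simp⟩
    simp [secondEdge, Fin.ext_iff, h0]
  · refine ⟨endEdge b hn, ⟨Or.inr (Or.inr rfl), by simp [endEdge, secondEdge]⟩, ?_⟩
    simp [endEdge, Fin.ext_iff]
    omega

lemma five_le_ncard_newVertexCovers_pathEdges : 5 ≤ (newVertexCovers (pathEdges a b hn)).ncard := by
  set f : Fin 3 → Sym2 (V ⊕ Fin n) := ![startEdge a hn, endEdge b hn, secondEdge hn]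
  have hf : f.Injective := by
    intro i j h
    fin_cases i <;> fin_cases j <;> simp_all [f, startEdge, endEdge, secondEdge] <;> omega
  have hfP : Set.range f ⊆ pathEdges a b hn := by
    rintro _ ⟨i, rfl⟩
    fin_cases i
    · exact Or.inr (Or.inl rfl)
    · exact Or.inr (Or.inr rfl)
    · exact Or.inl ⟨_, _, rfl, rfl⟩
  -- `s` indexes the removed edges: any subset of the two end edges, or the first inner edge alone
  have hcard : (Finset.univ.filter fun s : Finset (Fin 3) => 2 ∈ s → s = {2}).card = 5 := by
    decide
  rw [← hcard, ← Set.ncard_coe_finset]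
  refine Set.ncard_le_ncard_of_injOn (fun s : Finset (Fin 3) => pathEdges a b hn \ f '' s) ?_
    ((sdiff_image_injective hf hfP).comp Finset.coe_injective).injOn
    (newVertexCovers_finite (pathEdges_finite a b hn))
  intro s hs
  simp only [Finset.coe_filter, Finset.mem_univ, true_and, Set.mem_ofPred_eq] at hs
  by_cases h2 : 2 ∈ s
  · rw [hs h2]
    simpa [f] using pathEdges_sdiff_secondEdge_mem_newVertexCovers a b hn
  · refine pathEdges_sdiff_mem_newVertexCovers_of_subset a b hn ?_
    rintro _ ⟨i, hi, rfl⟩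
    fin_cases i <;> simp_all [f]

end Path

/-- Adding a path `a, v₁, …, vₙ, b` of `n ≥ 2` new vertices (the elements of `Fin n`,
as the right summand of `V ⊕ Fin n`) joining two existing vertices `a` and `b` of a
connected finite simple graph at least quintuples the number of edge covers. -/
theorem edgeCoverCount_add_path {V : Type*} [Fintype V] (G : SimpleGraph V)
    (a b : V) (n : ℕ) (hn : 2 ≤ n) :
    5 * edgeCoverCount G ≤
      edgeCoverCount (SimpleGraph.fromEdgeSet
        ((Sym2.map (Sum.inl : V → V ⊕ Fin n)) '' G.edgeSet ∪
          {e : Sym2 (V ⊕ Fin n) | ∃ i j : Fin n, (i : ℕ) + 1 = (j : ℕ) ∧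
            e = s(Sum.inr i, Sum.inr j)} ∪
          {s(Sum.inl a, Sum.inr (⟨0, by omega⟩ : Fin n)),
            s(Sum.inr (⟨n - 1, by omega⟩ : Fin n), Sum.inl b)})) := by
  rw [Set.union_assoc]
  calc 5 * edgeCoverCount G ≤ edgeCoverCount G * (newVertexCovers (pathEdges a b hn)).ncard := by
        rw [mul_comm]
        exact Nat.mul_le_mul_left _ (five_le_ncard_newVertexCovers_pathEdges a b hn)
    _ ≤ _ := edgeCoverCount_mul_ncard_newVertexCovers_le G (pathEdges_not_isDiag a b hn)
        (pathEdges_exists_inr_mem a b hn)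
end

section
/- Let G = (V, E) be a connected finite simple graph and let e = {u,v} ∈ E be an edge of G. Then α(G) = 2·α(G − e) + α(G − u) + α(G − v) + α(G − {u,v}), where G − e denotes G with the edge e removed, G − u (resp. G − v) denotes G with the vertex u (resp. v) and all its incident edges removed, and G − {u,v} denotes G with both vertices u and v and all their incident edges removed. -/
open SimpleGraph

lemma aux_induce {V : Type*} (G : SimpleGraph V) (s : Set V) :
    {F : Set (Sym2 V) | F ⊆ G.edgeSet ∧ (∀ f ∈ F, ∀ x ∈ f, x ∈ s) ∧
        ∀ w ∈ s, ∃ f ∈ F, w ∈ f}.ncard = edgeCoverCount (G.induce s) := by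
  classical
  unfold edgeCoverCount
  have hinj : Function.Injective (fun E' : Set (Sym2 s) => Sym2.map (Subtype.val) '' E') :=
    Set.image_injective.mpr (Sym2.map.injective Subtype.val_injective)
  rw [← Set.ncard_image_of_injective _ hinj]
  congr 1
  ext F
  simp only [Set.mem_image, Set.mem_setOf_eq]
  constructor
  · rintro ⟨hF1, hF2, hF3⟩
    refine ⟨{p : Sym2 s | Sym2.map Subtype.val p ∈ F}, ⟨?_, ?_⟩, ?_⟩
    · intro p hp
      induction p using Sym2.ind with
      | _ a b =>
        simp only [Set.mem_setOf_eq, Sym2.map_pair_eq] at hp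
        have := hF1 hp
        rw [mem_edgeSet] at this ⊢
        exact this
    · rintro ⟨w, hw⟩
      obtain ⟨f, hf, hwf⟩ := hF3 w hw
      have hlift : ∃ p : Sym2 s, Sym2.map Subtype.val p = f := by
        induction f using Sym2.ind with
        | _ a b =>
          exact ⟨s(⟨a, hF2 _ hf a (by simp)⟩, ⟨b, hF2 _ hf b (by simp)⟩), by
            simp [Sym2.map_pair_eq]⟩
      obtain ⟨p, hp⟩ := hlift
      refine ⟨p, by simp [Set.mem_setOf_eq, hp, hf], ?_⟩
      rw [← hp, Sym2.mem_map] at hwf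
      obtain ⟨y, hy, hy2⟩ := hwf
      have : y = ⟨w, hw⟩ := Subtype.ext hy2
      rwa [this] at hy
    · ext f
      simp only [Set.mem_image, Set.mem_setOf_eq]
      constructor
      · rintro ⟨p, hp, rfl⟩; exact hp
      · intro hf
        induction f using Sym2.ind with
        | _ a b =>
          exact ⟨s(⟨a, hF2 _ hf a (by simp)⟩, ⟨b, hF2 _ hf b (by simp)⟩), by
            simpa [Sym2.map_pair_eq] using hf, by simp [Sym2.map_pair_eq]⟩
  · rintro ⟨E', ⟨hE1, hE2⟩, rfl⟩
    refine ⟨?_, ?_, ?_⟩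
    · rintro f ⟨p, hp, rfl⟩
      induction p using Sym2.ind with
      | _ a b =>
        have := hE1 hp
        rw [mem_edgeSet] at this
        rw [Sym2.map_pair_eq, mem_edgeSet]
        exact this
    · rintro f ⟨p, hp, rfl⟩ x hx
      rw [Sym2.mem_map] at hx
      obtain ⟨y, _, rfl⟩ := hx
      exact y.2
    · intro w hw
      obtain ⟨p, hp, hwp⟩ := hE2 ⟨w, hw⟩
      exact ⟨Sym2.map Subtype.val p, ⟨p, hp, rfl⟩, Sym2.mem_map.mpr ⟨⟨w, hw⟩, hwp, rfl⟩⟩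


/-- The deletion recurrence for edge covers: for an edge `e = {u, v}` of a connected
finite simple graph `G`,
`α(G) = 2·α(G − e) + α(G − u) + α(G − v) + α(G − {u,v})`. -/
theorem edgeCoverCount_deletion {V : Type*} [Fintype V] (G : SimpleGraph V)
    (hG : G.Connected) (u v : V) (huv : G.Adj u v) :
    edgeCoverCount G =
      2 * edgeCoverCount (G.deleteEdges {s(u, v)}) +
        edgeCoverCount (G.induce {x : V | x ≠ u}) +
        edgeCoverCount (G.induce {x : V | x ≠ v}) +
        edgeCoverCount (G.induce {x : V | x ≠ u ∧ x ≠ v}) := by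
  classical
  have huvne : u ≠ v := huv.ne
  have hvmem : v ∈ s(u, v) := Sym2.mem_mk_right u v
  have humem : u ∈ s(u, v) := Sym2.mem_mk_left u v
  have split : ∀ (t p : Set (Set (Sym2 V))), t.ncard = (t ∩ p).ncard + (t \ p).ncard :=
    fun t p => (Set.ncard_inter_add_ncard_diff_eq_ncard t p (Set.toFinite t)).symm
  set A : Set (Set (Sym2 V)) := {E' | E' ⊆ G.edgeSet ∧ ∀ w : V, ∃ f ∈ E', w ∈ f} with hA
  set D : Set (Set (Sym2 V)) :=
    {E' | E' ⊆ G.edgeSet \ {s(u, v)} ∧ ∀ w : V, ∃ f ∈ E', w ∈ f} with hD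
  set T : Set (Set (Sym2 V)) :=
    {F | F ⊆ G.edgeSet \ {s(u, v)} ∧ ∀ w : V, w ≠ u → w ≠ v → ∃ f ∈ F, w ∈ f} with hT
  set Cu : Set (Set (Sym2 V)) := {F | ∃ f ∈ F, u ∈ f} with hCu
  set Cv : Set (Set (Sym2 V)) := {F | ∃ f ∈ F, v ∈ f} with hCv
  -- D is the edge cover set of the deleted graph
  have hDcount : D.ncard = edgeCoverCount (G.deleteEdges {s(u, v)}) := by
    unfold edgeCoverCount
    rw [edgeSet_deleteEdges]
  -- α(G) = |A ∩ {e ∈ ·}| + |A \ {e ∈ ·}|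
  have h0 : edgeCoverCount G = A.ncard := rfl
  -- A \ {E' | e ∈ E'} = D
  have h1 : A \ {E' | s(u, v) ∈ E'} = D := by
    ext E'
    simp only [hA, hD, Set.mem_diff, Set.mem_setOf_eq]
    constructor
    · rintro ⟨⟨h1, h2⟩, h3⟩
      exact ⟨fun f hf => ⟨h1 hf, fun hfe => h3 (by rwa [Set.mem_singleton_iff.mp hfe] at hf)⟩, h2⟩
    · rintro ⟨h1, h2⟩
      exact ⟨⟨fun f hf => (h1 hf).1, h2⟩, fun he => (h1 he).2 rfl⟩
  -- A ∩ {E' | e ∈ E'} = insert e '' T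
  have h2 : A ∩ {E' | s(u, v) ∈ E'} = (fun F => insert (s(u, v)) F) '' T := by
    ext E'
    simp only [hA, hT, Set.mem_inter_iff, Set.mem_setOf_eq, Set.mem_image]
    constructor
    · rintro ⟨⟨hsub, hcov⟩, he⟩
      refine ⟨E' \ {s(u, v)}, ⟨?_, ?_⟩, ?_⟩
      · exact fun f hf => ⟨hsub hf.1, hf.2⟩
      · intro w hwu hwv
        obtain ⟨f, hf, hwf⟩ := hcov w
        refine ⟨f, ⟨hf, ?_⟩, hwf⟩
        intro hfe
        rw [Set.mem_singleton_iff.mp hfe] at hwf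
        rcases Sym2.mem_iff.mp hwf with h | h
        · exact hwu h
        · exact hwv h
      · rw [Set.insert_diff_singleton, Set.insert_eq_self.mpr he]
    · rintro ⟨F, ⟨hsub, hcov⟩, rfl⟩
      refine ⟨⟨?_, ?_⟩, Set.mem_insert _ _⟩
      · intro f hf
        rcases Set.mem_insert_iff.mp hf with rfl | hf
        · exact (G.mem_edgeSet).mpr huv
        · exact (hsub hf).1
      · intro w
        by_cases hwu : w = u
        · exact ⟨s(u, v), Set.mem_insert _ _, hwu ▸ humem⟩
        by_cases hwv : w = v
        · exact ⟨s(u, v), Set.mem_insert _ _, hwv ▸ hvmem⟩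
        obtain ⟨f, hf, hwf⟩ := hcov w hwu hwv
        exact ⟨f, Set.mem_insert_of_mem _ hf, hwf⟩
  have hinjT : Set.InjOn (fun F => insert (s(u, v)) F) T := by
    intro F1 hF1 F2 hF2 h
    have h : insert (s(u, v)) F1 = insert (s(u, v)) F2 := h
    have he1 : s(u, v) ∉ F1 := fun he => (hF1.1 he).2 rfl
    have he2 : s(u, v) ∉ F2 := fun he => (hF2.1 he).2 rfl
    ext f
    constructor
    · intro hf
      rcases Set.mem_insert_iff.mp (h ▸ Set.mem_insert_of_mem (s(u, v)) hf : f ∈ insert (s(u,v)) F2) with rfl | hf2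
      · exact absurd hf he1
      · exact hf2
    · intro hf
      rcases Set.mem_insert_iff.mp (h.symm ▸ Set.mem_insert_of_mem (s(u, v)) hf : f ∈ insert (s(u,v)) F1) with rfl | hf1
      · exact absurd hf he2
      · exact hf1
  -- identify the four pieces of T
  have h11 : (T ∩ Cu) ∩ Cv = D := by
    ext F
    simp only [hT, hCu, hCv, hD, Set.mem_inter_iff, Set.mem_setOf_eq]
    constructor
    · rintro ⟨⟨⟨hsub, hcov⟩, hu⟩, hv⟩
      refine ⟨hsub, fun w => ?_⟩
      by_cases hwu : w = u
      · exact hwu ▸ hu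
      by_cases hwv : w = v
      · exact hwv ▸ hv
      exact hcov w hwu hwv
    · rintro ⟨hsub, hcov⟩
      exact ⟨⟨⟨hsub, fun w _ _ => hcov w⟩, hcov u⟩, hcov v⟩
  have h10 : (T ∩ Cu) \ Cv =
      {F : Set (Sym2 V) | F ⊆ G.edgeSet ∧ (∀ f ∈ F, ∀ x ∈ f, x ∈ {x : V | x ≠ v}) ∧
        ∀ w ∈ {x : V | x ≠ v}, ∃ f ∈ F, w ∈ f} := by
    ext F
    simp only [hT, hCu, hCv, Set.mem_diff, Set.mem_inter_iff, Set.mem_setOf_eq]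
    constructor
    · rintro ⟨⟨⟨hsub, hcov⟩, hu⟩, hnv⟩
      refine ⟨fun f hf => (hsub hf).1, ?_, ?_⟩
      · rintro f hf x hx rfl
        exact hnv ⟨f, hf, hx⟩
      · intro w hw
        by_cases hwu : w = u
        · exact hwu ▸ hu
        · exact hcov w hwu hw
    · rintro ⟨hsub, hav, hcov⟩
      refine ⟨⟨⟨?_, fun w hwu hwv => hcov w hwv⟩, hcov u huvne⟩, ?_⟩
      · intro f hf
        refine ⟨hsub hf, fun hfe => ?_⟩
        exact hav f hf v (Set.mem_singleton_iff.mp hfe ▸ hvmem) rfl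
      · rintro ⟨f, hf, hvf⟩
        exact hav f hf v hvf rfl
  have h01 : (T \ Cu) ∩ Cv =
      {F : Set (Sym2 V) | F ⊆ G.edgeSet ∧ (∀ f ∈ F, ∀ x ∈ f, x ∈ {x : V | x ≠ u}) ∧
        ∀ w ∈ {x : V | x ≠ u}, ∃ f ∈ F, w ∈ f} := by
    ext F
    simp only [hT, hCu, hCv, Set.mem_diff, Set.mem_inter_iff, Set.mem_setOf_eq]
    constructor
    · rintro ⟨⟨⟨hsub, hcov⟩, hnu⟩, hv⟩
      refine ⟨fun f hf => (hsub hf).1, ?_, ?_⟩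
      · rintro f hf x hx rfl
        exact hnu ⟨f, hf, hx⟩
      · intro w hw
        by_cases hwv : w = v
        · exact hwv ▸ hv
        · exact hcov w hw hwv
    · rintro ⟨hsub, hau, hcov⟩
      refine ⟨⟨⟨?_, fun w hwu hwv => hcov w hwu⟩, ?_⟩, hcov v (Ne.symm huvne)⟩
      · intro f hf
        refine ⟨hsub hf, fun hfe => ?_⟩
        exact hau f hf u (Set.mem_singleton_iff.mp hfe ▸ humem) rfl
      · rintro ⟨f, hf, huf⟩
        exact hau f hf u huf rfl
  have h00 : (T \ Cu) \ Cv =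
      {F : Set (Sym2 V) | F ⊆ G.edgeSet ∧ (∀ f ∈ F, ∀ x ∈ f, x ∈ {x : V | x ≠ u ∧ x ≠ v}) ∧
        ∀ w ∈ {x : V | x ≠ u ∧ x ≠ v}, ∃ f ∈ F, w ∈ f} := by
    ext F
    simp only [hT, hCu, hCv, Set.mem_diff, Set.mem_setOf_eq]
    constructor
    · rintro ⟨⟨⟨hsub, hcov⟩, hnu⟩, hnv⟩
      refine ⟨fun f hf => (hsub hf).1, ?_, fun w hw => hcov w hw.1 hw.2⟩
      intro f hf x hx
      exact ⟨fun h => hnu ⟨f, hf, h ▸ hx⟩, fun h => hnv ⟨f, hf, h ▸ hx⟩⟩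
    · rintro ⟨hsub, ha, hcov⟩
      refine ⟨⟨⟨?_, fun w hwu hwv => hcov w ⟨hwu, hwv⟩⟩, ?_⟩, ?_⟩
      · intro f hf
        refine ⟨hsub hf, fun hfe => ?_⟩
        exact (ha f hf u (Set.mem_singleton_iff.mp hfe ▸ humem)).1 rfl
      · rintro ⟨f, hf, huf⟩
        exact (ha f hf u huf).1 rfl
      · rintro ⟨f, hf, hvf⟩
        exact (ha f hf v hvf).2 rfl
  -- put everything together
  have hTcount : T.ncard =
      edgeCoverCount (G.deleteEdges {s(u, v)}) +
        edgeCoverCount (G.induce {x : V | x ≠ v}) +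
        edgeCoverCount (G.induce {x : V | x ≠ u}) +
        edgeCoverCount (G.induce {x : V | x ≠ u ∧ x ≠ v}) := by
    rw [split T Cu, split (T ∩ Cu) Cv, split (T \ Cu) Cv, h11, h10, h01, h00,
      hDcount, aux_induce, aux_induce, aux_induce]
    ring
  have : edgeCoverCount G = (A ∩ {E' | s(u, v) ∈ E'}).ncard + D.ncard := by
    rw [h0, split A {E' | s(u, v) ∈ E'}, h1]
  rw [this, h2, Set.ncard_image_of_injOn hinjT, hTcount, hDcount]
  ring
end

section
/- Let G_1, …, G_n be connected finite simple graphs, each containing a common vertex v, such that any two distinct G_i and G_j share no vertex other than v (and no edges), and let G = G_1 ∪ ⋯ ∪ G_n be their union. Then: (1) β(G,v) = ∏_{i=1}^n β(G_i,v), and (2) α(G) = ∏_{i=1}^n s(G_i,v) − ∏_{i=1}^n β(G_i,v). -/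
open SimpleGraph

/-- A "graph inside the ambient vertex type `V`" is a subgraph of the complete graph `⊤`:
it carries its own vertex set `H.verts` and edge set `H.edgeSet`.
`alphaCount H` is its number of edge covers: subsets `E'` of its edge set such that
every vertex of `H` is incident to at least one edge of `E'`. -/
noncomputable def alphaCount {V : Type*} (H : (⊤ : SimpleGraph V).Subgraph) : ℕ :=
  {E' : Set (Sym2 V) | E' ⊆ H.edgeSet ∧ ∀ v ∈ H.verts, ∃ e ∈ E', v ∈ e}.ncard

/-- `β(H, v) = α(H − v)`, the number of edge covers of `H` with the vertex `v`
(and all incident edges) removed. -/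
noncomputable def betaCount {V : Type*} (H : (⊤ : SimpleGraph V).Subgraph) (v : V) : ℕ :=
  alphaCount (H.deleteVerts {v})

/-- `s(H, v) = α(H) + β(H, v)`. -/
noncomputable def sCount {V : Type*} (H : (⊤ : SimpleGraph V).Subgraph) (v : V) : ℕ :=
  alphaCount H + betaCount H v

section helpers
variable {V : Type*}

lemma mem_verts_of_mem_edge' {H : (⊤ : SimpleGraph V).Subgraph} {e : Sym2 V}
    (he : e ∈ H.edgeSet) {w : V} (hw : w ∈ e) : w ∈ H.verts := by
  induction e with
  | _ a b =>
    rw [Subgraph.mem_edgeSet] at he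
    rw [Sym2.mem_iff] at hw
    rcases hw with rfl | rfl
    · exact H.edge_vert he
    · exact H.edge_vert he.symm

lemma mem_edgeSet_deleteVerts' {H : (⊤ : SimpleGraph V).Subgraph} {v : V} {e : Sym2 V} :
    e ∈ (H.deleteVerts {v}).edgeSet ↔ e ∈ H.edgeSet ∧ v ∉ e := by
  induction e with
  | _ a b =>
    simp only [Subgraph.mem_edgeSet, Subgraph.deleteVerts_adj, Set.mem_singleton_iff,
      Sym2.mem_iff]
    constructor
    · rintro ⟨ha, hav, hb, hbv, hadj⟩
      refine ⟨hadj, ?_⟩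
      rintro (rfl | rfl) <;> simp_all
    · rintro ⟨hadj, hne⟩
      push_neg at hne
      exact ⟨H.edge_vert hadj, fun h => hne.1 h.symm, H.edge_vert hadj.symm,
        fun h => hne.2 h.symm, hadj⟩

lemma inter_iUnion_eq_self' {n : ℕ} {E : Fin n → Set (Sym2 V)}
    (hdisj : ∀ i j, i ≠ j → E i ∩ E j = ∅)
    {F : Fin n → Set (Sym2 V)} (hF : ∀ j, F j ⊆ E j) (i : Fin n) :
    (⋃ j, F j) ∩ E i = F i := by
  ext e
  simp only [Set.mem_inter_iff, Set.mem_iUnion]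
  constructor
  · rintro ⟨⟨j, hj⟩, hi⟩
    rcases eq_or_ne j i with rfl | hne
    · exact hj
    · exact absurd (Set.mem_inter (hF j hj) hi) (by rw [hdisj j i hne]; exact id)
  · exact fun h => ⟨⟨i, h⟩, hF i h⟩

noncomputable def piEquiv' {n : ℕ} (E : Fin n → Set (Sym2 V))
    (hdisj : ∀ i j, i ≠ j → E i ∩ E j = ∅)
    (Q : Fin n → Set (Sym2 V) → Prop) :
    {E' : Set (Sym2 V) // E' ⊆ ⋃ i, E i ∧ ∀ i, Q i (E' ∩ E i)} ≃
      ∀ i, {X : Set (Sym2 V) // X ⊆ E i ∧ Q i X} where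
  toFun E' i := ⟨E'.1 ∩ E i, Set.inter_subset_right, E'.2.2 i⟩
  invFun f := ⟨⋃ i, (f i).1, by
    refine ⟨Set.iUnion_mono fun i => (f i).2.1, fun i => ?_⟩
    rw [inter_iUnion_eq_self' hdisj (fun j => (f j).2.1) i]
    exact (f i).2.2⟩
  left_inv E' := by
    apply Subtype.ext
    simp only
    rw [← Set.inter_iUnion, Set.inter_eq_left]
    exact E'.2.1
  right_inv f := by
    funext i
    apply Subtype.ext
    simp only
    exact inter_iUnion_eq_self' hdisj (fun j => (f j).2.1) i

lemma ncard_pi' {n : ℕ} (E : Fin n → Set (Sym2 V))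
    (hdisj : ∀ i j, i ≠ j → E i ∩ E j = ∅)
    (Q : Fin n → Set (Sym2 V) → Prop) :
    {E' : Set (Sym2 V) | E' ⊆ ⋃ i, E i ∧ ∀ i, Q i (E' ∩ E i)}.ncard
      = ∏ i, {X : Set (Sym2 V) | X ⊆ E i ∧ Q i X}.ncard := by
  have h := Nat.card_congr (piEquiv' E hdisj Q)
  rw [Nat.card_pi] at h
  rw [← Nat.card_coe_set_eq]
  rw [show Nat.card {E' : Set (Sym2 V) | E' ⊆ ⋃ i, E i ∧ ∀ i, Q i (E' ∩ E i)}
      = Nat.card {E' : Set (Sym2 V) // E' ⊆ ⋃ i, E i ∧ ∀ i, Q i (E' ∩ E i)} from rfl, h]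
  exact Finset.prod_congr rfl fun i _ => Nat.card_coe_set_eq _

lemma ncard_piece' [Fintype V] (H : (⊤ : SimpleGraph V).Subgraph) (v : V)
    (hv : v ∈ H.verts) :
    {X : Set (Sym2 V) | X ⊆ H.edgeSet ∧ ∀ w ∈ H.verts \ {v}, ∃ e ∈ X, w ∈ e}.ncard
      = sCount H v := by
  classical
  set A : Set (Set (Sym2 V)) :=
    {E' | E' ⊆ H.edgeSet ∧ ∀ w ∈ H.verts, ∃ e ∈ E', w ∈ e} with hA
  set B : Set (Set (Sym2 V)) :=
    {E' | E' ⊆ (H.deleteVerts {v}).edgeSet ∧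
      ∀ w ∈ (H.deleteVerts {v}).verts, ∃ e ∈ E', w ∈ e} with hB
  have hBnov : ∀ X ∈ B, ∀ e ∈ X, v ∉ e := fun X hX e he =>
    (mem_edgeSet_deleteVerts'.mp (hX.1 he)).2
  have hunion : {X : Set (Sym2 V) | X ⊆ H.edgeSet ∧ ∀ w ∈ H.verts \ {v}, ∃ e ∈ X, w ∈ e}
      = A ∪ B := by
    ext X
    simp only [Set.mem_setOf_eq, Set.mem_union, hA, hB, Subgraph.deleteVerts_verts]
    constructor
    · rintro ⟨hsub, hcov⟩
      by_cases hvc : ∃ e ∈ X, v ∈ e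
      · left
        refine ⟨hsub, fun w hw => ?_⟩
        rcases eq_or_ne w v with rfl | hne
        · exact hvc
        · exact hcov w ⟨hw, hne⟩
      · right
        refine ⟨fun e he => mem_edgeSet_deleteVerts'.mpr ⟨hsub he, fun hve => hvc ⟨e, he, hve⟩⟩,
          hcov⟩
    · rintro (⟨hsub, hcov⟩ | ⟨hsub, hcov⟩)
      · exact ⟨hsub, fun w hw => hcov w hw.1⟩
      · exact ⟨fun e he => (mem_edgeSet_deleteVerts'.mp (hsub he)).1, hcov⟩
  have hdisj : Disjoint A B := by
    rw [Set.disjoint_left]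
    rintro X ⟨hsub, hcov⟩ hXB
    obtain ⟨e, he, hve⟩ := hcov v hv
    exact hBnov X hXB e he hve
  rw [hunion, Set.ncard_union_eq hdisj (Set.toFinite A) (Set.toFinite B)]
  rfl

end helpers

/-- If `G₁, …, Gₙ` are connected graphs sharing the common vertex `v` and pairwise
sharing no other vertex (and no edges), then for their union `G`:
(1) `β(G, v) = ∏ β(Gᵢ, v)`, and (2) `α(G) = ∏ s(Gᵢ, v) − ∏ β(Gᵢ, v)`. -/
theorem glueing_at_common_vertex {V : Type*} [Fintype V] (n : ℕ) (hn : 1 ≤ n)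
    (H : Fin n → (⊤ : SimpleGraph V).Subgraph) (v : V)
    (hv : ∀ i, v ∈ (H i).verts)
    (hconn : ∀ i, (H i).Connected)
    (hvmeet : ∀ i j, i ≠ j → (H i).verts ∩ (H j).verts = {v})
    (hemeet : ∀ i j, i ≠ j → (H i).edgeSet ∩ (H j).edgeSet = ∅) :
    betaCount (⨆ i, H i) v = ∏ i, betaCount (H i) v ∧
      alphaCount (⨆ i, H i) = ∏ i, sCount (H i) v - ∏ i, betaCount (H i) v := by
  classical
  set G := ⨆ i, H i with hGdef
  have hGv : G.verts = ⋃ i, (H i).verts := Subgraph.verts_iSup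
  have hGe : G.edgeSet = ⋃ i, (H i).edgeSet := Subgraph.edgeSet_iSup H
  have hvG : v ∈ G.verts := by
    rw [hGv]; exact Set.mem_iUnion.mpr ⟨⟨0, hn⟩, hv _⟩
  -- localization of covering edges
  have hloc : ∀ (E' : Set (Sym2 V)), E' ⊆ ⋃ i, (H i).edgeSet →
      ∀ i, ∀ w ∈ (H i).verts, w ≠ v → (∃ e ∈ E', w ∈ e) →
        ∃ e ∈ E' ∩ (H i).edgeSet, w ∈ e := by
    rintro E' hsub i w hwi hwv ⟨e, heE, hwe⟩
    obtain ⟨j, hej⟩ := Set.mem_iUnion.mp (hsub heE)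
    have hwj : w ∈ (H j).verts := mem_verts_of_mem_edge' hej hwe
    rcases eq_or_ne j i with rfl | hne
    · exact ⟨e, ⟨heE, hej⟩, hwe⟩
    · have hmem : w ∈ ({v} : Set V) := hvmeet i j (Ne.symm hne) ▸
        (⟨hwi, hwj⟩ : w ∈ (H i).verts ∩ (H j).verts)
      exact absurd hmem hwv
  -- Part 1: β(G,v) = ∏ β(Hᵢ,v)
  have hbeta : betaCount G v = ∏ i, betaCount (H i) v := by
    have hset : {E' : Set (Sym2 V) | E' ⊆ (G.deleteVerts {v}).edgeSet ∧
        ∀ w ∈ (G.deleteVerts {v}).verts, ∃ e ∈ E', w ∈ e}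
        = {E' : Set (Sym2 V) | E' ⊆ ⋃ i, (H i).edgeSet ∧ ∀ i,
            (fun X : Set (Sym2 V) => X ⊆ ((H i).deleteVerts {v}).edgeSet ∧
              ∀ w ∈ ((H i).deleteVerts {v}).verts, ∃ e ∈ X, w ∈ e)
              (E' ∩ (H i).edgeSet)} := by
      ext E'
      simp only [Set.mem_setOf_eq, Subgraph.deleteVerts_verts]
      constructor
      · rintro ⟨hsub, hcov⟩
        have hsub' : E' ⊆ ⋃ i, (H i).edgeSet := fun e he =>
          hGe ▸ (mem_edgeSet_deleteVerts'.mp (hsub he)).1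
        refine ⟨hsub', fun i => ⟨?_, ?_⟩⟩
        · rintro e ⟨heE, hei⟩
          exact mem_edgeSet_deleteVerts'.mpr ⟨hei, (mem_edgeSet_deleteVerts'.mp (hsub heE)).2⟩
        · rintro w ⟨hwi, hwv⟩
          have hwG : w ∈ G.verts \ {v} := ⟨hGv ▸ Set.mem_iUnion.mpr ⟨i, hwi⟩, hwv⟩
          exact hloc E' hsub' i w hwi hwv (hcov w hwG)
      · rintro ⟨hsub, hQ⟩
        constructor
        · intro e he
          obtain ⟨i, hei⟩ := Set.mem_iUnion.mp (hsub he)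
          have h2 := mem_edgeSet_deleteVerts'.mp ((hQ i).1 ⟨he, hei⟩)
          exact mem_edgeSet_deleteVerts'.mpr ⟨hGe ▸ (Set.mem_iUnion.mpr ⟨i, hei⟩ :
            e ∈ ⋃ i, (H i).edgeSet), h2.2⟩
        · rintro w ⟨hwG, hwv⟩
          rw [hGv] at hwG
          obtain ⟨i, hwi⟩ := Set.mem_iUnion.mp hwG
          obtain ⟨e, ⟨heE, _⟩, hwe⟩ := (hQ i).2 w ⟨hwi, hwv⟩
          exact ⟨e, heE, hwe⟩
    show {E' : Set (Sym2 V) | E' ⊆ (G.deleteVerts {v}).edgeSet ∧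
        ∀ w ∈ (G.deleteVerts {v}).verts, ∃ e ∈ E', w ∈ e}.ncard = _
    rw [hset, ncard_pi' (fun i => (H i).edgeSet) hemeet
      (fun i X => X ⊆ ((H i).deleteVerts {v}).edgeSet ∧
        ∀ w ∈ ((H i).deleteVerts {v}).verts, ∃ e ∈ X, w ∈ e)]
    refine Finset.prod_congr rfl fun i _ => ?_
    have : {X : Set (Sym2 V) | X ⊆ (H i).edgeSet ∧
        (X ⊆ ((H i).deleteVerts {v}).edgeSet ∧
          ∀ w ∈ ((H i).deleteVerts {v}).verts, ∃ e ∈ X, w ∈ e)}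
        = {X : Set (Sym2 V) | X ⊆ ((H i).deleteVerts {v}).edgeSet ∧
          ∀ w ∈ ((H i).deleteVerts {v}).verts, ∃ e ∈ X, w ∈ e} := by
      ext X
      simp only [Set.mem_setOf_eq]
      constructor
      · rintro ⟨_, h⟩; exact h
      · rintro ⟨h1, h2⟩
        exact ⟨fun e he => (mem_edgeSet_deleteVerts'.mp (h1 he)).1, h1, h2⟩
    rw [this]
    rfl
  -- Part 2 preliminary: α(G) + β(G,v) = ∏ s(Hᵢ,v)
  have hs : ∏ i, sCount (H i) v = alphaCount G + betaCount G v := by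
    rw [show alphaCount G + betaCount G v = sCount G v from rfl, ← ncard_piece' G v hvG]
    have hset : {X : Set (Sym2 V) | X ⊆ G.edgeSet ∧ ∀ w ∈ G.verts \ {v}, ∃ e ∈ X, w ∈ e}
        = {E' : Set (Sym2 V) | E' ⊆ ⋃ i, (H i).edgeSet ∧ ∀ i,
            (fun X : Set (Sym2 V) =>
              ∀ w ∈ (H i).verts \ {v}, ∃ e ∈ X, w ∈ e) (E' ∩ (H i).edgeSet)} := by
      ext E'
      simp only [Set.mem_setOf_eq]
      constructor
      · rintro ⟨hsub, hcov⟩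
        have hsub' : E' ⊆ ⋃ i, (H i).edgeSet := hGe ▸ hsub
        refine ⟨hsub', fun i w hw => ?_⟩
        have hwG : w ∈ G.verts \ {v} := ⟨hGv ▸ Set.mem_iUnion.mpr ⟨i, hw.1⟩, hw.2⟩
        exact hloc E' hsub' i w hw.1 hw.2 (hcov w hwG)
      · rintro ⟨hsub, hQ⟩
        refine ⟨hGe ▸ hsub, ?_⟩
        rintro w ⟨hwG, hwv⟩
        rw [hGv] at hwG
        obtain ⟨i, hwi⟩ := Set.mem_iUnion.mp hwG
        obtain ⟨e, ⟨heE, _⟩, hwe⟩ := hQ i w ⟨hwi, hwv⟩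
        exact ⟨e, heE, hwe⟩
    rw [hset, ncard_pi' (fun i => (H i).edgeSet) hemeet
      (fun i X => ∀ w ∈ (H i).verts \ {v}, ∃ e ∈ X, w ∈ e)]
    exact Finset.prod_congr rfl fun i _ => (ncard_piece' (H i) v (hv i)).symm
  refine ⟨hbeta, ?_⟩
  rw [hs, ← hbeta]
  omega
end

section
/- Let G_0 be a connected finite simple graph with vertex set V_0 = {v, v_1, …, v_n} and selected vertex v, and for i = 1, …, n let G_i be a finite simple graph with selected vertex v_i, such that distinct graphs G_i and G_j (i, j ≥ 1) share no vertices or edges, and G_i ∩ G_0 = {v_i} for each i ≥ 1. Let G = G_0 ∪ G_1 ∪ ⋯ ∪ G_n. Define f(G_i, v_i, X) := s(G_i, v_i) if v_i ∈ X and f(G_i, v_i, X) := α(G_i) if v_i ∉ X. Then: (1) α(G) = Σ_{V' ⊆ V_0, v ∈ V'} α(G_0(V')) · ∏_{i=1}^n f(G_i, v_i, V'), and (2) β(G, v) = Σ_{V' ⊆ V_0, v ∉ V'} α(G_0(V')) · ∏_{i=1}^n f(G_i, v_i, V'), where G_0(V') denotes the induced subgraph of G_0 on the vertex subset V' (the graph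 with vertex set V' and all edges of G_0 whose both endpoints lie in V'). -/
open SimpleGraph

open Function

/-!
An edge set `F` of `G = G₀ ∪ H₁ ∪ ⋯ ∪ Hₙ` is the disjoint union of its parts in `G₀` and in the
`Hᵢ`, and these parts can be chosen independently. Group the sets `F` by the set `V'` of vertices
covered by their part in `G₀`; that part is then exactly an edge cover of `G₀(V')`. Since no `Hᵢ`
contains `v`, the vertex `v` is covered by `F` iff `v ∈ V'`, and every other vertex is covered iff
each part in `Hᵢ` covers `V(Hᵢ) \ V'`, which is `V(Hᵢ) \ {wᵢ}` or `V(Hᵢ)` according as `wᵢ ∈ V'`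
or not. The edge sets of `Hᵢ` covering all vertices but possibly `wᵢ` are counted by
`α(Hᵢ) + β(Hᵢ, wᵢ) = s(Hᵢ, wᵢ)`, according as `wᵢ` is covered or not.
-/

theorem Set.ncard_eq_sum_ncard_fiberwise {α β : Type*} [DecidableEq β] {s : Set α}
    (hs : s.Finite) {t : Finset β} {f : α → β} (hf : Set.MapsTo f s t) :
    s.ncard = ∑ b ∈ t, {a ∈ s | f a = b}.ncard := by
  rw [Set.ncard_eq_toFinset_card s hs,
    Finset.card_eq_sum_card_fiberwise fun a ha => hf (hs.mem_toFinset.mp ha)]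
  refine Finset.sum_congr rfl fun b _ => ?_
  rw [← Set.ncard_coe_finset, Finset.coe_filter]
  simp_rw [hs.mem_toFinset]

theorem Set.iUnion_inter_eq_of_pairwise_disjoint {α ι : Type*} {E F : ι → Set α}
    (hE : Pairwise (Disjoint on E)) (hF : ∀ i, F i ⊆ E i) (i : ι) :
    (⋃ j, F j) ∩ E i = F i := by
  refine Set.Subset.antisymm ?_ fun a ha => ⟨Set.mem_iUnion_of_mem i ha, hF i ha⟩
  rintro a ⟨ha, hai⟩
  obtain ⟨j, haj⟩ := Set.mem_iUnion.mp ha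
  obtain rfl | hji := eq_or_ne j i
  · exact haj
  · exact absurd hai (Set.disjoint_left.mp (hE hji) (hF j haj))

theorem Set.ncard_setOf_subset_iUnion_eq_prod {α ι : Type*} [Fintype ι] {E : ι → Set α}
    (hE : Pairwise (Disjoint on E)) (P : ι → Set α → Prop) :
    {F | F ⊆ ⋃ i, E i ∧ ∀ i, P i (F ∩ E i)}.ncard = ∏ i, {F | F ⊆ E i ∧ P i F}.ncard := by
  simp_rw [← Nat.card_coe_set_eq]
  rw [← Nat.card_pi]
  refine Nat.card_congr
    { toFun := fun F i => ⟨F.1 ∩ E i, Set.inter_subset_right, F.2.2 i⟩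
      invFun := fun F => ⟨⋃ i, (F i).1, Set.iUnion_mono fun i => (F i).2.1, fun i => by
        rw [Set.iUnion_inter_eq_of_pairwise_disjoint hE fun j => (F j).2.1]
        exact (F i).2.2⟩
      left_inv := fun F => Subtype.ext <| by
        simp only [← Set.inter_iUnion, Set.inter_eq_left.mpr F.2.1]
      right_inv := fun F => funext fun i => Subtype.ext <|
        Set.iUnion_inter_eq_of_pairwise_disjoint hE (fun j => (F j).2.1) i }

theorem Set.ncard_setOf_subset_union_iUnion_eq_mul_prod {α ι : Type*} [Fintype ι] {E₀ : Set α}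
    {E : ι → Set α} (h₀ : ∀ i, Disjoint E₀ (E i)) (hE : Pairwise (Disjoint on E))
    (P₀ : Set α → Prop) (P : ι → Set α → Prop) :
    {F | F ⊆ E₀ ∪ ⋃ i, E i ∧ P₀ (F ∩ E₀) ∧ ∀ i, P i (F ∩ E i)}.ncard =
      {F | F ⊆ E₀ ∧ P₀ F}.ncard * ∏ i, {F | F ⊆ E i ∧ P i F}.ncard := by
  have hE' : Pairwise (Disjoint on fun j : Option ι => j.elim E₀ E) := by
    rintro (_ | i) (_ | j) hij
    · exact absurd rfl hij
    · exact h₀ j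
    · exact (h₀ i).symm
    · exact hE fun h => hij (congrArg some h)
  simpa only [Set.iUnion_option, Option.forall, Fintype.prod_option, Option.elim] using
    Set.ncard_setOf_subset_iUnion_eq_prod hE' fun j => j.elim P₀ P

section

variable {V : Type*}

def coveredVerts (F : Set (Sym2 V)) : Set V := {u | ∃ e ∈ F, u ∈ e}

@[simp]
lemma mem_coveredVerts {F : Set (Sym2 V)} {u : V} : u ∈ coveredVerts F ↔ ∃ e ∈ F, u ∈ e :=
  Iff.rfl

lemma coveredVerts_iUnion {ι : Type*} (F : ι → Set (Sym2 V)) :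
    coveredVerts (⋃ i, F i) = ⋃ i, coveredVerts (F i) := by
  ext u
  simp only [mem_coveredVerts, Set.mem_iUnion]
  exact ⟨fun ⟨e, ⟨i, he⟩, hu⟩ => ⟨i, e, he, hu⟩, fun ⟨i, e, he, hu⟩ => ⟨e, ⟨i, he⟩, hu⟩⟩

lemma coveredVerts_union (F F' : Set (Sym2 V)) :
    coveredVerts (F ∪ F') = coveredVerts F ∪ coveredVerts F' := by
  ext u
  simp only [mem_coveredVerts, Set.mem_union, or_and_right, exists_or]

lemma coveredVerts_eq_of_subset_union_iUnion {ι : Type*} {F E₀ : Set (Sym2 V)}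
    {E : ι → Set (Sym2 V)} (hF : F ⊆ E₀ ∪ ⋃ i, E i) :
    coveredVerts F = coveredVerts (F ∩ E₀) ∪ ⋃ i, coveredVerts (F ∩ E i) := by
  rw [← coveredVerts_iUnion, ← coveredVerts_union, ← Set.inter_iUnion,
    ← Set.inter_union_distrib_left, Set.inter_eq_left.mpr hF]

namespace SimpleGraph.Subgraph

variable {G : SimpleGraph V}

lemma coveredVerts_subset_verts (K : G.Subgraph) {F : Set (Sym2 V)} (hF : F ⊆ K.edgeSet) :
    coveredVerts F ⊆ K.verts :=
  fun _ ⟨_, he, hu⟩ => K.mem_verts_of_mem_edge (hF he) hu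

lemma mem_edgeSet_induce (K : G.Subgraph) (s : Set V) (e : Sym2 V) :
    e ∈ (K.induce s).edgeSet ↔ e ∈ K.edgeSet ∧ ∀ u ∈ e, u ∈ s := by
  induction e with
  | _ a b => simp [and_comm, and_assoc]

lemma disjoint_edgeSet_of_subsingleton_inter_verts {K K' : G.Subgraph}
    (h : (K.verts ∩ K'.verts).Subsingleton) : Disjoint K.edgeSet K'.edgeSet := by
  refine Set.disjoint_left.mpr fun e he he' => ?_
  induction e with
  | _ a b =>
    have hab : a = b := h ⟨K.edge_vert he, K'.edge_vert he'⟩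
      ⟨K.edge_vert (K.adj_symm he), K'.edge_vert (K'.adj_symm he')⟩
    exact K.adj_sub he |>.ne hab

end SimpleGraph.Subgraph

lemma alphaCount_induce (K : (⊤ : SimpleGraph V).Subgraph) (s : Set V) :
    alphaCount (K.induce s) = {F | F ⊆ K.edgeSet ∧ coveredVerts F = s}.ncard := by
  unfold alphaCount
  congr 1
  ext F
  simp only [Set.mem_ofPred_eq, Subgraph.induce_verts, Set.subset_def, K.mem_edgeSet_induce]
  constructor
  · rintro ⟨hF, hs⟩
    exact ⟨fun e he => (hF e he).1,
      Set.Subset.antisymm (fun u ⟨e, he, hu⟩ => (hF e he).2 u hu) hs⟩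
  · rintro ⟨hF, rfl⟩
    exact ⟨fun e he => ⟨hF e he, fun u hu => ⟨e, he, hu⟩⟩, fun u hu => hu⟩

lemma alphaCount_eq_ncard_of_mem (K : (⊤ : SimpleGraph V).Subgraph) {x : V} (hx : x ∈ K.verts) :
    alphaCount K =
      {F | F ⊆ K.edgeSet ∧ x ∈ coveredVerts F ∧ K.verts \ {x} ⊆ coveredVerts F}.ncard := by
  simp_rw [← Set.insert_subset_iff, Set.insert_sdiff_self_of_mem hx]
  rfl

lemma betaCount_eq_ncard (K : (⊤ : SimpleGraph V).Subgraph) (x : V) :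
    betaCount K x =
      {F | F ⊆ K.edgeSet ∧ x ∉ coveredVerts F ∧ K.verts \ {x} ⊆ coveredVerts F}.ncard := by
  rw [betaCount, Subgraph.deleteVerts, alphaCount_induce]
  congr 1
  ext F
  refine and_congr_right fun hF => ⟨fun h => by simp [h], fun ⟨hx, h⟩ => ?_⟩
  exact (Set.subset_sdiff_singleton (K.coveredVerts_subset_verts hF) hx).antisymm h

lemma sCount_eq_ncard [Finite V] (K : (⊤ : SimpleGraph V).Subgraph) {x : V} (hx : x ∈ K.verts) :
    sCount K x = {F | F ⊆ K.edgeSet ∧ K.verts \ {x} ⊆ coveredVerts F}.ncard := by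
  rw [sCount, alphaCount_eq_ncard_of_mem K hx, betaCount_eq_ncard, ← Set.ncard_union_eq]
  · congr 1
    ext F
    simp only [Set.mem_union, Set.mem_ofPred_eq]
    tauto
  · exact Set.disjoint_left.mpr fun F hF hF' => hF'.2.1 hF.2.1

lemma ncard_sdiff_subset_coveredVerts [Finite V] [DecidableEq V]
    (K : (⊤ : SimpleGraph V).Subgraph) {x : V} (hx : x ∈ K.verts) {s : Finset V}
    (hs : K.verts ∩ s ⊆ {x}) :
    {F | F ⊆ K.edgeSet ∧ K.verts \ s ⊆ coveredVerts F}.ncard =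
      if x ∈ s then sCount K x else alphaCount K := by
  split_ifs with hxs
  · have : K.verts \ s = K.verts \ {x} := by
      ext u
      exact ⟨fun ⟨hu, hus⟩ => ⟨hu, fun hux => hus (hux ▸ hxs)⟩,
        fun ⟨hu, hux⟩ => ⟨hu, fun hus => hux (hs ⟨hu, hus⟩)⟩⟩
    rw [this, sCount_eq_ncard K hx]
  · have : K.verts \ s = K.verts :=
      sdiff_eq_left.mpr (Set.disjoint_left.mpr fun u hu hus => hxs (hs ⟨hu, hus⟩ ▸ hus))
    rw [this]
    rfl

section Glueing

variable {ι : Type*} {G₀ : (⊤ : SimpleGraph V).Subgraph} {H : ι → (⊤ : SimpleGraph V).Subgraph}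
  {F : Set (Sym2 V)} {v : V} {w : ι → V}

lemma mem_coveredVerts_iff_of_subset_union_iUnion
    (hF : F ⊆ G₀.edgeSet ∪ ⋃ i, (H i).edgeSet) (hv : ∀ i, v ∉ (H i).verts) :
    v ∈ coveredVerts F ↔ v ∈ coveredVerts (F ∩ G₀.edgeSet) := by
  rw [coveredVerts_eq_of_subset_union_iUnion hF, Set.mem_union, Set.mem_iUnion, or_iff_left]
  rintro ⟨i, hi⟩
  exact hv i ((H i).coveredVerts_subset_verts Set.inter_subset_right hi)

lemma sdiff_subset_coveredVerts_iff_of_subset_union_iUnion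
    (hF : F ⊆ G₀.edgeSet ∪ ⋃ i, (H i).edgeSet) (hv : ∀ i, v ∉ (H i).verts)
    (hverts : G₀.verts = insert v (Set.range w)) (hsel : ∀ i, w i ∈ (H i).verts)
    (hvdisj : Pairwise (Disjoint on fun i => (H i).verts)) :
    (G₀ ⊔ ⨆ i, H i).verts \ {v} ⊆ coveredVerts F ↔
      ∀ i, (H i).verts \ coveredVerts (F ∩ G₀.edgeSet) ⊆ coveredVerts (F ∩ (H i).edgeSet) := by
  rw [coveredVerts_eq_of_subset_union_iUnion hF, Subgraph.verts_sup, Subgraph.verts_iSup]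
  constructor
  · rintro h i u ⟨hu, hu₀⟩
    obtain hu' | hu' := h ⟨.inr (Set.mem_iUnion_of_mem i hu), fun huv => hv i (huv ▸ hu)⟩
    · exact absurd hu' hu₀
    obtain ⟨j, hj⟩ := Set.mem_iUnion.mp hu'
    obtain rfl | hji := eq_or_ne j i
    · exact hj
    · exact absurd hu (Set.disjoint_left.mp (hvdisj hji)
        ((H j).coveredVerts_subset_verts Set.inter_subset_right hj))
  · rintro h u ⟨hu, huv⟩
    obtain ⟨i, hi⟩ : ∃ i, u ∈ (H i).verts := by
      rcases hu with hu | hu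
      · rw [hverts] at hu
        obtain ⟨i, rfl⟩ := hu.resolve_left huv
        exact ⟨i, hsel i⟩
      · exact Set.mem_iUnion.mp hu
    by_cases hu₀ : u ∈ coveredVerts (F ∩ G₀.edgeSet)
    · exact .inl hu₀
    · exact .inr (Set.mem_iUnion_of_mem i (h i ⟨hi, hu₀⟩))

lemma covers_iff_forall_sdiff_subset_coveredVerts {c : Prop} {V' : Set V}
    (hF : F ⊆ G₀.edgeSet ∪ ⋃ i, (H i).edgeSet) (hv : ∀ i, v ∉ (H i).verts)
    (hverts : G₀.verts = insert v (Set.range w)) (hsel : ∀ i, w i ∈ (H i).verts)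
    (hvdisj : Pairwise (Disjoint on fun i => (H i).verts))
    (hV' : coveredVerts (F ∩ G₀.edgeSet) = V') (hc : v ∈ V' ↔ c) :
    ((v ∈ coveredVerts F ↔ c) ∧ (G₀ ⊔ ⨆ i, H i).verts \ {v} ⊆ coveredVerts F) ↔
      ∀ i, (H i).verts \ V' ⊆ coveredVerts (F ∩ (H i).edgeSet) := by
  subst hV'
  rw [mem_coveredVerts_iff_of_subset_union_iUnion hF hv,
    sdiff_subset_coveredVerts_iff_of_subset_union_iUnion hF hv hverts hsel hvdisj]
  exact and_iff_right hc

/-- With `c := True` this counts the edge covers of `G₀ ⊔ ⨆ i, H i`, with `c := False` those of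
the same graph with `v` deleted. -/
theorem ncard_covers_sup_iSup_eq_sum [Finite V] [DecidableEq V] [Fintype ι] (c : Prop)
    [Decidable c] (hwv : ∀ i, w i ≠ v) (hverts : G₀.verts = insert v (Set.range w))
    (hsel : ∀ i, w i ∈ (H i).verts) (hvdisj : Pairwise (Disjoint on fun i => (H i).verts))
    (hedisj : Pairwise (Disjoint on fun i => (H i).edgeSet))
    (hmeet : ∀ i, (H i).verts ∩ G₀.verts = {w i}) :
    {F | F ⊆ (G₀ ⊔ ⨆ i, H i).edgeSet ∧ (v ∈ coveredVerts F ↔ c) ∧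
        (G₀ ⊔ ⨆ i, H i).verts \ {v} ⊆ coveredVerts F}.ncard =
      ∑ V' ∈ (insert v (Finset.image w Finset.univ)).powerset.filter (fun V' => v ∈ V' ↔ c),
        alphaCount (G₀.induce ↑V') *
          ∏ i, (if w i ∈ V' then sCount (H i) (w i) else alphaCount (H i)) := by
  have hv : ∀ i, v ∉ (H i).verts := fun i hvi =>
    hwv i ((hmeet i).subset ⟨hvi, hverts ▸ Set.mem_insert v _⟩).symm
  have hV₀ : ((insert v (Finset.image w Finset.univ) : Finset V) : Set V) = G₀.verts := by
    simp [hverts]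
  let supp₀ (F : Set (Sym2 V)) : Finset V :=
    (Set.toFinite (coveredVerts (F ∩ G₀.edgeSet))).toFinset
  have hsupp₀ (F : Set (Sym2 V)) : (supp₀ F : Set V) = coveredVerts (F ∩ G₀.edgeSet) :=
    Set.Finite.coe_toFinset _
  rw [Subgraph.edgeSet_sup, Subgraph.edgeSet_iSup,
    Set.ncard_eq_sum_ncard_fiberwise (Set.toFinite _) (f := supp₀)]
  · refine Finset.sum_congr rfl fun V' hV' => ?_
    obtain ⟨hV'₀, hV'c⟩ := Finset.mem_filter.mp hV'
    rw [Finset.mem_powerset, ← Finset.coe_subset, hV₀] at hV'₀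
    have hfiber : {F ∈ {F | F ⊆ G₀.edgeSet ∪ ⋃ i, (H i).edgeSet ∧ (v ∈ coveredVerts F ↔ c) ∧
          (G₀ ⊔ ⨆ i, H i).verts \ {v} ⊆ coveredVerts F} | supp₀ F = V'} =
        {F | F ⊆ G₀.edgeSet ∪ ⋃ i, (H i).edgeSet ∧ coveredVerts (F ∩ G₀.edgeSet) = V' ∧
          ∀ i, (H i).verts \ V' ⊆ coveredVerts (F ∩ (H i).edgeSet)} := by
      ext F
      simp only [Set.mem_ofPred_eq, ← Finset.coe_inj, hsupp₀, and_assoc]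
      refine and_congr_right fun hF => ?_
      rw [← and_assoc, and_comm]
      exact and_congr_right fun h₀ =>
        covers_iff_forall_sdiff_subset_coveredVerts hF hv hverts hsel hvdisj h₀ hV'c
    have hdisj₀ (i : ι) : Disjoint G₀.edgeSet (H i).edgeSet :=
      Subgraph.disjoint_edgeSet_of_subsingleton_inter_verts
        (by rw [Set.inter_comm, hmeet i]; exact Set.subsingleton_singleton)
    rw [hfiber, Set.ncard_setOf_subset_union_iUnion_eq_mul_prod hdisj₀ hedisj
      (coveredVerts · = V') fun i F => (H i).verts \ V' ⊆ coveredVerts F]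
    congr 1
    · exact (alphaCount_induce G₀ V').symm
    · exact Finset.prod_congr rfl fun i _ => ncard_sdiff_subset_coveredVerts (H i) (hsel i)
        fun u ⟨hu, huV'⟩ => hmeet i ▸ ⟨hu, hV'₀ huV'⟩
  · rintro F ⟨hF, hvc, -⟩
    rw [Finset.mem_coe, Finset.mem_filter, Finset.mem_powerset, ← Finset.coe_subset,
      ← Finset.mem_coe, hsupp₀, hV₀]
    exact ⟨G₀.coveredVerts_subset_verts Set.inter_subset_right,
      (mem_coveredVerts_iff_of_subset_union_iUnion hF hv).symm.trans hvc⟩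

end Glueing

end

theorem glueing_to_atomic_graph_general {V : Type*} [Fintype V] [DecidableEq V]
    (G₀ : (⊤ : SimpleGraph V).Subgraph) (v : V) (n : ℕ) (w : Fin n → V)
    (hwv : ∀ i, w i ≠ v)
    (hverts : G₀.verts = insert v (Set.range w))
    (H : Fin n → (⊤ : SimpleGraph V).Subgraph)
    (hsel : ∀ i, w i ∈ (H i).verts)
    (hvdisj : ∀ i j, i ≠ j → (H i).verts ∩ (H j).verts = ∅)
    (hedisj : ∀ i j, i ≠ j → (H i).edgeSet ∩ (H j).edgeSet = ∅)
    (hmeet : ∀ i, (H i).verts ∩ G₀.verts = {w i}) :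
    alphaCount (G₀ ⊔ ⨆ i, H i) =
      ∑ V' ∈ (insert v (Finset.image w Finset.univ)).powerset.filter (fun V' => v ∈ V'),
        alphaCount (G₀.induce ↑V') *
          ∏ i, (if w i ∈ V' then sCount (H i) (w i) else alphaCount (H i)) ∧
    betaCount (G₀ ⊔ ⨆ i, H i) v =
      ∑ V' ∈ (insert v (Finset.image w Finset.univ)).powerset.filter (fun V' => v ∉ V'),
        alphaCount (G₀.induce ↑V') *
          ∏ i, (if w i ∈ V' then sCount (H i) (w i) else alphaCount (H i)) := by
  have hv : v ∈ (G₀ ⊔ ⨆ i, H i).verts := Or.inl (hverts ▸ Set.mem_insert v _)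
  have glue (c : Prop) [Decidable c] := ncard_covers_sup_iSup_eq_sum c hwv hverts hsel
    (fun i j hij => Set.disjoint_iff_inter_eq_empty.mpr (hvdisj i j hij))
    (fun i j hij => Set.disjoint_iff_inter_eq_empty.mpr (hedisj i j hij)) hmeet
  constructor
  · rw [alphaCount_eq_ncard_of_mem _ hv]
    simpa only [iff_true] using glue True
  · rw [betaCount_eq_ncard]
    simpa only [iff_false] using glue False

/-- Let `G₀` be a connected graph with vertex set `V₀ = {v, w 1, …, w n}` and selected
vertex `v`, and for each `i` let `Hᵢ` be a graph with selected vertex `w i`, the graphs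
`Hᵢ` pairwise sharing no vertices and no edges, and `Hᵢ ∩ G₀ = {w i}`.  Let
`G = G₀ ∪ H₁ ∪ ⋯ ∪ Hₙ` and `f(Hᵢ, wᵢ, X) = s(Hᵢ, wᵢ)` if `wᵢ ∈ X`, else `α(Hᵢ)`.  Then
(1) `α(G) = Σ_{V' ⊆ V₀, v ∈ V'} α(G₀(V')) ∏ᵢ f(Hᵢ, wᵢ, V')` and
(2) `β(G, v) = Σ_{V' ⊆ V₀, v ∉ V'} α(G₀(V')) ∏ᵢ f(Hᵢ, wᵢ, V')`,
where `G₀(V')` is the induced subgraph of `G₀` on `V'`. -/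
theorem glueing_to_atomic_graph {V : Type*} [Fintype V] [DecidableEq V]
    (G₀ : (⊤ : SimpleGraph V).Subgraph) (v : V) (n : ℕ) (w : Fin n → V)
    (hw : Function.Injective w) (hwv : ∀ i, w i ≠ v)
    (hverts : G₀.verts = insert v (Set.range w))
    (hconn : G₀.Connected)
    (H : Fin n → (⊤ : SimpleGraph V).Subgraph)
    (hsel : ∀ i, w i ∈ (H i).verts)
    (hvdisj : ∀ i j, i ≠ j → (H i).verts ∩ (H j).verts = ∅)
    (hedisj : ∀ i j, i ≠ j → (H i).edgeSet ∩ (H j).edgeSet = ∅)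
    (hmeet : ∀ i, (H i).verts ∩ G₀.verts = {w i}) :
    alphaCount (G₀ ⊔ ⨆ i, H i) =
      ∑ V' ∈ (insert v (Finset.image w Finset.univ)).powerset.filter (fun V' => v ∈ V'),
        alphaCount (G₀.induce ↑V') *
          ∏ i, (if w i ∈ V' then sCount (H i) (w i) else alphaCount (H i)) ∧
    betaCount (G₀ ⊔ ⨆ i, H i) v =
      ∑ V' ∈ (insert v (Finset.image w Finset.univ)).powerset.filter (fun V' => v ∉ V'),
        alphaCount (G₀.induce ↑V') *
          ∏ i, (if w i ∈ V' then sCount (H i) (w i) else alphaCount (H i)) :=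
  glueing_to_atomic_graph_general G₀ v n w hwv hverts H hsel hvdisj hedisj hmeet
end

section
/- Every connected finite simple graph with at least one edge that is not atomic admits a decomposition consisting of exactly two subgraphs. -/
open SimpleGraph

/-- The "graph of a decomposition": the intersection graph of a family of subgraphs,
where two distinct members are adjacent iff their vertex sets meet. -/
def decompGraph {V : Type*} {G : SimpleGraph V} {n : ℕ} (D : Fin n → G.Subgraph) :
    SimpleGraph (Fin n) where
  Adj i j := i ≠ j ∧ ((D i).verts ∩ (D j).verts).Nonempty
  symm := by
    constructor
    intro i j h
    exact ⟨h.1.symm, h.2.imp fun x hx => ⟨hx.2, hx.1⟩⟩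
  loopless := ⟨fun i h => h.1 rfl⟩

/-- `D` is a decomposition of the subgraph `H` of `G`: a family of `n ≥ 2` connected
subgraphs of `H`, each containing at least one edge, pairwise sharing no edges and at
most one vertex, whose vertex sets and edge sets union to those of `H`, and whose
intersection graph is a tree. -/
def IsDecompositionOf {V : Type*} {G : SimpleGraph V} (H : G.Subgraph) {n : ℕ}
    (D : Fin n → G.Subgraph) : Prop :=
  2 ≤ n ∧
  (∀ i, D i ≤ H) ∧
  (∀ i, (D i).Connected) ∧
  (∀ i, (D i).edgeSet.Nonempty) ∧
  (∀ i j, i ≠ j → (D i).edgeSet ∩ (D j).edgeSet = ∅) ∧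
  (∀ i j, i ≠ j → ((D i).verts ∩ (D j).verts).Subsingleton) ∧
  (⋃ i, (D i).verts) = H.verts ∧
  (⋃ i, (D i).edgeSet) = H.edgeSet ∧
  (decompGraph D).IsTree

/-- `D` is a decomposition of the graph `G` itself. -/
def IsDecomposition {V : Type*} (G : SimpleGraph V) {n : ℕ} (D : Fin n → G.Subgraph) : Prop :=
  IsDecompositionOf (⊤ : G.Subgraph) D

/-- A graph is atomic if it is connected, has at least one edge,
and admits no decomposition. -/
def IsAtomicGraph {V : Type*} (G : SimpleGraph V) : Prop :=
  G.Connected ∧ G.edgeSet.Nonempty ∧ ∀ (n : ℕ) (D : Fin n → G.Subgraph), ¬ IsDecomposition G D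

/-!
Take any decomposition and a leaf `i` of its intersection tree, with unique neighbour `j`. Merging
all parts other than `D i` gives a second part `B`: it is connected because the tree minus a leaf is
still connected and the union of connected parts along the edges of a connected intersection graph
is connected, and `D i` meets `B` only inside `D j`, hence in at most one vertex. So `D i`, `B` is
a decomposition into two parts.
-/

namespace SimpleGraph.Subgraph

variable {V ι : Type*} {G : SimpleGraph V}

theorem connected_iSup_of_adj {T : SimpleGraph ι} (hT : T.Connected) {D : ι → G.Subgraph}
    (hD : ∀ k, (D k).Connected) (hmeet : ∀ k l, T.Adj k l → ((D k).verts ∩ (D l).verts).Nonempty) :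
    (⨆ k, D k).Connected := by
  have hreach : ∀ k l, T.Walk k l → ∀ u (hu : u ∈ (D k).verts) v (hv : v ∈ (D l).verts),
      (⨆ k, D k).coe.Reachable ⟨u, (le_iSup D k).1 hu⟩ ⟨v, (le_iSup D l).1 hv⟩ := by
    intro k l p
    induction p with
    | nil => exact fun u hu v hv ↦ ((hD _) ⟨u, hu⟩ ⟨v, hv⟩).map (inclusion (le_iSup D _))
    | @cons k m l hkm _ ih =>
      intro u hu v hv
      obtain ⟨w, hwk, hwm⟩ := hmeet k m hkm
      exact (((hD k) ⟨u, hu⟩ ⟨w, hwk⟩).map (inclusion (le_iSup D k))).trans (ih w hwm v hv)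
  refine Subgraph.connected_iff.2 ⟨⟨fun ⟨u, hu⟩ ⟨v, hv⟩ ↦ ?_⟩, ?_⟩
  · rw [verts_iSup, Set.mem_iUnion] at hu hv
    obtain ⟨k, hk⟩ := hu
    obtain ⟨l, hl⟩ := hv
    exact hreach k l (hT.preconnected k l).some u hk v hl
  · obtain ⟨k⟩ := hT.nonempty
    exact (hD k).nonempty.mono (le_iSup D k).1

end SimpleGraph.Subgraph

section

variable {V : Type*} {G : SimpleGraph V}

theorem decompGraph_pair_isTree {A B : G.Subgraph} (hAB : (A.verts ∩ B.verts).Nonempty) :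
    (decompGraph ![A, B]).IsTree := by
  have hadj : (decompGraph ![A, B]).Adj 0 1 := ⟨by decide, hAB⟩
  refine ⟨(connected_iff_exists_forall_reachable _).2 ⟨0, fun k ↦ ?_⟩, .of_card_le_two (by simp)⟩
  fin_cases k
  exacts [.rfl, hadj.reachable]

theorem isDecompositionOf_pair {H A B : G.Subgraph} (hA : A.Connected) (hB : B.Connected)
    (hAe : A.edgeSet.Nonempty) (hBe : B.edgeSet.Nonempty) (hE : Disjoint A.edgeSet B.edgeSet)
    (hV : (A.verts ∩ B.verts).Subsingleton) (hmeet : (A.verts ∩ B.verts).Nonempty)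
    (hsup : A ⊔ B = H) : IsDecompositionOf H ![A, B] := by
  subst hsup
  have hE' : A.edgeSet ∩ B.edgeSet = ∅ := Set.disjoint_iff_inter_eq_empty.1 hE
  refine ⟨le_rfl, fun k ↦ ?_, fun k ↦ ?_, fun k ↦ ?_, fun k l hkl ↦ ?_, fun k l hkl ↦ ?_, ?_, ?_,
    decompGraph_pair_isTree hmeet⟩
  · fin_cases k
    exacts [le_sup_left, le_sup_right]
  · fin_cases k
    exacts [hA, hB]
  · fin_cases k
    exacts [hAe, hBe]
  · fin_cases k <;> fin_cases l
    all_goals first | exact absurd rfl hkl | simpa [Set.inter_comm] using hE'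
  · fin_cases k <;> fin_cases l
    all_goals first | exact absurd rfl hkl | simpa [Set.inter_comm] using hV
  · ext v
    simp [Fin.exists_fin_two]
  · ext e
    simp [Fin.exists_fin_two, Subgraph.edgeSet_sup]

end

namespace IsDecompositionOf

variable {V : Type*} {G : SimpleGraph V} {H : G.Subgraph} {n : ℕ} {D : Fin n → G.Subgraph}

theorem iSup_eq (hD : IsDecompositionOf H D) : ⨆ k, D k = H := by
  obtain ⟨-, -, -, -, -, -, hverts, hedges, -⟩ := hD
  refine Subgraph.ext (by rw [Subgraph.verts_iSup, hverts]) (funext₂ fun u v ↦ propext ?_)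
  rw [← Subgraph.mem_edgeSet, Subgraph.edgeSet_iSup, hedges, Subgraph.mem_edgeSet]

theorem pair_of_leaf (hD : IsDecompositionOf H D) {i j : Fin n} (hij : (decompGraph D).Adj i j)
    (hleaf : ∀ k, (decompGraph D).Adj i k → k = j)
    (hrest : ((decompGraph D).induce {i}ᶜ).Connected) :
    IsDecompositionOf H ![D i, ⨆ (k) (_ : k ≠ i), D k] := by
  have hsup := hD.iSup_eq
  obtain ⟨-, -, hconn, hedge, hdisj, hsub, -, -, -⟩ := hD
  have hji : j ≠ i := hij.ne'
  have hDj : D j ≤ ⨆ (k) (_ : k ≠ i), D k := le_iSup₂ (f := fun k (_ : k ≠ i) ↦ D k) j hji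
  have hmem : ∀ v, v ∈ (⨆ (k) (_ : k ≠ i), D k).verts → ∃ k ≠ i, v ∈ (D k).verts := by
    simp [Subgraph.verts_iSup]
  refine isDecompositionOf_pair (hconn i) ?_ (hedge i) ((hedge j).mono (Subgraph.edgeSet_mono hDj))
    ?_ ?_ ?_ (by rw [← iSup_split_single, hsup])
  · change (⨆ (k) (_ : k ∈ ({i}ᶜ : Set (Fin n))), D k).Connected
    rw [← iSup_subtype'']
    exact Subgraph.connected_iSup_of_adj hrest (hconn ·) fun k l hkl ↦ hkl.2
  · refine Set.disjoint_left.2 fun e hei he ↦ ?_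
    simp only [Subgraph.edgeSet_iSup, Set.mem_iUnion] at he
    obtain ⟨k, hki, hek⟩ := he
    exact Set.disjoint_left.1 (Set.disjoint_iff_inter_eq_empty.2 (hdisj i k hki.symm)) hei hek
  · refine (hsub i j hij.ne).anti fun v ⟨hvi, hv⟩ ↦ ⟨hvi, ?_⟩
    obtain ⟨k, hki, hvk⟩ := hmem v hv
    exact hleaf k ⟨hki.symm, v, hvi, hvk⟩ ▸ hvk
  · obtain ⟨v, hvi, hvj⟩ := hij.2
    exact ⟨v, hvi, hDj.1 hvj⟩

theorem exists_fin_two (hD : IsDecompositionOf H D) :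
    ∃ D' : Fin 2 → G.Subgraph, IsDecompositionOf H D' := by
  classical
  obtain ⟨hn, -, -, -, -, -, -, -, hT⟩ := id hD
  have : Nontrivial (Fin n) := Fin.nontrivial_iff_two_le.2 hn
  obtain ⟨i, hi⟩ := hT.exists_vert_degree_one_of_nontrivial
  obtain ⟨j, hij, hleaf⟩ := degree_eq_one_iff_existsUnique_adj.1 hi
  exact ⟨_, hD.pair_of_leaf hij hleaf (hT.connected.induce_compl_singleton_of_degree_eq_one hi)⟩

end IsDecompositionOf

theorem exists_decomposition_two_general {V : Type*} (G : SimpleGraph V)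
    (hconn : G.Connected) (hedge : G.edgeSet.Nonempty) (hna : ¬ IsAtomicGraph G) :
    ∃ D : Fin 2 → G.Subgraph, IsDecomposition G D := by
  obtain ⟨n, D, hD⟩ : ∃ n, ∃ D : Fin n → G.Subgraph, IsDecomposition G D := by
    simpa [IsAtomicGraph, hconn, hedge] using hna
  exact IsDecompositionOf.exists_fin_two hD

/-- Every connected finite simple graph with at least one edge that is not atomic
admits a decomposition consisting of exactly two subgraphs. -/
theorem exists_decomposition_two {V : Type*} [Fintype V] (G : SimpleGraph V)
    (hconn : G.Connected) (hedge : G.edgeSet.Nonempty) (hna : ¬ IsAtomicGraph G) :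
    ∃ D : Fin 2 → G.Subgraph, IsDecomposition G D :=
  exists_decomposition_two_general G hconn hedge hna
end

section
/- Let G = (V, E) be a connected non-atomic finite simple graph, let {G_1, …, G_n} be a decomposition of G, let {K_1, …, K_k} be a decomposition of G_1 with k ≥ 2, and let v be a vertex of G_1 that belongs to none of G_2, …, G_n. Then: if v belongs to exactly one of the graphs K_1, …, K_k, say K_1, then G admits a decomposition of the form {K_1, L_1, …, L_m} with v ∉ L_i for every i; and if v belongs to two of the graphs K_1, …, K_k, then G admits a decomposition {L_1, L_2} into two subgraphs with v ∈ L_1 and v ∈ L_2. -/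
open SimpleGraph

/-!
Replace the member `D i₀` of `D` by the members of `K`. Each branch of the tree of `D` at `i₀`
meets `D i₀` in a single vertex, which lies in some member of `K`; attaching the branch there
gives every piece of the refined family an anchor in `K`, and two pieces with different anchors
can only meet in a vertex shared by their anchors. If `v` lies in `K j₀` alone, grouping the
pieces by the branch at `j₀` of the tree of `K` containing their anchor (a branch of `D` anchored
at `K j₀` alone forms a group of its own) yields groups that are pairwise disjoint and meet `K j₀`
once each: with `K j₀` they form a star-shaped decomposition, and `v`, which lies only in `K j₀`
and `D i₀`, is in none of the groups. If `v` lies in `K j₁` and `K j₂`, these are adjacent in the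
tree of `K`, and cutting that edge splits the pieces into two groups meeting only in `v`.
-/

lemma decompGraph_adj {V : Type*} {G : SimpleGraph V} {n : ℕ} {F : Fin n → G.Subgraph}
    {i j : Fin n} : (decompGraph F).Adj i j ↔ i ≠ j ∧ ((F i).verts ∩ (F j).verts).Nonempty :=
  Iff.rfl

namespace SimpleGraph

variable {ι : Type*} {T : SimpleGraph ι} {r i j j' u u' : ι}

lemma eq_of_reachable_deleteIncidenceSet_self (h : (T.deleteIncidenceSet r).Reachable r j) :
    r = j := by
  obtain ⟨p⟩ := h
  cases p with
  | nil => rfl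
  | cons h _ => exact absurd rfl (deleteIncidenceSet_adj.mp h).2.1

lemma Connected.exists_adj_reachable_deleteIncidenceSet (hT : T.Connected) (hj : j ≠ r) :
    ∃ u, T.Adj r u ∧ (T.deleteIncidenceSet r).Reachable j u := by
  obtain ⟨p⟩ := hT.preconnected j r
  induction p with
  | nil => exact absurd rfl hj
  | @cons a c b h q ih =>
    by_cases hc : c = b
    · subst hc
      exact ⟨a, h.symm, .rfl⟩
    · obtain ⟨u, hu, hreach⟩ := ih hc
      exact ⟨u, hu, (deleteIncidenceSet_adj.mpr ⟨h, hj, hc⟩).reachable.trans hreach⟩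

/-- Two neighbours of `r` joined by a walk avoiding `r` would close a cycle through `r`. -/
lemma IsAcyclic.eq_of_reachable_deleteIncidenceSet (hT : T.IsAcyclic) (hu : T.Adj r u)
    (hu' : T.Adj r u') (h : (T.deleteIncidenceSet r).Reachable u u') : u = u' := by
  by_contra hne
  refine isBridge_iff.mp (isAcyclic_iff_forall_adj_isBridge.mp hT hu) ?_
  have hle : T.deleteIncidenceSet r ≤ T.deleteEdges {s(r, u)} := fun x y hxy => by
    rw [deleteIncidenceSet_adj] at hxy
    simp [hxy.1, hxy.2.1, hxy.2.2]
  have hru' : (T.deleteEdges {s(r, u)}).Adj r u' := by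
    simp [hu', Ne.symm hne, hu.ne]
  exact hru'.reachable.trans (h.mono hle).symm

open Classical in
/-- The neighbour of `r` through which `j` is reached from `r`, i.e. the neighbour of `r` in
the component of `j` in `T - r`; by convention `branchRoot T r r = r`. -/
noncomputable def branchRoot (T : SimpleGraph ι) (r j : ι) : ι :=
  if h : ∃ u, T.Adj r u ∧ (T.deleteIncidenceSet r).Reachable j u then h.choose else r

lemma branchRoot_self : T.branchRoot r r = r := by
  rw [branchRoot, dif_neg]
  rintro ⟨u, hu, hreach⟩
  exact hu.ne (eq_of_reachable_deleteIncidenceSet_self hreach)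

lemma Connected.branchRoot_spec (hT : T.Connected) (hj : j ≠ r) :
    T.Adj r (T.branchRoot r j) ∧ (T.deleteIncidenceSet r).Reachable j (T.branchRoot r j) := by
  have h := hT.exists_adj_reachable_deleteIncidenceSet hj
  rw [branchRoot, dif_pos h]
  exact h.choose_spec

namespace IsTree

variable (hT : T.IsTree)
include hT

lemma adj_branchRoot (hj : j ≠ r) : T.Adj r (T.branchRoot r j) :=
  (hT.connected.branchRoot_spec hj).1

lemma reachable_branchRoot (hj : j ≠ r) :
    (T.deleteIncidenceSet r).Reachable j (T.branchRoot r j) :=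
  (hT.connected.branchRoot_spec hj).2

lemma branchRoot_eq (hu : T.Adj r u) (h : (T.deleteIncidenceSet r).Reachable j u) :
    T.branchRoot r j = u := by
  have hj : j ≠ r := by
    rintro rfl
    exact hu.ne (eq_of_reachable_deleteIncidenceSet_self h)
  exact hT.isAcyclic.eq_of_reachable_deleteIncidenceSet (hT.adj_branchRoot hj) hu
    ((hT.reachable_branchRoot hj).symm.trans h)

lemma branchRoot_of_adj (h : T.Adj r j) : T.branchRoot r j = j :=
  hT.branchRoot_eq h .rfl

lemma branchRoot_congr (h : (T.deleteIncidenceSet r).Reachable i j) :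
    T.branchRoot r i = T.branchRoot r j := by
  by_cases hj : j = r
  · subst hj
    rw [← eq_of_reachable_deleteIncidenceSet_self h.symm]
  · exact hT.branchRoot_eq (hT.adj_branchRoot hj) (h.trans (hT.reachable_branchRoot hj))

lemma branchRoot_eq_self_iff : T.branchRoot r j = r ↔ j = r := by
  refine ⟨fun h => by_contra fun hj => (hT.adj_branchRoot hj).ne' h, fun h => h ▸ branchRoot_self⟩

lemma branchRoot_branchRoot : T.branchRoot r (T.branchRoot r j) = T.branchRoot r j := by
  by_cases hj : j = r
  · rw [hj, branchRoot_self, branchRoot_self]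
  · exact hT.branchRoot_of_adj (hT.adj_branchRoot hj)

end IsTree

open Classical in
noncomputable def edgeSide (T : SimpleGraph ι) (u u' j : ι) : Bool :=
  decide ((T.deleteEdges {s(u, u')}).Reachable u' j)

lemma edgeSide_eq_of_adj (h : (T.deleteEdges {s(u, u')}).Adj j j') :
    T.edgeSide u u' j = T.edgeSide u u' j' := by
  simp only [edgeSide, decide_eq_decide]
  exact ⟨(·.trans h.reachable), (·.trans h.reachable.symm)⟩

lemma edge_eq_of_edgeSide_ne (h : T.Adj j j') (hne : T.edgeSide u u' j ≠ T.edgeSide u u' j') :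
    s(j, j') = s(u, u') := by
  by_contra he
  exact hne (edgeSide_eq_of_adj (deleteEdges_adj.mpr ⟨h, fun h' => he h'⟩))

lemma edgeSide_right : T.edgeSide u u' u' = true := by
  simp [edgeSide]

open Classical in
lemma IsAcyclic.edgeSide_left (hT : T.IsAcyclic) (h : T.Adj u u') : T.edgeSide u u' u = false :=
  decide_eq_false fun h' => isBridge_iff.mp (isAcyclic_iff_forall_adj_isBridge.mp hT h) h'.symm

open Classical in
lemma Connected.reachable_edgeSide (hT : T.Connected) (j : ι) :
    (T.deleteEdges {s(u, u')}).Reachable (cond (T.edgeSide u u' j) u' u) j := by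
  cases hj : T.edgeSide u u' j
  · induction (reachable_iff_reflTransGen u j).mp (hT.preconnected u j) with
    | refl => exact .rfl
    | @tail y z _ hyz ih =>
      by_cases he : s(y, z) = s(u, u')
      · rcases Sym2.eq_iff.mp he with ⟨-, rfl⟩ | ⟨-, rfl⟩
        · simp [edgeSide] at hj
        · exact .rfl
      · have h : (T.deleteEdges {s(u, u')}).Adj y z := by simp [hyz, he]
        exact (ih ((edgeSide_eq_of_adj h).trans hj)).trans h.reachable
  · exact of_decide_eq_true hj

end SimpleGraph

namespace SimpleGraph.Subgraph

variable {V : Type*} {G : SimpleGraph V}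

lemma connected_iSup_of_reflTransGen {ι : Type*} (F : ι → G.Subgraph)
    (hF : ∀ i, (F i).Connected) (i₀ : ι)
    (h : ∀ i, Relation.ReflTransGen (fun i j => ((F i).verts ∩ (F j).verts).Nonempty) i i₀) :
    (⨆ i, F i).Connected := by
  have hle : ∀ i, F i ≤ ⨆ i, F i := le_iSup F
  obtain ⟨y₀, hy₀⟩ := (hF i₀).nonempty
  have reach : ∀ i x (hx : x ∈ (F i).verts),
      (⨆ i, F i).coe.Reachable ⟨x, (hle i).1 hx⟩ ⟨y₀, (hle i₀).1 hy₀⟩ := by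
    intro i
    induction h i using Relation.ReflTransGen.head_induction_on with
    | refl => exact fun x hx => ((hF i₀) ⟨x, hx⟩ ⟨y₀, hy₀⟩).map (inclusion (hle i₀))
    | @head i j hij _ ih =>
      intro x hx
      obtain ⟨z, hzi, hzj⟩ := hij
      exact (((hF i) ⟨x, hx⟩ ⟨z, hzi⟩).map (inclusion (hle i))).trans (ih z hzj)
  rw [Subgraph.connected_iff]
  refine ⟨⟨fun ⟨x, hx⟩ ⟨y, hy⟩ => ?_⟩, y₀, (hle i₀).1 hy₀⟩
  rw [verts_iSup, Set.mem_iUnion] at hx hy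
  obtain ⟨i, hi⟩ := hx
  obtain ⟨j, hj⟩ := hy
  exact (reach i x hi).trans (reach j y hj).symm

end SimpleGraph.Subgraph

namespace IsDecompositionOf

variable {V : Type*} {G : SimpleGraph V} {H : G.Subgraph} {n : ℕ} {D : Fin n → G.Subgraph}
  (hD : IsDecompositionOf H D)
include hD

lemma two_le : 2 ≤ n := hD.1

lemma le (i : Fin n) : D i ≤ H := hD.2.1 i

lemma connected (i : Fin n) : (D i).Connected := hD.2.2.1 i

lemma edgeSet_nonempty (i : Fin n) : (D i).edgeSet.Nonempty := hD.2.2.2.1 i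

lemma edgeSet_inter_eq_empty {i j : Fin n} (h : i ≠ j) :
    (D i).edgeSet ∩ (D j).edgeSet = ∅ := hD.2.2.2.2.1 i j h

lemma verts_inter_subsingleton {i j : Fin n} (h : i ≠ j) :
    ((D i).verts ∩ (D j).verts).Subsingleton := hD.2.2.2.2.2.1 i j h

lemma iUnion_verts : ⋃ i, (D i).verts = H.verts := hD.2.2.2.2.2.2.1

lemma iUnion_edgeSet : ⋃ i, (D i).edgeSet = H.edgeSet := hD.2.2.2.2.2.2.2.1

lemma isTree : (decompGraph D).IsTree := hD.2.2.2.2.2.2.2.2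

end IsDecompositionOf

section Grouping

open SimpleGraph Relation

variable {V α β : Type*} {G : SimpleGraph V} (P : α → G.Subgraph) (lab : α → Option β)

noncomputable def groupSup (b : β) : G.Subgraph :=
  ⨆ a : {a // lab a = some b}, P a

def Linked (a a' : α) : Prop :=
  lab a' = lab a ∧ ((P a).verts ∩ (P a').verts).Nonempty

variable {P lab} {a a₀ : α} {b : β}

lemma mem_groupSup_verts {x : V} :
    x ∈ (groupSup P lab b).verts ↔ ∃ a, lab a = some b ∧ x ∈ (P a).verts := by
  simp [groupSup]

lemma mem_groupSup_edgeSet {e : Sym2 V} :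
    e ∈ (groupSup P lab b).edgeSet ↔ ∃ a, lab a = some b ∧ e ∈ (P a).edgeSet := by
  simp [groupSup]

lemma le_groupSup (h : lab a = some b) : P a ≤ groupSup P lab b :=
  le_iSup (fun a : {a // lab a = some b} => P a) ⟨a, h⟩

lemma groupSup_eq_of_forall_iff (h : ∀ a, lab a = some b ↔ a = a₀) :
    groupSup P lab b = P a₀ :=
  le_antisymm (iSup_le fun a => ((h a).mp a.2) ▸ le_rfl) (le_groupSup ((h a₀).mpr rfl))

lemma connected_groupSup (hP : ∀ a, (P a).Connected) (h₀ : lab a₀ = some b)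
    (h : ∀ a, lab a = some b → ReflTransGen (Linked P lab) a a₀) :
    (groupSup P lab b).Connected := by
  refine Subgraph.connected_iSup_of_reflTransGen _ (fun a => hP a.1) ⟨a₀, h₀⟩ fun ⟨a, ha⟩ => ?_
  induction h a ha using ReflTransGen.head_induction_on with
  | refl => exact .refl
  | @head a c hac _ ih => exact .head hac.2 (ih (hac.1.trans ha))

lemma reflTransGen_linked_of_reachable {ι : Type*} {H : SimpleGraph ι} (g : ι → α)
    (hg : ∀ ⦃x y⦄, H.Adj x y → Linked P lab (g x) (g y)) {x y : ι} (h : H.Reachable x y) :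
    ReflTransGen (Linked P lab) (g x) (g y) :=
  ((reachable_iff_reflTransGen x y).mp h).lift g hg

/-- Of the conditions on a decomposition, the groups inherit edges, edge-disjointness and
covering from the pieces; connectivity, vertex intersections and the tree remain to be checked. -/
theorem isDecomposition_of_eq_groupSup {n : ℕ} (F : Fin n → G.Subgraph) (e : Fin n → β)
    (hF : ∀ t, F t = groupSup P lab (e t)) (he : Function.Injective e) (hn : 2 ≤ n)
    (hrange : ∀ a b, lab a = some b → b ∈ Set.range e) (hsurj : ∀ t, ∃ a, lab a = some (e t))
    (hedges : ∀ a, (P a).edgeSet.Nonempty)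
    (hdisj : ∀ a a' b b', lab a = some b → lab a' = some b' → b ≠ b' →
      (P a).edgeSet ∩ (P a').edgeSet = ∅)
    (hverts : ∀ x, ∃ a b, lab a = some b ∧ x ∈ (P a).verts)
    (hedgeSet : ∀ s ∈ G.edgeSet, ∃ a b, lab a = some b ∧ s ∈ (P a).edgeSet)
    (hconn : ∀ t, (F t).Connected)
    (hss : ∀ t t', t ≠ t' → ((F t).verts ∩ (F t').verts).Subsingleton)
    (htree : (decompGraph F).IsTree) :
    IsDecomposition G F := by
  refine ⟨hn, fun _ => le_top, hconn, fun t => ?_, fun t t' htt' => ?_, hss, ?_, ?_, htree⟩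
  · obtain ⟨a, ha⟩ := hsurj t
    exact (hedges a).mono (Subgraph.edgeSet_mono (hF t ▸ le_groupSup ha))
  · ext s
    simp only [hF, Set.mem_inter_iff, mem_groupSup_edgeSet, Set.mem_empty_iff_false, iff_false]
    rintro ⟨⟨a, ha, hsa⟩, a', ha', hsa'⟩
    exact (hdisj a a' _ _ ha ha' (he.ne htt')).subset ⟨hsa, hsa'⟩
  · refine Set.eq_univ_of_forall fun x => ?_
    obtain ⟨a, b, hab, hx⟩ := hverts x
    obtain ⟨t, rfl⟩ := hrange a b hab
    exact Set.mem_iUnion.mpr ⟨t, hF t ▸ mem_groupSup_verts.mpr ⟨a, hab, hx⟩⟩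
  · refine Set.Subset.antisymm (Set.iUnion_subset fun t => Subgraph.edgeSet_mono le_top)
      fun s hs => ?_
    obtain ⟨a, b, hab, hsa⟩ := hedgeSet s hs
    obtain ⟨t, rfl⟩ := hrange a b hab
    exact Set.mem_iUnion.mpr ⟨t, hF t ▸ mem_groupSup_edgeSet.mpr ⟨a, hab, hsa⟩⟩

end Grouping

section Star

open SimpleGraph

variable {V : Type*} {G : SimpleGraph V} {n : ℕ} {H : G.Subgraph} {L : Fin n → G.Subgraph}

lemma isTree_decompGraph_cons (hH : ∀ s, (H.verts ∩ (L s).verts).Nonempty)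
    (hL : ∀ s s', s ≠ s' → (L s).verts ∩ (L s').verts = ∅) :
    (decompGraph (Fin.cons H L : Fin (n + 1) → G.Subgraph)).IsTree := by
  convert isTree_starGraph (0 : Fin (n + 1))
  ext t t'
  rw [decompGraph_adj, starGraph_adj]
  refine and_congr_right fun htt' => ⟨fun h => ?_, fun h => ?_⟩
  · by_contra! h'
    obtain ⟨s, rfl⟩ := Fin.exists_succ_eq.mpr h'.1
    obtain ⟨s', rfl⟩ := Fin.exists_succ_eq.mpr h'.2
    simp only [Fin.cons_succ] at h
    exact h.ne_empty (hL s s' fun h => htt' (h ▸ rfl))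
  · rcases h with rfl | rfl
    · obtain ⟨s, rfl⟩ := Fin.exists_succ_eq.mpr (Ne.symm htt')
      simpa using hH s
    · obtain ⟨s, rfl⟩ := Fin.exists_succ_eq.mpr htt'
      simpa [Set.inter_comm] using hH s

lemma cons_inter_subsingleton (hH : ∀ s, (H.verts ∩ (L s).verts).Subsingleton)
    (hL : ∀ s s', s ≠ s' → (L s).verts ∩ (L s').verts = ∅) {t t' : Fin (n + 1)} (htt' : t ≠ t') :
    (((Fin.cons H L : Fin (n + 1) → G.Subgraph) t).verts ∩
      ((Fin.cons H L : Fin (n + 1) → G.Subgraph) t').verts).Subsingleton := by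
  induction t using Fin.cases <;> induction t' using Fin.cases
  · exact absurd rfl htt'
  · simpa using hH _
  · simpa [Set.inter_comm] using hH _
  · rename_i s s'
    simp only [Fin.cons_succ, hL s s' fun h => htt' (congrArg Fin.succ h)]
    exact Set.subsingleton_empty

lemma isTree_of_adj_zero_one {T : SimpleGraph (Fin 2)} (h : T.Adj 0 1) : T.IsTree := by
  convert isTree_starGraph (0 : Fin 2)
  ext a b
  fin_cases a <;> fin_cases b <;> simp [starGraph_adj, h, h.symm]

variable {α β : Type*} {P : α → G.Subgraph} {lab : α → Option β}

theorem exists_isDecomposition_cons_groupSup [Fintype β] {a₀ : α} {b₀ : β}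
    (h₀ : ∀ a, lab a = some b₀ ↔ a = a₀) (hn : ∃ b, b ≠ b₀ ∧ some b ∈ Set.range lab)
    (hedges : ∀ a, (P a).edgeSet.Nonempty)
    (hdisj : ∀ a a' b b', lab a = some b → lab a' = some b' → b ≠ b' →
      (P a).edgeSet ∩ (P a').edgeSet = ∅)
    (hverts : ∀ x, ∃ a b, lab a = some b ∧ x ∈ (P a).verts)
    (hedgeSet : ∀ s ∈ G.edgeSet, ∃ a b, lab a = some b ∧ s ∈ (P a).edgeSet)
    (hconn₀ : (P a₀).Connected)
    (hconn : ∀ b, b ≠ b₀ → some b ∈ Set.range lab → (groupSup P lab b).Connected)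
    (hmeet : ∀ b, b ≠ b₀ → some b ∈ Set.range lab →
      ((P a₀).verts ∩ (groupSup P lab b).verts).Nonempty)
    (hss : ∀ b, b ≠ b₀ → some b ∈ Set.range lab →
      ((P a₀).verts ∩ (groupSup P lab b).verts).Subsingleton)
    (hL : ∀ b b', b ≠ b₀ → b' ≠ b₀ → b ≠ b' →
      (groupSup P lab b).verts ∩ (groupSup P lab b').verts = ∅) :
    ∃ (n : ℕ) (L : Fin n → G.Subgraph), IsDecomposition G (Fin.cons (P a₀) L) ∧
      ∀ t, ∃ b, b ≠ b₀ ∧ L t = groupSup P lab b := by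
  classical
  let S := {b // b ≠ b₀ ∧ some b ∈ Set.range lab}
  let e : Fin (Fintype.card S) → β := fun t => ((Fintype.equivFin S).symm t).1
  have heS : ∀ t, e t ≠ b₀ ∧ some (e t) ∈ Set.range lab := fun t => ((Fintype.equivFin S).symm t).2
  have he : Function.Injective e := Subtype.val_injective.comp (Fintype.equivFin S).symm.injective
  have hL' : ∀ t t', t ≠ t' → (groupSup P lab (e t)).verts ∩ (groupSup P lab (e t')).verts = ∅ :=
    fun t t' htt' => hL _ _ (heS t).1 (heS t').1 (he.ne htt')
  obtain ⟨b, hb, hbS⟩ := hn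
  have hcard : 0 < Fintype.card S := Fintype.card_pos_iff.mpr ⟨⟨b, hb, hbS⟩⟩
  refine ⟨_, fun t => groupSup P lab (e t), isDecomposition_of_eq_groupSup _ (Fin.cons b₀ e)
    (fun t => ?_) (Fin.cons_injective_iff.mpr ⟨fun ⟨t, ht⟩ => (heS t).1 ht, he⟩) (by omega)
    (fun a b hab => ?_) (fun t => ?_) hedges hdisj hverts hedgeSet (fun t => ?_)
    (fun t t' => cons_inter_subsingleton (fun t => hss _ (heS t).1 (heS t).2) hL')
    (isTree_decompGraph_cons (fun t => hmeet _ (heS t).1 (heS t).2) hL'),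
    fun t => ⟨e t, (heS t).1, rfl⟩⟩
  · induction t using Fin.cases
    exacts [(groupSup_eq_of_forall_iff h₀).symm, rfl]
  · by_cases hb : b = b₀
    · exact ⟨0, by simp [hb]⟩
    · exact ⟨(Fintype.equivFin S ⟨b, hb, a, hab⟩).succ, by simp [e]⟩
  · induction t using Fin.cases
    exacts [⟨a₀, (h₀ a₀).mpr rfl⟩, (heS _).2]
  · induction t using Fin.cases
    · simpa using hconn₀
    · simpa using hconn _ (heS _).1 (heS _).2

end Star

section Refinement

open SimpleGraph

variable {V β : Type*} {G : SimpleGraph V} {m k : ℕ} {D : Fin m → G.Subgraph} {i₀ : Fin m}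
  {K : Fin k → G.Subgraph}

/-- `D i₀` is still among the pieces; the labellings below drop it. -/
def refinedPieces (K : Fin k → G.Subgraph) (D : Fin m → G.Subgraph) :
    Fin k ⊕ Fin m → G.Subgraph :=
  Sum.elim K D

noncomputable def refinedLabel (D : Fin m → G.Subgraph) (i₀ : Fin m) (fK : Fin k → β)
    (fD : Fin m → β) : Fin k ⊕ Fin m → Option β
  | .inl j => some (fK j)
  | .inr i => if i = i₀ then none else some (fD ((decompGraph D).branchRoot i₀ i))

/-- The member of `K` from which a refined piece hangs, when each neighbour `w` of `i₀` in the
tree of `D` is attached to a member `K (att w)` meeting `D w`. -/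
noncomputable def anchor (D : Fin m → G.Subgraph) (i₀ : Fin m) (att : Fin m → Fin k) :
    Fin k ⊕ Fin m → Fin k :=
  Sum.elim id (att ∘ (decompGraph D).branchRoot i₀)

variable {fK : Fin k → β} {fD : Fin m → β} {att : Fin m → Fin k}

@[simp] lemma refinedLabel_inl (j : Fin k) : refinedLabel D i₀ fK fD (.inl j) = some (fK j) := rfl

lemma refinedLabel_inr {i : Fin m} (hi : i ≠ i₀) :
    refinedLabel D i₀ fK fD (.inr i) = some (fD ((decompGraph D).branchRoot i₀ i)) :=
  if_neg hi

lemma ne_inr_of_refinedLabel_eq_some {a : Fin k ⊕ Fin m} {b : β}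
    (h : refinedLabel D i₀ fK fD a = some b) : a ≠ .inr i₀ := by
  rintro rfl
  simp [refinedLabel] at h

lemma exists_refinedLabel_eq_some {a : Fin k ⊕ Fin m} (ha : a ≠ .inr i₀) :
    ∃ b, refinedLabel D i₀ fK fD a = some b := by
  rcases a with j | i
  · exact ⟨_, rfl⟩
  · exact ⟨_, refinedLabel_inr fun h => ha (h ▸ rfl)⟩

variable (hD : IsDecomposition G D) (hK : IsDecompositionOf (D i₀) K)

include hK in
lemma adj_of_mem_of_mem {x : V} {j : Fin k} {i : Fin m} (hxK : x ∈ (K j).verts)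
    (hxD : x ∈ (D i).verts) (hi : i ≠ i₀) : (decompGraph D).Adj i₀ i :=
  ⟨Ne.symm hi, x, (hK.le j).1 hxK, hxD⟩

include hD in
lemma branchRoot_eq_of_inter_nonempty {i i' : Fin m} (hi : i ≠ i₀) (hi' : i' ≠ i₀)
    (h : ((D i).verts ∩ (D i').verts).Nonempty) :
    (decompGraph D).branchRoot i₀ i = (decompGraph D).branchRoot i₀ i' := by
  rcases eq_or_ne i i' with rfl | hii'
  · rfl
  · exact hD.isTree.branchRoot_congr
      (deleteIncidenceSet_adj.mpr ⟨decompGraph_adj.mpr ⟨hii', h⟩, hi, hi'⟩).reachable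

include hD hK in
lemma refinedPieces_inter_subsingleton {a a' : Fin k ⊕ Fin m} (ha : a ≠ .inr i₀)
    (ha' : a' ≠ .inr i₀) (haa' : a ≠ a') :
    ((refinedPieces K D a).verts ∩ (refinedPieces K D a').verts).Subsingleton := by
  have hKD : ∀ j i, i ≠ i₀ → ((K j).verts ∩ (D i).verts).Subsingleton := fun j i hi =>
    (hD.verts_inter_subsingleton (Ne.symm hi)).anti (Set.inter_subset_inter_left _ (hK.le j).1)
  rcases a with j | i <;> rcases a' with j' | i'
  · exact hK.verts_inter_subsingleton fun h => haa' (h ▸ rfl)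
  · exact hKD j i' fun h => ha' (h ▸ rfl)
  · exact Set.inter_comm _ _ ▸ hKD j' i fun h => ha (h ▸ rfl)
  · exact hD.verts_inter_subsingleton fun h => haa' (h ▸ rfl)

include hD hK in
lemma refinedPieces_edgeSet_inter {a a' : Fin k ⊕ Fin m} (ha : a ≠ .inr i₀)
    (ha' : a' ≠ .inr i₀) (haa' : a ≠ a') :
    (refinedPieces K D a).edgeSet ∩ (refinedPieces K D a').edgeSet = ∅ := by
  have hKD : ∀ j i, i ≠ i₀ → (K j).edgeSet ∩ (D i).edgeSet = ∅ := fun j i hi =>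
    Set.subset_eq_empty (Set.inter_subset_inter_left _ (Subgraph.edgeSet_mono (hK.le j)))
      (hD.edgeSet_inter_eq_empty (Ne.symm hi))
  rcases a with j | i <;> rcases a' with j' | i'
  · exact hK.edgeSet_inter_eq_empty fun h => haa' (h ▸ rfl)
  · exact hKD j i' fun h => ha' (h ▸ rfl)
  · exact Set.inter_comm _ _ ▸ hKD j' i fun h => ha (h ▸ rfl)
  · exact hD.edgeSet_inter_eq_empty fun h => haa' (h ▸ rfl)

include hD hK in
lemma exists_refinedPieces_mem_verts (x : V) :
    ∃ a, a ≠ .inr i₀ ∧ x ∈ (refinedPieces K D a).verts := by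
  have hx : x ∈ ⋃ i, (D i).verts := hD.iUnion_verts ▸ Set.mem_univ x
  obtain ⟨i, hi⟩ := Set.mem_iUnion.mp hx
  rcases eq_or_ne i i₀ with rfl | hne
  · obtain ⟨j, hj⟩ := Set.mem_iUnion.mp (hK.iUnion_verts ▸ hi : x ∈ ⋃ j, (K j).verts)
    exact ⟨.inl j, Sum.inl_ne_inr, hj⟩
  · exact ⟨.inr i, fun h => hne (Sum.inr_injective h), hi⟩

include hD hK in
lemma exists_refinedPieces_mem_edgeSet {s : Sym2 V} (hs : s ∈ G.edgeSet) :
    ∃ a, a ≠ .inr i₀ ∧ s ∈ (refinedPieces K D a).edgeSet := by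
  have hs' : s ∈ ⋃ i, (D i).edgeSet := hD.iUnion_edgeSet ▸ hs
  obtain ⟨i, hi⟩ := Set.mem_iUnion.mp hs'
  rcases eq_or_ne i i₀ with rfl | hne
  · obtain ⟨j, hj⟩ := Set.mem_iUnion.mp (hK.iUnion_edgeSet ▸ hi : s ∈ ⋃ j, (K j).edgeSet)
    exact ⟨.inl j, Sum.inl_ne_inr, hj⟩
  · exact ⟨.inr i, fun h => hne (Sum.inr_injective h), hi⟩

lemma refinedLabel_comp_anchor {att : Fin m → Fin k} {a : Fin k ⊕ Fin m} {b : β} :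
    refinedLabel D i₀ fK (fK ∘ att) a = some b ↔ a ≠ .inr i₀ ∧ fK (anchor D i₀ att a) = b := by
  rcases a with j | i
  · simp [anchor]
  · by_cases hi : i = i₀
    · simp [refinedLabel, hi]
    · simp [refinedLabel_inr hi, anchor, hi]

include hD hK

lemma refinedPieces_edgeSet_inter_of_label_ne {a a' : Fin k ⊕ Fin m} {b b' : β}
    (ha : refinedLabel D i₀ fK fD a = some b) (ha' : refinedLabel D i₀ fK fD a' = some b')
    (hbb' : b ≠ b') : (refinedPieces K D a).edgeSet ∩ (refinedPieces K D a').edgeSet = ∅ :=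
  refinedPieces_edgeSet_inter hD hK (ne_inr_of_refinedLabel_eq_some ha)
    (ne_inr_of_refinedLabel_eq_some ha') (by rintro rfl; exact hbb' (Option.some_inj.mp
      (ha.symm.trans ha')))

lemma exists_refinedLabel_mem_verts (x : V) :
    ∃ a b, refinedLabel D i₀ fK fD a = some b ∧ x ∈ (refinedPieces K D a).verts := by
  obtain ⟨a, ha, hx⟩ := exists_refinedPieces_mem_verts hD hK x
  obtain ⟨b, hb⟩ := exists_refinedLabel_eq_some (fK := fK) (fD := fD) ha
  exact ⟨a, b, hb, hx⟩

lemma exists_refinedLabel_mem_edgeSet {s : Sym2 V} (hs : s ∈ G.edgeSet) :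
    ∃ a b, refinedLabel D i₀ fK fD a = some b ∧ s ∈ (refinedPieces K D a).edgeSet := by
  obtain ⟨a, ha, hsa⟩ := exists_refinedPieces_mem_edgeSet hD hK hs
  obtain ⟨b, hb⟩ := exists_refinedLabel_eq_some (fK := fK) (fD := fD) ha
  exact ⟨a, b, hb, hsa⟩

lemma refinedPieces_edgeSet_nonempty (a : Fin k ⊕ Fin m) :
    (refinedPieces K D a).edgeSet.Nonempty := by
  rcases a with j | i
  exacts [hK.edgeSet_nonempty j, hD.edgeSet_nonempty i]

lemma refinedPieces_connected (a : Fin k ⊕ Fin m) : (refinedPieces K D a).Connected := by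
  rcases a with j | i
  exacts [hK.connected j, hD.connected i]

end Refinement

section Attachment

open SimpleGraph Relation

variable {V β : Type*} {G : SimpleGraph V} {m k : ℕ} {D : Fin m → G.Subgraph} {i₀ : Fin m}
  {K : Fin k → G.Subgraph} {fK : Fin k → β} {fD : Fin m → β} {att : Fin m → Fin k}
  (hD : IsDecomposition G D) (hK : IsDecompositionOf (D i₀) K)

include hK in
/-- Avoiding `K j₀` whenever possible keeps a branch that is only anchored at `K j₀` from touching
any other member of `K`. -/
lemma exists_attachment (j₀ : Fin k) :
    ∃ att : Fin m → Fin k,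
      (∀ w, (decompGraph D).Adj i₀ w → ((K (att w)).verts ∩ (D w).verts).Nonempty) ∧
      ∀ w j, (decompGraph D).Adj i₀ w → att w = j₀ →
        ((K j).verts ∩ (D w).verts).Nonempty → j = j₀ := by
  classical
  refine ⟨fun w => if h : ∃ j, j ≠ j₀ ∧ ((K j).verts ∩ (D w).verts).Nonempty then h.choose
    else j₀, fun w hw => ?_, fun w j _ hw hj => ?_⟩
  · dsimp only
    split_ifs with h
    · exact h.choose_spec.2
    · obtain ⟨x, hx₀, hxw⟩ := hw.2
      obtain ⟨j, hj⟩ := Set.mem_iUnion.mp (hK.iUnion_verts ▸ hx₀ : x ∈ ⋃ j, (K j).verts)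
      by_cases hj₀ : j = j₀
      · exact ⟨x, hj₀ ▸ hj, hxw⟩
      · exact absurd ⟨j, hj₀, x, hj, hxw⟩ h
  · by_contra hne
    have h : ∃ j, j ≠ j₀ ∧ ((K j).verts ∩ (D w).verts).Nonempty := ⟨j, hne, hj⟩
    simp only [dif_pos h] at hw
    exact h.choose_spec.1 hw

variable (hatt : ∀ w, (decompGraph D).Adj i₀ w → ((K (att w)).verts ∩ (D w).verts).Nonempty)

include hD hK hatt in
lemma mem_anchor_of_mem_of_mem {a a' : Fin k ⊕ Fin m} (ha : a ≠ .inr i₀) (ha' : a' ≠ .inr i₀)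
    {x : V} (hx : x ∈ (refinedPieces K D a).verts) (hx' : x ∈ (refinedPieces K D a').verts)
    (hne : anchor D i₀ att a ≠ anchor D i₀ att a') : x ∈ (K (anchor D i₀ att a)).verts := by
  rcases a with j | i
  · exact hx
  have hi : i ≠ i₀ := fun h => ha (h ▸ rfl)
  rcases a' with j' | i'
  · have hadj := adj_of_mem_of_mem hK hx' hx hi
    obtain ⟨y, hyK, hyD⟩ := hatt i hadj
    have hxy : x = y := hD.verts_inter_subsingleton hadj.ne
      ⟨(hK.le j').1 hx', hx⟩ ⟨(hK.le _).1 hyK, hyD⟩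
    simpa [anchor, hD.isTree.branchRoot_of_adj hadj, hxy] using hyK
  · have hi' : i' ≠ i₀ := fun h => ha' (h ▸ rfl)
    simp [anchor, branchRoot_eq_of_inter_nonempty hD hi hi' ⟨x, hx, hx'⟩] at hne

include hD in
lemma reflTransGen_linked_inr {i : Fin m} (hi : i ≠ i₀) :
    ReflTransGen (Linked (refinedPieces K D) (refinedLabel D i₀ fK fD)) (.inr i)
      (.inr ((decompGraph D).branchRoot i₀ i)) := by
  refine reflTransGen_linked_of_reachable Sum.inr (fun x y hxy => ?_)
    (hD.isTree.reachable_branchRoot hi)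
  obtain ⟨hxy', hx, hy⟩ := deleteIncidenceSet_adj.mp hxy
  refine ⟨?_, hxy'.2⟩
  rw [refinedLabel_inr hx, refinedLabel_inr hy, hD.isTree.branchRoot_congr hxy.reachable]

include hD hatt in
lemma reflTransGen_linked_inr_anchor {i : Fin m} (hi : i ≠ i₀)
    (h : fD ((decompGraph D).branchRoot i₀ i) = fK (anchor D i₀ att (.inr i))) :
    ReflTransGen (Linked (refinedPieces K D) (refinedLabel D i₀ fK fD)) (.inr i)
      (.inl (anchor D i₀ att (.inr i))) := by
  refine (reflTransGen_linked_inr hD hi).tail ⟨?_, ?_⟩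
  · rw [refinedLabel_inl, refinedLabel_inr (mt hD.isTree.branchRoot_eq_self_iff.mp hi),
      hD.isTree.branchRoot_of_adj (hD.isTree.adj_branchRoot hi), h]
  · rw [Set.inter_comm]
    exact hatt _ (hD.isTree.adj_branchRoot hi)

lemma reflTransGen_linked_inl {H : SimpleGraph (Fin k)} (hH : H ≤ decompGraph K)
    (hfK : ∀ ⦃j j'⦄, H.Adj j j' → fK j = fK j') {j j' : Fin k} (h : H.Reachable j j') :
    ReflTransGen (Linked (refinedPieces K D) (refinedLabel D i₀ fK fD)) (.inl j) (.inl j') :=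
  reflTransGen_linked_of_reachable Sum.inl
    (fun _ _ hxy => ⟨by simp [hfK hxy], (hH hxy).2⟩) h

end Attachment

section OneMember

open SimpleGraph Relation

variable {V : Type*} {G : SimpleGraph V} {m k : ℕ} {D : Fin m → G.Subgraph} {i₀ : Fin m}
  {K : Fin k → G.Subgraph} {j₀ : Fin k} {att : Fin m → Fin k}

/-- Each group is labelled by one of its own pieces: the branch root at `j₀` of the anchor or, for
a branch of `D` anchored at `K j₀`, the root of that branch. -/
noncomputable def starLabel (D : Fin m → G.Subgraph) (i₀ : Fin m) (K : Fin k → G.Subgraph)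
    (j₀ : Fin k) (att : Fin m → Fin k) : Fin k ⊕ Fin m → Option (Fin k ⊕ Fin m) :=
  refinedLabel D i₀ (fun j => .inl ((decompGraph K).branchRoot j₀ j))
    (fun w => if att w = j₀ then .inr w else .inl ((decompGraph K).branchRoot j₀ (att w)))

variable (hD : IsDecomposition G D) (hK : IsDecompositionOf (D i₀) K)
  (hatt : ∀ w, (decompGraph D).Adj i₀ w → ((K (att w)).verts ∩ (D w).verts).Nonempty)
  (hatt₀ : ∀ w j, (decompGraph D).Adj i₀ w → att w = j₀ →
    ((K j).verts ∩ (D w).verts).Nonempty → j = j₀)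

lemma starLabel_of_anchor_ne {a : Fin k ⊕ Fin m} (ha : a ≠ .inr i₀)
    (hπ : anchor D i₀ att a ≠ j₀) :
    starLabel D i₀ K j₀ att a =
      some (.inl ((decompGraph K).branchRoot j₀ (anchor D i₀ att a))) := by
  rcases a with j | i
  · rfl
  · have hi : i ≠ i₀ := fun h => ha (h ▸ rfl)
    simp only [anchor, Sum.elim_inr, Function.comp_apply] at hπ ⊢
    rw [starLabel, refinedLabel_inr hi, if_neg hπ]

lemma starLabel_of_anchor_eq {a b : Fin k ⊕ Fin m} (hab : starLabel D i₀ K j₀ att a = some b)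
    (hb : b ≠ .inl j₀) (hπ : anchor D i₀ att a = j₀) :
    ∃ i, a = .inr i ∧ i ≠ i₀ ∧ att ((decompGraph D).branchRoot i₀ i) = j₀ ∧
      b = .inr ((decompGraph D).branchRoot i₀ i) := by
  rcases a with j | i
  · simp only [anchor, Sum.elim_inl, id] at hπ
    subst hπ
    simp [starLabel, branchRoot_self] at hab
    exact absurd hab.symm hb
  · have ha := ne_inr_of_refinedLabel_eq_some hab
    have hi : i ≠ i₀ := fun h => ha (h ▸ rfl)
    simp only [anchor, Sum.elim_inr, Function.comp_apply] at hπ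
    rw [starLabel, refinedLabel_inr hi, if_pos hπ] at hab
    exact ⟨i, rfl, hi, hπ, (Option.some_inj.mp hab).symm⟩

include hD hK in
lemma starLabel_self {a b : Fin k ⊕ Fin m} (hab : starLabel D i₀ K j₀ att a = some b) :
    starLabel D i₀ K j₀ att b = some b := by
  have ha := ne_inr_of_refinedLabel_eq_some hab
  by_cases hπ : anchor D i₀ att a = j₀
  · by_cases hb : b = .inl j₀
    · subst hb
      simp [starLabel, branchRoot_self]
    obtain ⟨i, rfl, hi, hatt_i, rfl⟩ := starLabel_of_anchor_eq hab hb hπ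
    have hw := hD.isTree.adj_branchRoot hi
    rw [starLabel, refinedLabel_inr hw.ne', hD.isTree.branchRoot_of_adj hw, if_pos hatt_i]
  · rw [starLabel_of_anchor_ne ha hπ, Option.some_inj] at hab
    subst hab
    simp [starLabel, hK.isTree.branchRoot_branchRoot]

include hK in
lemma starLabel_eq_inl_iff {a : Fin k ⊕ Fin m} :
    starLabel D i₀ K j₀ att a = some (.inl j₀) ↔ a = .inl j₀ := by
  refine ⟨fun h => ?_, fun h => by subst h; simp [starLabel, branchRoot_self]⟩
  have ha := ne_inr_of_refinedLabel_eq_some h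
  by_cases hπ : anchor D i₀ att a = j₀
  · rcases a with j | i
    · exact congrArg _ hπ
    · have hi : i ≠ i₀ := fun h' => ha (h' ▸ rfl)
      simp only [anchor, Sum.elim_inr, Function.comp_apply] at hπ
      simp [starLabel, refinedLabel_inr hi, hπ] at h
  · rw [starLabel_of_anchor_ne ha hπ] at h
    exact absurd (hK.isTree.branchRoot_eq_self_iff.mp (Sum.inl_injective (Option.some_inj.mp h))) hπ

include hD hK hatt hatt₀ in
lemma starLabel_eq_of_mem_of_mem {a a' b b' : Fin k ⊕ Fin m}
    (hab : starLabel D i₀ K j₀ att a = some b) (hab' : starLabel D i₀ K j₀ att a' = some b')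
    (hb : b ≠ .inl j₀) (hb' : b' ≠ .inl j₀) {x : V} (hx : x ∈ (refinedPieces K D a).verts)
    (hx' : x ∈ (refinedPieces K D a').verts) : b = b' := by
  have ha := ne_inr_of_refinedLabel_eq_some hab
  have ha' := ne_inr_of_refinedLabel_eq_some hab'
  have hanchor₀ : ∀ {a a' b}, starLabel D i₀ K j₀ att a = some b → b ≠ .inl j₀ → a' ≠ .inr i₀ →
      x ∈ (refinedPieces K D a).verts → x ∈ (refinedPieces K D a').verts →
      anchor D i₀ att a = j₀ → anchor D i₀ att a' = j₀ := by
    intro a a' b hab hb ha' hx hx' hπ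
    obtain ⟨i, rfl, hi, hatt_i, rfl⟩ := starLabel_of_anchor_eq hab hb hπ
    by_contra hπ'
    have hxK := mem_anchor_of_mem_of_mem hD hK hatt ha' (fun h => hi (Sum.inr_injective h))
      hx' hx (hπ ▸ hπ')
    have hadj := adj_of_mem_of_mem hK hxK hx hi
    rw [hD.isTree.branchRoot_of_adj hadj] at hatt_i
    exact hπ' (hatt₀ i _ hadj hatt_i ⟨x, hxK, hx⟩)
  by_cases hπ : anchor D i₀ att a = j₀
  · obtain ⟨i, rfl, hi, -, rfl⟩ := starLabel_of_anchor_eq hab hb hπ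
    obtain ⟨i', rfl, hi', -, rfl⟩ := starLabel_of_anchor_eq hab' hb' (hanchor₀ hab hb ha' hx hx' hπ)
    rw [branchRoot_eq_of_inter_nonempty hD hi hi' ⟨x, hx, hx'⟩]
  · have hπ' : anchor D i₀ att a' ≠ j₀ := fun h => hπ (hanchor₀ hab' hb' ha hx' hx h)
    rw [starLabel_of_anchor_ne ha hπ, Option.some_inj] at hab
    rw [starLabel_of_anchor_ne ha' hπ', Option.some_inj] at hab'
    subst hab hab'
    by_cases hππ : anchor D i₀ att a = anchor D i₀ att a'
    · rw [hππ]
    · have hxK := mem_anchor_of_mem_of_mem hD hK hatt ha ha' hx hx' hππ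
      have hxK' := mem_anchor_of_mem_of_mem hD hK hatt ha' ha hx' hx (Ne.symm hππ)
      exact congrArg _ (hK.isTree.branchRoot_congr (deleteIncidenceSet_adj.mpr
        ⟨decompGraph_adj.mpr ⟨hππ, x, hxK, hxK'⟩, hπ, hπ'⟩).reachable)

include hD hK hatt in
lemma mem_of_mem_starLabel {a b : Fin k ⊕ Fin m} (hab : starLabel D i₀ K j₀ att a = some b)
    (hb : b ≠ .inl j₀) {x : V} (hx₀ : x ∈ (K j₀).verts) (hx : x ∈ (refinedPieces K D a).verts) :
    x ∈ (refinedPieces K D b).verts := by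
  have ha := ne_inr_of_refinedLabel_eq_some hab
  by_cases hπ : anchor D i₀ att a = j₀
  · obtain ⟨i, rfl, hi, -, rfl⟩ := starLabel_of_anchor_eq hab hb hπ
    have hadj := adj_of_mem_of_mem hK hx₀ hx hi
    simpa [refinedPieces, hD.isTree.branchRoot_of_adj hadj] using hx
  · have hxK := mem_anchor_of_mem_of_mem hD hK hatt ha Sum.inl_ne_inr hx hx₀ hπ
    have hadj : (decompGraph K).Adj j₀ (anchor D i₀ att a) := ⟨Ne.symm hπ, x, hx₀, hxK⟩
    rw [starLabel_of_anchor_ne ha hπ, hK.isTree.branchRoot_of_adj hadj, Option.some_inj] at hab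
    exact hab ▸ hxK

include hD hK hatt in
lemma inter_starLabel_nonempty {b : Fin k ⊕ Fin m} (hbb : starLabel D i₀ K j₀ att b = some b)
    (hb : b ≠ .inl j₀) : ((K j₀).verts ∩ (refinedPieces K D b).verts).Nonempty := by
  by_cases hπ : anchor D i₀ att b = j₀
  · obtain ⟨i, rfl, hi, hatt_i, hbi⟩ := starLabel_of_anchor_eq hbb hb hπ
    have hroot : (decompGraph D).branchRoot i₀ i = i := (Sum.inr_injective hbi).symm
    have hadj := hD.isTree.adj_branchRoot hi
    rw [hroot] at hadj hatt_i
    exact hatt_i ▸ hatt i hadj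
  · rw [starLabel_of_anchor_ne (ne_inr_of_refinedLabel_eq_some hbb) hπ, Option.some_inj] at hbb
    rw [← hbb]
    exact (hK.isTree.adj_branchRoot hπ).2

include hD hK hatt in
lemma connected_groupSup_starLabel {b : Fin k ⊕ Fin m}
    (hbb : starLabel D i₀ K j₀ att b = some b) (hb : b ≠ .inl j₀) :
    (groupSup (refinedPieces K D) (starLabel D i₀ K j₀ att) b).Connected := by
  refine connected_groupSup (refinedPieces_connected hD hK) hbb fun a hab => ?_
  by_cases hπ : anchor D i₀ att a = j₀
  · obtain ⟨i, rfl, hi, -, rfl⟩ := starLabel_of_anchor_eq hab hb hπ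
    exact reflTransGen_linked_inr hD hi
  have ha := ne_inr_of_refinedLabel_eq_some hab
  rw [starLabel_of_anchor_ne ha hπ, Option.some_inj] at hab
  subst hab
  have hK_chain := reflTransGen_linked_inl (D := D) (i₀ := i₀)
    (fD := fun w => if att w = j₀ then .inr w else .inl ((decompGraph K).branchRoot j₀ (att w)))
    (deleteIncidenceSet_le _ j₀)
    (fun j j' h => congrArg Sum.inl (hK.isTree.branchRoot_congr h.reachable))
    (hK.isTree.reachable_branchRoot hπ)
  rcases a with j | i
  · exact hK_chain
  · exact (reflTransGen_linked_inr_anchor hD hatt (fun h => ha (h ▸ rfl))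
      (if_neg hπ)).trans hK_chain

include hD hK hatt in
lemma inter_groupSup_starLabel_subset {b : Fin k ⊕ Fin m} (hb : b ≠ .inl j₀) :
    (K j₀).verts ∩ (groupSup (refinedPieces K D) (starLabel D i₀ K j₀ att) b).verts ⊆
      (K j₀).verts ∩ (refinedPieces K D b).verts := fun x ⟨hx₀, hx⟩ => by
  obtain ⟨a, hab, hxa⟩ := mem_groupSup_verts.mp hx
  exact ⟨hx₀, mem_of_mem_starLabel hD hK hatt hab hb hx₀ hxa⟩

include hD hK hatt hatt₀ in
lemma groupSup_starLabel_inter_eq_empty {b b' : Fin k ⊕ Fin m} (hb : b ≠ .inl j₀)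
    (hb' : b' ≠ .inl j₀) (hbb' : b ≠ b') :
    (groupSup (refinedPieces K D) (starLabel D i₀ K j₀ att) b).verts ∩
      (groupSup (refinedPieces K D) (starLabel D i₀ K j₀ att) b').verts = ∅ := by
  refine Set.eq_empty_iff_forall_notMem.mpr fun x ⟨hx, hx'⟩ => hbb' ?_
  obtain ⟨a, hab, hxa⟩ := mem_groupSup_verts.mp hx
  obtain ⟨a', hab', hxa'⟩ := mem_groupSup_verts.mp hx'
  exact starLabel_eq_of_mem_of_mem hD hK hatt hatt₀ hab hab' hb hb' hxa hxa'

include hK in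
lemma not_mem_groupSup_starLabel {v : V} (hvK : ∀ j, j ≠ j₀ → v ∉ (K j).verts)
    (hvD : ∀ i, i ≠ i₀ → v ∉ (D i).verts) {b : Fin k ⊕ Fin m} (hb : b ≠ .inl j₀) :
    v ∉ (groupSup (refinedPieces K D) (starLabel D i₀ K j₀ att) b).verts := fun hv => by
  obtain ⟨a, hab, hva⟩ := mem_groupSup_verts.mp hv
  have ha : a ≠ .inl j₀ := by
    rintro rfl
    exact hb (Option.some_inj.mp (hab.symm.trans ((starLabel_eq_inl_iff hK).mpr rfl)))
  rcases a with j | i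
  · exact hvK j (fun h => ha (h ▸ rfl)) hva
  · exact hvD i (fun h => ne_inr_of_refinedLabel_eq_some hab (h ▸ rfl)) hva

end OneMember

/-- The member `K j₀` together with the components of the rest of the refined family hanging from
it form a star-shaped decomposition. -/
theorem exists_decomposition_cons_of_mem {V : Type*} {G : SimpleGraph V} {m k : ℕ}
    {D : Fin m → G.Subgraph} {i₀ : Fin m} {K : Fin k → G.Subgraph}
    (hD : IsDecomposition G D) (hK : IsDecompositionOf (D i₀) K) {j₀ : Fin k} {v : V}
    (hvK : ∀ j, j ≠ j₀ → v ∉ (K j).verts) (hvD : ∀ i, i ≠ i₀ → v ∉ (D i).verts) :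
    ∃ (n : ℕ) (L : Fin n → G.Subgraph),
      IsDecomposition G (Fin.cons (K j₀) L) ∧ ∀ t, v ∉ (L t).verts := by
  classical
  obtain ⟨att, hatt, hatt₀⟩ := exists_attachment hK j₀
  have hself : ∀ b, some b ∈ Set.range (starLabel D i₀ K j₀ att) →
      starLabel D i₀ K j₀ att b = some b := fun b ⟨_, hab⟩ => starLabel_self hD hK hab
  have hn : ∃ b, b ≠ .inl j₀ ∧ some b ∈ Set.range (starLabel D i₀ K j₀ att) := by
    have : Nontrivial (Fin k) := Fin.nontrivial_iff_two_le.mpr hK.two_le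
    obtain ⟨j, hj⟩ := exists_ne j₀
    exact ⟨_, fun h => hj (hK.isTree.branchRoot_eq_self_iff.mp (Sum.inl_injective h)), .inl j, rfl⟩
  obtain ⟨n, L, hdec, hL⟩ := exists_isDecomposition_cons_groupSup (P := refinedPieces K D)
    (a₀ := .inl j₀) (fun _ => starLabel_eq_inl_iff hK) hn (refinedPieces_edgeSet_nonempty hD hK)
    (fun _ _ _ _ => refinedPieces_edgeSet_inter_of_label_ne hD hK)
    (exists_refinedLabel_mem_verts hD hK) (fun _ => exists_refinedLabel_mem_edgeSet hD hK)
    (hK.connected j₀) (fun b hb hbS => connected_groupSup_starLabel hD hK hatt (hself b hbS) hb)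
    (fun b hb hbS => (inter_starLabel_nonempty hD hK hatt (hself b hbS) hb).mono
      (Set.inter_subset_inter_right _ (le_groupSup (hself b hbS)).1))
    (fun b hb hbS => (refinedPieces_inter_subsingleton hD hK Sum.inl_ne_inr
      (ne_inr_of_refinedLabel_eq_some (hself b hbS)) hb.symm).anti
      (inter_groupSup_starLabel_subset hD hK hatt hb))
    (fun b b' hb hb' => groupSup_starLabel_inter_eq_empty hD hK hatt hatt₀ hb hb')
  refine ⟨n, L, hdec, fun t => ?_⟩
  obtain ⟨b, hb, hLt⟩ := hL t
  exact hLt ▸ not_mem_groupSup_starLabel hK hvK hvD hb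

section TwoMembers

open SimpleGraph Relation

variable {V : Type*} {G : SimpleGraph V} {m k : ℕ} {D : Fin m → G.Subgraph} {i₀ : Fin m}
  {K : Fin k → G.Subgraph} {j₁ j₂ : Fin k} {att : Fin m → Fin k}

noncomputable def sideLabel (D : Fin m → G.Subgraph) (i₀ : Fin m) (K : Fin k → G.Subgraph)
    (j₁ j₂ : Fin k) (att : Fin m → Fin k) : Fin k ⊕ Fin m → Option Bool :=
  refinedLabel D i₀ ((decompGraph K).edgeSide j₁ j₂) ((decompGraph K).edgeSide j₁ j₂ ∘ att)

variable (hD : IsDecomposition G D) (hK : IsDecompositionOf (D i₀) K)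
  (hatt : ∀ w, (decompGraph D).Adj i₀ w → ((K (att w)).verts ∩ (D w).verts).Nonempty)

include hD hK hatt in
lemma reflTransGen_linked_sideLabel {a : Fin k ⊕ Fin m} {b : Bool}
    (hab : sideLabel D i₀ K j₁ j₂ att a = some b) :
    ReflTransGen (Linked (refinedPieces K D) (sideLabel D i₀ K j₁ j₂ att)) a
      (.inl (cond b j₂ j₁)) := by
  obtain ⟨ha, rfl⟩ := refinedLabel_comp_anchor.mp hab
  have hK_chain := reflTransGen_linked_inl (D := D) (i₀ := i₀)
    (fD := (decompGraph K).edgeSide j₁ j₂ ∘ att) (deleteEdges_le _)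
    (fun _ _ => edgeSide_eq_of_adj)
    (hK.isTree.connected.reachable_edgeSide (u := j₁) (u' := j₂) (anchor D i₀ att a)).symm
  rcases a with j | i
  · exact hK_chain
  · exact (reflTransGen_linked_inr_anchor hD hatt (fun h => ha (h ▸ rfl)) rfl).trans hK_chain

include hD hK hatt in
lemma eq_of_mem_of_mem_sideLabel (hne : j₁ ≠ j₂) {v : V} (hv₁ : v ∈ (K j₁).verts)
    (hv₂ : v ∈ (K j₂).verts) {a a' : Fin k ⊕ Fin m} {b b' : Bool}
    (hab : sideLabel D i₀ K j₁ j₂ att a = some b) (hab' : sideLabel D i₀ K j₁ j₂ att a' = some b')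
    (hbb' : b ≠ b') {x : V} (hx : x ∈ (refinedPieces K D a).verts)
    (hx' : x ∈ (refinedPieces K D a').verts) : x = v := by
  obtain ⟨ha, rfl⟩ := refinedLabel_comp_anchor.mp hab
  obtain ⟨ha', rfl⟩ := refinedLabel_comp_anchor.mp hab'
  have hππ : anchor D i₀ att a ≠ anchor D i₀ att a' := fun h => hbb' (congrArg _ h)
  have hxa := mem_anchor_of_mem_of_mem hD hK hatt ha ha' hx hx' hππ
  have hxa' := mem_anchor_of_mem_of_mem hD hK hatt ha' ha hx' hx hππ.symm
  have hx₁₂ : x ∈ (K j₁).verts ∩ (K j₂).verts := by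
    have hedge := edge_eq_of_edgeSide_ne (decompGraph_adj.mpr ⟨hππ, x, hxa, hxa'⟩) hbb'
    rcases Sym2.eq_iff.mp hedge with ⟨h₁, h₂⟩ | ⟨h₁, h₂⟩
    · exact ⟨h₁ ▸ hxa, h₂ ▸ hxa'⟩
    · exact ⟨h₂ ▸ hxa', h₁ ▸ hxa⟩
  exact hK.verts_inter_subsingleton hne hx₁₂ ⟨hv₁, hv₂⟩

end TwoMembers

/-- Cutting the edge `s(j₁, j₂)` of the tree of `K` splits the refined pieces into two sides,
which meet only in the vertex shared by `K j₁` and `K j₂`. -/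
theorem exists_decomposition_two_of_mem_of_mem {V : Type*} {G : SimpleGraph V} {m k : ℕ}
    {D : Fin m → G.Subgraph} {i₀ : Fin m} {K : Fin k → G.Subgraph}
    (hD : IsDecomposition G D) (hK : IsDecompositionOf (D i₀) K) {j₁ j₂ : Fin k}
    (hne : j₁ ≠ j₂) {v : V} (hv₁ : v ∈ (K j₁).verts) (hv₂ : v ∈ (K j₂).verts) :
    ∃ L : Fin 2 → G.Subgraph, IsDecomposition G L ∧ ∀ t, v ∈ (L t).verts := by
  obtain ⟨att, hatt, -⟩ := exists_attachment hK j₁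
  set lab := sideLabel D i₀ K j₁ j₂ att
  set e : Fin 2 → Bool := ![false, true]
  have hlab₁ : lab (.inl j₁) = some (e 0) := by
    simp [lab, e, sideLabel, hK.isTree.isAcyclic.edgeSide_left ⟨hne, v, hv₁, hv₂⟩]
  have hlab₂ : lab (.inl j₂) = some (e 1) := by
    simp [lab, e, sideLabel, edgeSide_right]
  have hv : ∀ t, v ∈ (groupSup (refinedPieces K D) lab (e t)).verts := by
    intro t
    fin_cases t
    exacts [mem_groupSup_verts.mpr ⟨_, hlab₁, hv₁⟩, mem_groupSup_verts.mpr ⟨_, hlab₂, hv₂⟩]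
  refine ⟨_, isDecomposition_of_eq_groupSup (lab := lab) _ e (fun _ => rfl) (by decide) le_rfl
    (fun _ b _ => by cases b; exacts [⟨0, rfl⟩, ⟨1, rfl⟩])
    (fun t => by fin_cases t; exacts [⟨_, hlab₁⟩, ⟨_, hlab₂⟩])
    (refinedPieces_edgeSet_nonempty hD hK)
    (fun _ _ _ _ => refinedPieces_edgeSet_inter_of_label_ne hD hK)
    (exists_refinedLabel_mem_verts hD hK) (fun _ => exists_refinedLabel_mem_edgeSet hD hK)
    (fun t => ?_) (fun t t' htt' => ?_) (isTree_of_adj_zero_one ⟨by decide, v, hv 0, hv 1⟩), hv⟩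
  · fin_cases t
    exacts [connected_groupSup (refinedPieces_connected hD hK) hlab₁
        fun a h => reflTransGen_linked_sideLabel hD hK hatt h,
      connected_groupSup (refinedPieces_connected hD hK) hlab₂
        fun a h => reflTransGen_linked_sideLabel hD hK hatt h]
  · refine (Set.subsingleton_singleton (a := v)).anti fun x ⟨hx, hx'⟩ => ?_
    obtain ⟨a, ha, hxa⟩ := mem_groupSup_verts.mp hx
    obtain ⟨a', ha', hxa'⟩ := mem_groupSup_verts.mp hx'
    exact eq_of_mem_of_mem_sideLabel hD hK hatt hne hv₁ hv₂ ha ha'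
      ((by decide : Function.Injective e).ne htt') hxa hxa'

theorem decomposition_refine_general {V : Type*} (G : SimpleGraph V)
    {m : ℕ} (D : Fin m → G.Subgraph) (hD : IsDecomposition G D) (i₀ : Fin m)
    {k : ℕ} (K : Fin k → G.Subgraph) (hK : IsDecompositionOf (D i₀) K)
    (v : V)
    (hvD : ∀ i : Fin m, i ≠ i₀ → v ∉ (D i).verts) :
    (∀ j₀ : Fin k, v ∈ (K j₀).verts → (∀ j, j ≠ j₀ → v ∉ (K j).verts) →
      ∃ (m' : ℕ) (L : Fin m' → G.Subgraph),
        IsDecomposition G (Fin.cons (K j₀) L) ∧ ∀ i, v ∉ (L i).verts) ∧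
    ((∃ j₁ j₂ : Fin k, j₁ ≠ j₂ ∧ v ∈ (K j₁).verts ∧ v ∈ (K j₂).verts) →
      ∃ L : Fin 2 → G.Subgraph, IsDecomposition G L ∧ ∀ i, v ∈ (L i).verts) :=
  ⟨fun _ _ hvK => exists_decomposition_cons_of_mem hD hK hvK hvD,
    fun ⟨_, _, hne, hv₁, hv₂⟩ => exists_decomposition_two_of_mem_of_mem hD hK hne hv₁ hv₂⟩

/-- Lemma on refining decompositions: let `D` be a decomposition of a connected
non-atomic graph `G`, let `K` be a decomposition of the member `D i₀` (playing the role
of `G₁`), and let `v` be a vertex of `D i₀` belonging to no other member of `D`.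
If `v` belongs to exactly one member `K j₀` of `K`, then `G` has a decomposition
`{K j₀, L 0, …, L (m'-1)}` with `v` in no `L i`; and if `v` belongs to two members of
`K`, then `G` has a decomposition into two subgraphs both containing `v`. -/
theorem decomposition_refine {V : Type*} [Fintype V] (G : SimpleGraph V)
    (hconn : G.Connected) (hna : ¬ IsAtomicGraph G)
    {m : ℕ} (D : Fin m → G.Subgraph) (hD : IsDecomposition G D) (i₀ : Fin m)
    {k : ℕ} (K : Fin k → G.Subgraph) (hK : IsDecompositionOf (D i₀) K)
    (hk : 2 ≤ k) (v : V) (hv : v ∈ (D i₀).verts)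
    (hvD : ∀ i : Fin m, i ≠ i₀ → v ∉ (D i).verts) :
    (∀ j₀ : Fin k, v ∈ (K j₀).verts → (∀ j, j ≠ j₀ → v ∉ (K j).verts) →
      ∃ (m' : ℕ) (L : Fin m' → G.Subgraph),
        IsDecomposition G (Fin.cons (K j₀) L) ∧ ∀ i, v ∉ (L i).verts) ∧
    ((∃ j₁ j₂ : Fin k, j₁ ≠ j₂ ∧ v ∈ (K j₁).verts ∧ v ∈ (K j₂).verts) →
      ∃ L : Fin 2 → G.Subgraph, IsDecomposition G L ∧ ∀ i, v ∈ (L i).verts) :=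
  decomposition_refine_general G D hD i₀ K hK v hvD
end

section
/- Let v be a vertex of a connected non-atomic finite simple graph G. Then at least one of the following holds: (1) G admits a decomposition {L_1, L_2} into two subgraphs with v ∈ L_1 and v ∈ L_2; or (2) G admits a decomposition {K, L_1, …, L_n} such that K is atomic, v ∈ K, v ∉ L_i for every i, and every L_i shares a vertex with K (so the decomposition graph is a star with center K). -/
open SimpleGraph

/-!
Keep a star decomposition of `G`: a connected center `K ∋ v` and connected leaves, pairwise
vertex-disjoint, each meeting `K` in exactly one vertex. If `v` also lies in a leaf, merging all
other leaves into the center leaves two pieces through `v`. If `K` is atomic we are done.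
Otherwise `K` has a decomposition; cutting its tree at a piece containing `v` makes that piece the
center of a star of `K` (the leaves are the unions over the branches), and hanging each old leaf
on the new leaf containing its attachment vertex gives a star of `G` with a strictly smaller
center. Since `G` is finite, the descent stops.
-/

namespace SimpleGraph

variable {α : Type*} {T : SimpleGraph α} {a b c x y z : α}

def ReachableAvoiding (T : SimpleGraph α) (a x y : α) : Prop :=
  ∃ p : T.Walk x y, a ∉ p.support

namespace ReachableAvoiding

lemma ne (h : T.ReachableAvoiding a x y) : x ≠ a := by
  rintro rfl
  obtain ⟨p, hp⟩ := h
  exact hp p.start_mem_support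

lemma refl (hx : x ≠ a) : T.ReachableAvoiding a x x :=
  ⟨.nil, by simpa using hx.symm⟩

lemma symm (h : T.ReachableAvoiding a x y) : T.ReachableAvoiding a y x := by
  obtain ⟨p, hp⟩ := h
  exact ⟨p.reverse, by simpa using hp⟩

lemma trans (h : T.ReachableAvoiding a x y) (h' : T.ReachableAvoiding a y z) :
    T.ReachableAvoiding a x z := by
  obtain ⟨p, hp⟩ := h
  obtain ⟨q, hq⟩ := h'
  refine ⟨p.append q, fun ha => ?_⟩
  rcases (Walk.mem_support_append_iff p q).mp ha with ha | ha
  exacts [hp ha, hq ha]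

lemma of_adj (hxy : T.Adj x y) (hx : x ≠ a) (hy : y ≠ a) : T.ReachableAvoiding a x y :=
  ⟨hxy.toWalk, by simp [hx.symm, hy.symm]⟩

end ReachableAvoiding

lemma Connected.exists_adj_reachableAvoiding (hT : T.Connected) (hx : x ≠ a) :
    ∃ b, T.Adj a b ∧ T.ReachableAvoiding a x b := by
  obtain ⟨p⟩ := hT.preconnected x a
  induction p with
  | nil => exact absurd rfl hx
  | @cons x y a hxy q ih =>
    by_cases hy : y = a
    · subst hy
      exact ⟨x, hxy.symm, .refl hx⟩
    · obtain ⟨b, hab, hyb⟩ := ih hy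
      exact ⟨b, hab, (ReachableAvoiding.of_adj hxy hx hy).trans hyb⟩

/-- The edge `s(a, c)` is a bridge, so the walk `a → b ⇝ c`, which avoids `a` after its first
step, must begin with it. -/
lemma IsAcyclic.eq_of_reachableAvoiding (hT : T.IsAcyclic) (hb : T.Adj a b) (hc : T.Adj a c)
    (h : T.ReachableAvoiding a b c) : b = c := by
  obtain ⟨p, hp⟩ := h
  have hmem := isBridge_iff_forall_walk_mem_edges.mp
    (isAcyclic_iff_forall_adj_isBridge.mp hT hc) (.cons hb p)
  rw [Walk.edges_cons, List.mem_cons] at hmem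
  rcases hmem with h | h
  · rcases Sym2.eq_iff.mp h with ⟨-, rfl⟩ | ⟨rfl, rfl⟩
    · rfl
    · exact (hb.ne rfl).elim
  · exact absurd (p.fst_mem_support_of_mem_edges h) hp

end SimpleGraph

namespace SimpleGraph.Subgraph

variable {V ι : Type*} {G : SimpleGraph V}

lemma iSup_eq_iff {F : ι → G.Subgraph} {H : G.Subgraph} :
    ⨆ i, F i = H ↔ (⋃ i, (F i).verts) = H.verts ∧ (⋃ i, (F i).edgeSet) = H.edgeSet := by
  refine ⟨fun h => h ▸ ⟨verts_iSup.symm, (edgeSet_iSup F).symm⟩, fun ⟨hv, he⟩ => ?_⟩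
  ext x y
  · rw [verts_iSup, hv]
  · rw [← Subgraph.mem_edgeSet, ← Subgraph.mem_edgeSet, edgeSet_iSup, he]

lemma edgeSet_inter_eq_empty {H H' : G.Subgraph} (h : (H.verts ∩ H'.verts).Subsingleton) :
    H.edgeSet ∩ H'.edgeSet = ∅ := by
  refine Set.eq_empty_of_forall_notMem fun e ⟨he, he'⟩ => ?_
  induction e using Sym2.ind with
  | _ x y =>
  exact (H.adj_sub he).ne (h ⟨H.edge_vert he, H'.edge_vert he'⟩
    ⟨H.edge_vert he.symm, H'.edge_vert he'.symm⟩)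

lemma Connected.coe_reachable_of_le {F W : G.Subgraph} (hF : F.Connected) (hle : F ≤ W)
    {u w : V} (hu : u ∈ F.verts) (hw : w ∈ F.verts) :
    W.coe.Reachable ⟨u, hle.1 hu⟩ ⟨w, hle.1 hw⟩ :=
  (hF.preconnected ⟨u, hu⟩ ⟨w, hw⟩).map (inclusion hle)

lemma Connected.sup_iSup {K : G.Subgraph} {L : ι → G.Subgraph} (hK : K.Connected)
    (hL : ∀ i, (L i).Connected) (hLK : ∀ i, ((L i).verts ∩ K.verts).Nonempty) :
    (K ⊔ ⨆ i, L i).Connected := by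
  rw [Subgraph.connected_iff', connected_iff_exists_forall_reachable]
  obtain ⟨u₀, hu₀⟩ := hK.nonempty
  refine ⟨⟨u₀, Or.inl hu₀⟩, fun ⟨u, hu⟩ => ?_⟩
  simp only [verts_sup, verts_iSup, Set.mem_union, Set.mem_iUnion] at hu
  rcases hu with hu | ⟨i, hu⟩
  · exact hK.coe_reachable_of_le le_sup_left hu₀ hu
  · have hKL : (K ⊓ L i).verts.Nonempty := by rw [verts_inf, Set.inter_comm]; exact hLK i
    exact (connected_sup hK.preconnected (hL i).preconnected hKL).coe_reachable_of_le
      (sup_le_sup_left (le_iSup L i) K) (Or.inl hu₀) (Or.inr hu)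

end SimpleGraph.Subgraph

lemma iSup_fin_cons {α : Type*} [CompleteLattice α] {n : ℕ} (a : α) (f : Fin n → α) :
    ⨆ i, (Fin.cons a f : Fin (n + 1) → α) i = a ⊔ ⨆ i, f i :=
  le_antisymm (iSup_le (Fin.cases le_sup_left fun i => le_sup_of_le_right (le_iSup f i)))
    (sup_le (le_iSup_of_le 0 le_rfl) (iSup_le fun i => le_iSup_of_le i.succ le_rfl))

lemma Fin.pairwise_of_zero_succ {n : ℕ} {r : Fin (n + 1) → Fin (n + 1) → Prop}
    (hr : ∀ i j, r i j → r j i) (h0 : ∀ j : Fin n, r 0 j.succ)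
    (hs : Pairwise fun i j : Fin n => r i.succ j.succ) :
    Pairwise r := by
  intro i j hij
  induction i using Fin.cases <;> induction j using Fin.cases
  · exact absurd rfl hij
  · exact h0 _
  · exact hr _ _ (h0 _)
  · exact hs fun h => hij (h ▸ rfl)

section Decomposition

variable {V : Type*} {G : SimpleGraph V} {H : G.Subgraph} {n : ℕ} {D : Fin n → G.Subgraph}

lemma isDecompositionOf_iff :
    IsDecompositionOf H D ↔ 2 ≤ n ∧ (∀ i, (D i).Connected) ∧ (∀ i, (D i).edgeSet.Nonempty) ∧
      (Pairwise fun i j => ((D i).verts ∩ (D j).verts).Subsingleton) ∧ ⨆ i, D i = H ∧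
      (decompGraph D).IsTree := by
  constructor
  · rintro ⟨hn, -, hc, he, -, hs, hv, hE, hT⟩
    exact ⟨hn, hc, he, hs, Subgraph.iSup_eq_iff.mpr ⟨hv, hE⟩, hT⟩
  · rintro ⟨hn, hc, he, hs, hsup, hT⟩
    obtain ⟨hv, hE⟩ := Subgraph.iSup_eq_iff.mp hsup
    exact ⟨hn, fun i => hsup ▸ le_iSup D i, hc, he,
      fun i j hij => Subgraph.edgeSet_inter_eq_empty (hs hij), hs, hv, hE, hT⟩

lemma exists_isDecomposition_of_not_isAtomicGraph (hc : G.Connected)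
    (he : G.edgeSet.Nonempty) (h : ¬IsAtomicGraph G) :
    ∃ (n : ℕ) (D : Fin n → G.Subgraph), IsDecomposition G D := by
  simpa [IsAtomicGraph, hc, he] using h

lemma IsDecompositionOf.exists_mem_verts (hD : IsDecompositionOf H D) {v : V}
    (hv : v ∈ H.verts) : ∃ a, v ∈ (D a).verts := by
  obtain ⟨-, -, -, -, hsup, -⟩ := isDecompositionOf_iff.mp hD
  rw [← hsup, Subgraph.verts_iSup] at hv
  exact Set.mem_iUnion.mp hv

lemma IsDecomposition.coeSubgraph {D : Fin n → H.coe.Subgraph} (h : IsDecomposition H.coe D) :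
    IsDecompositionOf H fun i => Subgraph.coeSubgraph (D i) := by
  obtain ⟨hn, hc, he, hs, hsup, hT⟩ := isDecompositionOf_iff.mp h
  have hinter : ∀ i j, (Subgraph.coeSubgraph (D i)).verts ∩ (Subgraph.coeSubgraph (D j)).verts =
      Subtype.val '' ((D i).verts ∩ (D j).verts) := fun i j => by
    simp [Set.image_inter Subtype.val_injective]
  have hgc : GaloisConnection (Subgraph.map H.hom) (Subgraph.comap H.hom) :=
    fun _ _ => Subgraph.map_le_iff_le_comap _ _ _
  refine isDecompositionOf_iff.mpr ⟨hn, fun i => (hc i).coeSubgraph, fun i => ?_,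
    fun i j hij => ?_, ?_, ?_⟩
  · rw [Subgraph.edgeSet_map]
    exact (he i).image _
  · simpa only [hinter] using (hs hij).image _
  · rw [← hgc.l_iSup, hsup, Subgraph.map_hom_top]
  · convert hT using 1
    ext i j
    exact and_congr_right fun _ => by rw [hinter, Set.image_nonempty]

lemma IsDecompositionOf.nonempty_adj (hD : IsDecompositionOf H D) (a : Fin n) :
    Nonempty {b // (decompGraph D).Adj a b} := by
  obtain ⟨hn, -, -, -, -, hT⟩ := isDecompositionOf_iff.mp hD
  have : Nontrivial (Fin n) := Fin.nontrivial_iff_two_le.mpr hn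
  obtain ⟨x, hx⟩ := exists_ne a
  obtain ⟨b, hab, -⟩ := hT.connected.exists_adj_reachableAvoiding hx
  exact ⟨⟨b, hab⟩⟩

/-- The union of the pieces in the branch at `a` of the tree `decompGraph D` that contains `b`. -/
def branchSup (D : Fin n → G.Subgraph) (a b : Fin n) : G.Subgraph :=
  ⨆ x : {x // (decompGraph D).ReachableAvoiding a x b}, D x

variable {a b : Fin n}

lemma le_branchSup {x : Fin n} (hx : (decompGraph D).ReachableAvoiding a x b) :
    D x ≤ branchSup D a b :=
  le_iSup_of_le ⟨x, hx⟩ le_rfl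

lemma mem_verts_branchSup {u : V} :
    u ∈ (branchSup D a b).verts ↔
      ∃ x, (decompGraph D).ReachableAvoiding a x b ∧ u ∈ (D x).verts := by
  simp [branchSup, Subgraph.verts_iSup]

lemma reachable_branchSup (hD : ∀ i, (D i).Connected) {x y : Fin n}
    (p : (decompGraph D).Walk x y) (hp : a ∉ p.support)
    (hy : (decompGraph D).ReachableAvoiding a y b) {u u' : V} (hu : u ∈ (D x).verts)
    (hu' : u' ∈ (D y).verts) :
    (branchSup D a b).coe.Reachable ⟨u, (le_branchSup (ReachableAvoiding.trans ⟨p, hp⟩ hy)).1 hu⟩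
      ⟨u', (le_branchSup hy).1 hu'⟩ := by
  induction p generalizing u with
  | nil => exact (hD _).coe_reachable_of_le (le_branchSup hy) hu hu'
  | @cons x z y hxz q ih =>
    obtain ⟨t, htx, htz⟩ := hxz.2
    exact ((hD x).coe_reachable_of_le (le_branchSup (ReachableAvoiding.trans ⟨_, hp⟩ hy)) hu
      htx).trans (ih (fun h => hp (List.mem_cons_of_mem _ h)) hy htz hu')

lemma connected_branchSup (hD : ∀ i, (D i).Connected) (hb : b ≠ a) :
    (branchSup D a b).Connected := by
  obtain ⟨u₀, hu₀⟩ := (hD b).nonempty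
  rw [Subgraph.connected_iff', connected_iff_exists_forall_reachable]
  refine ⟨⟨u₀, (le_branchSup (.refl hb)).1 hu₀⟩, fun ⟨u, hu⟩ => ?_⟩
  obtain ⟨x, ⟨p, hp⟩, hux⟩ := mem_verts_branchSup.mp hu
  exact (reachable_branchSup hD p hp (.refl hb) hux hu₀).symm

end Decomposition

section Star

variable {V ι κ : Type*} {G : SimpleGraph V}

/-- A decomposition of `H` whose intersection graph is a star with center `K`; the leaf `L i`
meets `K` at the vertex `w i`. -/
structure IsStar (H K : G.Subgraph) (L : ι → G.Subgraph) (w : ι → V) : Prop where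
  sup_eq : K ⊔ ⨆ i, L i = H
  connected : K.Connected
  edgeSet_nonempty : K.edgeSet.Nonempty
  connected_leaf : ∀ i, (L i).Connected
  edgeSet_nonempty_leaf : ∀ i, (L i).edgeSet.Nonempty
  inter_eq : ∀ i, (L i).verts ∩ K.verts = {w i}
  pairwise_disjoint : Pairwise fun i j => Disjoint (L i).verts (L j).verts

namespace IsStar

variable {H K : G.Subgraph} {L : ι → G.Subgraph} {w : ι → V}

lemma le (h : IsStar H K L w) : K ≤ H := h.sup_eq ▸ le_sup_left

lemma le_of_leaf (h : IsStar H K L w) (i : ι) : L i ≤ H :=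
  h.sup_eq ▸ le_sup_of_le_right (le_iSup L i)

lemma mem_leaf (h : IsStar H K L w) (i : ι) : w i ∈ (L i).verts :=
  ((h.inter_eq i).symm ▸ rfl : w i ∈ (L i).verts ∩ K.verts).1

lemma mem_center (h : IsStar H K L w) (i : ι) : w i ∈ K.verts :=
  ((h.inter_eq i).symm ▸ rfl : w i ∈ (L i).verts ∩ K.verts).2

lemma inter_nonempty (h : IsStar H K L w) (i : ι) : ((L i).verts ∩ K.verts).Nonempty :=
  ⟨w i, h.mem_leaf i, h.mem_center i⟩

lemma eq_of_mem (h : IsStar H K L w) {i : ι} {u : V} (hL : u ∈ (L i).verts)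
    (hK : u ∈ K.verts) : u = w i :=
  (h.inter_eq i).subset ⟨hL, hK⟩

lemma lt [Nonempty ι] (h : IsStar H K L w) : K < H := by
  obtain ⟨i⟩ := ‹Nonempty ι›
  refine lt_of_le_of_ne h.le fun hKH => ?_
  obtain ⟨e, he⟩ := h.edgeSet_nonempty_leaf i
  have hsub : ((L i).verts ∩ K.verts).Subsingleton := h.inter_eq i ▸ Set.subsingleton_singleton
  have : e ∈ (L i).edgeSet ∩ K.edgeSet := ⟨he, hKH ▸ Subgraph.edgeSet_mono (h.le_of_leaf i) he⟩
  rwa [Subgraph.edgeSet_inter_eq_empty hsub] at this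

lemma comp_equiv (h : IsStar H K L w) (e : κ ≃ ι) : IsStar H K (L ∘ e) (w ∘ e) where
  sup_eq := by rw [← h.sup_eq, ← e.iSup_comp (g := L)]; rfl
  connected := h.connected
  edgeSet_nonempty := h.edgeSet_nonempty
  connected_leaf i := h.connected_leaf (e i)
  edgeSet_nonempty_leaf i := h.edgeSet_nonempty_leaf (e i)
  inter_eq i := h.inter_eq (e i)
  pairwise_disjoint := h.pairwise_disjoint.comp_of_injective e.injective

lemma isDecompositionOf {n : ℕ} [NeZero n] {L : Fin n → G.Subgraph} {w : Fin n → V}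
    (h : IsStar H K L w) : IsDecompositionOf H (Fin.cons K L) := by
  refine isDecompositionOf_iff.mpr ⟨Nat.succ_le_succ NeZero.one_le,
    Fin.cases h.connected h.connected_leaf, Fin.cases h.edgeSet_nonempty h.edgeSet_nonempty_leaf,
    Fin.pairwise_of_zero_succ (fun i j hij => by rwa [Set.inter_comm]) (fun j => ?_)
      (fun i j hij => ?_), (iSup_fin_cons K L).trans h.sup_eq, ?_⟩
  · show (K.verts ∩ (L j).verts).Subsingleton
    rw [Set.inter_comm, h.inter_eq j]
    exact Set.subsingleton_singleton
  · show ((L i).verts ∩ (L j).verts).Subsingleton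
    simp [(h.pairwise_disjoint hij).inter_eq]
  · convert isTree_starGraph (0 : Fin (n + 1))
    ext i j
    rw [starGraph_adj]
    refine and_congr_right fun hij => ?_
    revert i j
    refine Fin.pairwise_of_zero_succ (fun i j hij => by rwa [Set.inter_comm, or_comm])
      (fun j => ?_) (fun i j hij => ?_)
    · show (K.verts ∩ (L j).verts).Nonempty ↔ _
      simpa [Set.inter_comm] using h.inter_nonempty j
    · show ((L i).verts ∩ (L j).verts).Nonempty ↔ _
      simp [(h.pairwise_disjoint hij).inter_eq]

lemma merge (h : IsStar H K L w) (j : ι) :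
    IsStar H (K ⊔ ⨆ i : {i // i ≠ j}, L i) (fun _ : Fin 1 => L j) (fun _ => w j) where
  sup_eq := by
    rw [iSup_const, ← h.sup_eq, iSup_split_single L j, iSup_subtype', sup_right_comm,
      sup_assoc]
  connected := h.connected.sup_iSup (fun i => h.connected_leaf i) fun i => h.inter_nonempty i
  edgeSet_nonempty := h.edgeSet_nonempty.mono (Subgraph.edgeSet_mono le_sup_left)
  connected_leaf _ := h.connected_leaf j
  edgeSet_nonempty_leaf _ := h.edgeSet_nonempty_leaf j
  inter_eq _ := by
    have hdisj : ∀ i : {i // i ≠ j}, (L j).verts ∩ (L i).verts = ∅ :=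
      fun i => (h.pairwise_disjoint (Ne.symm i.2)).inter_eq
    simp only [Subgraph.verts_sup, Subgraph.verts_iSup, Set.inter_union_distrib_left,
      Set.inter_iUnion, hdisj, Set.iUnion_empty, Set.union_empty, h.inter_eq j]
  pairwise_disjoint a b hab := absurd (Subsingleton.elim a b) hab

lemma exists_two_pieces_of_mem (h : IsStar ⊤ K L w) {v : V} {j : ι} (hvK : v ∈ K.verts)
    (hvL : v ∈ (L j).verts) :
    ∃ P : Fin 2 → G.Subgraph, IsDecomposition G P ∧ ∀ i, v ∈ (P i).verts :=
  ⟨_, (h.merge j).isDecompositionOf, Fin.cases (Or.inl hvK) fun _ => hvL⟩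

lemma exists_cons_of_isAtomicGraph [Finite ι] [Nonempty ι] (h : IsStar ⊤ K L w) {v : V}
    (hK : IsAtomicGraph K.coe) (hvK : v ∈ K.verts) (hvL : ∀ i, v ∉ (L i).verts) :
    ∃ (n : ℕ) (K' : G.Subgraph) (L' : Fin n → G.Subgraph),
      IsDecomposition G (Fin.cons K' L') ∧ IsAtomicGraph K'.coe ∧ v ∈ K'.verts ∧
      ∀ i, v ∉ (L' i).verts ∧ ((L' i).verts ∩ K'.verts).Nonempty := by
  obtain ⟨n, ⟨e⟩⟩ := Finite.exists_equiv_fin ι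
  have : NeZero n := ⟨by rintro rfl; exact (e (Classical.arbitrary ι)).elim0⟩
  exact ⟨n, K, L ∘ e.symm, (h.comp_equiv e.symm).isDecompositionOf, hK, hvK,
    fun i => ⟨hvL _, h.inter_nonempty _⟩⟩

lemma disjoint_attach (h : IsStar H K L w) {A B : Set V} (hA : A ⊆ K.verts)
    (hB : B ⊆ K.verts) (hAB : Disjoint A B) :
    Disjoint (A ∪ ⋃ i : {i // w i ∈ A}, (L i).verts) (B ∪ ⋃ i : {i // w i ∈ B}, (L i).verts) := by
  refine Set.disjoint_left.mpr fun u hu hu' => ?_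
  simp only [Set.mem_union, Set.mem_iUnion, Subtype.exists, exists_prop] at hu hu'
  rcases hu with hu | ⟨i, hiA, hui⟩ <;> rcases hu' with hu' | ⟨j, hjB, huj⟩
  · exact hAB.ne_of_mem hu hu' rfl
  · exact hAB.ne_of_mem (h.eq_of_mem huj (hA hu) ▸ hu) hjB rfl
  · exact hAB.ne_of_mem hiA (h.eq_of_mem hui (hB hu') ▸ hu') rfl
  · obtain rfl : i = j := by_contra fun hij => (h.pairwise_disjoint hij).ne_of_mem hui huj rfl
    exact hAB.ne_of_mem hiA hjB rfl

end IsStar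

/-- Given leaves `L` of a star with center `K` and leaves `M` of a star of `K`, each `L i` moves
to the leaf `M c` containing its attachment vertex `w i`, if there is one, and otherwise stays a
leaf of its own. -/
def refineLeaves (L : ι → G.Subgraph) (w : ι → V) (M : κ → G.Subgraph) :
    κ ⊕ {i // ∀ c, w i ∉ (M c).verts} → G.Subgraph :=
  Sum.elim (fun c => M c ⊔ ⨆ i : {i // w i ∈ (M c).verts}, L i) fun i => L i

namespace IsStar

variable {H K K' : G.Subgraph} {L : ι → G.Subgraph} {w : ι → V} {M : κ → G.Subgraph}
  {w' : κ → V}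

lemma sup_refineLeaves (hL : IsStar H K L w) (hM : IsStar K K' M w') :
    K' ⊔ ⨆ j, refineLeaves L w M j = H := by
  refine le_antisymm (sup_le (hM.le.trans hL.le) (iSup_le ?_)) ?_
  · rintro (c | i)
    exacts [sup_le ((hM.le_of_leaf c).trans hL.le) (iSup_le fun i => hL.le_of_leaf i),
      hL.le_of_leaf i]
  rw [← hL.sup_eq, ← hM.sup_eq]
  refine sup_le (sup_le le_sup_left (iSup_le fun c =>
    le_sup_of_le_right (le_iSup_of_le (.inl c) le_sup_left))) (iSup_le fun i => ?_)
  by_cases hi : ∃ c, w i ∈ (M c).verts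
  · obtain ⟨c, hc⟩ := hi
    exact le_sup_of_le_right (le_iSup_of_le (.inl c) (le_sup_of_le_right
      (le_iSup_of_le (⟨i, hc⟩ : {i // w i ∈ (M c).verts}) le_rfl)))
  · exact le_sup_of_le_right (le_iSup_of_le (.inr ⟨i, not_exists.mp hi⟩) le_rfl)

lemma refineLeaves_inter_eq (hL : IsStar H K L w) (hM : IsStar K K' M w') :
    ∀ j, (refineLeaves L w M j).verts ∩ K'.verts =
      {Sum.elim w' (fun i : {i // ∀ c, w i ∉ (M c).verts} => w i) j} := by
  rintro (c | i)
  · rw [refineLeaves, Sum.elim_inl, Sum.elim_inl, ← hM.inter_eq c]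
    refine Set.Subset.antisymm (fun u ⟨hu, hu'⟩ => ⟨?_, hu'⟩)
      (Set.inter_subset_inter_left _ (le_sup_left : M c ≤ _).1)
    simp only [Subgraph.verts_sup, Subgraph.verts_iSup, Set.mem_union, Set.mem_iUnion] at hu
    rcases hu with hu | ⟨i, hu⟩
    exacts [hu, hL.eq_of_mem hu (hM.le.1 hu') ▸ i.2]
  · refine Set.Subset.antisymm (fun u ⟨hu, hu'⟩ => hL.eq_of_mem hu (hM.le.1 hu'))
      (Set.singleton_subset_iff.mpr ⟨hL.mem_leaf i, ?_⟩)
    have := hL.mem_center i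
    rw [← hM.sup_eq, Subgraph.verts_sup, Subgraph.verts_iSup] at this
    exact this.resolve_right fun hM' => (Set.mem_iUnion.mp hM').elim i.2

lemma pairwise_disjoint_refineLeaves (hL : IsStar H K L w) (hM : IsStar K K' M w') :
    Pairwise fun j k => Disjoint (refineLeaves L w M j).verts (refineLeaves L w M k).verts := by
  -- each new leaf consists of its trace `T j` on `K` and the old leaves attached there
  let T : κ ⊕ {i // ∀ c, w i ∉ (M c).verts} → Set V :=
    Sum.elim (fun c => (M c).verts) fun i => {w i}
  have hT : ∀ j, T j ⊆ K.verts := by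
    rintro (c | i)
    exacts [(hM.le_of_leaf c).1, Set.singleton_subset_iff.mpr (hL.mem_center i)]
  have hTdisj : Pairwise fun j k => Disjoint (T j) (T k) := by
    rintro (c | i) (d | j) hne
    · exact hM.pairwise_disjoint fun h => hne (h ▸ rfl)
    · exact Set.disjoint_singleton_right.mpr (j.2 c)
    · exact Set.disjoint_singleton_left.mpr (i.2 d)
    · refine Set.disjoint_singleton.mpr fun h => ?_
      have hij : i.1 ≠ j.1 := fun h => hne (Subtype.ext h ▸ rfl)
      exact (hL.pairwise_disjoint hij).ne_of_mem (hL.mem_leaf i) (h ▸ hL.mem_leaf j) rfl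
  have hN : ∀ j, (refineLeaves L w M j).verts ⊆ T j ∪ ⋃ i : {i // w i ∈ T j}, (L i).verts := by
    rintro (c | i)
    · simp [refineLeaves, T, Subgraph.verts_iSup]
    · exact fun u hu => Or.inr (Set.mem_iUnion.mpr ⟨⟨i, rfl⟩, hu⟩)
  exact fun j k hjk => (hL.disjoint_attach (hT j) (hT k) (hTdisj hjk)).mono (hN j) (hN k)

lemma trans (hL : IsStar H K L w) (hM : IsStar K K' M w') :
    IsStar H K' (refineLeaves L w M) (Sum.elim w' fun i => w i) where
  sup_eq := sup_refineLeaves hL hM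
  connected := hM.connected
  edgeSet_nonempty := hM.edgeSet_nonempty
  connected_leaf := by
    rintro (c | i)
    · exact (hM.connected_leaf c).sup_iSup (L := fun i : {i // w i ∈ (M c).verts} => L i)
        (fun i => hL.connected_leaf i) fun i => ⟨w i, hL.mem_leaf i, i.2⟩
    · exact hL.connected_leaf i
  edgeSet_nonempty_leaf := by
    rintro (c | i)
    · exact (hM.edgeSet_nonempty_leaf c).mono (Subgraph.edgeSet_mono le_sup_left)
    · exact hL.edgeSet_nonempty_leaf i
  inter_eq := refineLeaves_inter_eq hL hM
  pairwise_disjoint := pairwise_disjoint_refineLeaves hL hM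

end IsStar

end Star

lemma IsDecompositionOf.isStar {V : Type*} {G : SimpleGraph V} {H : G.Subgraph} {n : ℕ}
    {D : Fin n → G.Subgraph} (hD : IsDecompositionOf H D) (a : Fin n) :
    ∃ w, IsStar H (D a) (fun b : {b // (decompGraph D).Adj a b} => branchSup D a b) w := by
  obtain ⟨-, hc, he, hs, hsup, hT⟩ := isDecompositionOf_iff.mp hD
  have hinter : ∀ b : {b // (decompGraph D).Adj a b},
      (branchSup D a b).verts ∩ (D a).verts = (D b).verts ∩ (D a).verts := by
    refine fun b => Set.Subset.antisymm (fun u ⟨hu, hua⟩ => ?_)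
      (Set.inter_subset_inter_left _ (le_branchSup (.refl b.2.ne')).1)
    obtain ⟨x, hxb, hux⟩ := mem_verts_branchSup.mp hu
    have hax : (decompGraph D).Adj a x := ⟨hxb.ne.symm, u, hua, hux⟩
    exact hT.isAcyclic.eq_of_reachableAvoiding hax b.2 hxb ▸ ⟨hux, hua⟩
  choose w hw using fun b : {b // (decompGraph D).Adj a b} =>
    Set.exists_eq_singleton_iff_nonempty_subsingleton.mpr
      ⟨Set.inter_comm _ _ ▸ b.2.2, hs b.2.ne'⟩
  refine ⟨w, ⟨?_, hc a, he a, fun b => connected_branchSup hc b.2.ne',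
    fun b => (he b).mono (Subgraph.edgeSet_mono (le_branchSup (.refl b.2.ne'))),
    fun b => (hinter b).trans (hw b), fun b c hbc => Set.disjoint_left.mpr fun u hub huc => ?_⟩⟩
  · refine hsup ▸ le_antisymm (sup_le (le_iSup D a) (iSup_le fun b => iSup_le fun x =>
      le_iSup D x)) (iSup_le fun x => ?_)
    by_cases hx : x = a
    · exact hx ▸ le_sup_left
    obtain ⟨b, hab, hxb⟩ := hT.connected.exists_adj_reachableAvoiding hx
    exact le_sup_of_le_right (le_iSup_of_le ⟨b, hab⟩ (le_branchSup hxb))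
  · obtain ⟨x, hxb, hux⟩ := mem_verts_branchSup.mp hub
    obtain ⟨y, hyc, huy⟩ := mem_verts_branchSup.mp huc
    have hxy : (decompGraph D).ReachableAvoiding a x y := by
      by_cases h : x = y
      · exact h ▸ .refl hxb.ne
      · exact .of_adj ⟨h, u, hux, huy⟩ hxb.ne hyc.ne
    exact hbc (Subtype.ext (hT.isAcyclic.eq_of_reachableAvoiding b.2 c.2
      (hxb.symm.trans (hxy.trans hyc))))

theorem decomposition_two_options_of_isStar {V : Type*} [Finite V] {G : SimpleGraph V} {v : V}
    {K : G.Subgraph} {ι : Type} [Finite ι] [Nonempty ι] {L : ι → G.Subgraph} {w : ι → V}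
    (h : IsStar ⊤ K L w) (hv : v ∈ K.verts) :
    (∃ L : Fin 2 → G.Subgraph, IsDecomposition G L ∧ ∀ i, v ∈ (L i).verts) ∨
    (∃ (n : ℕ) (K : G.Subgraph) (L : Fin n → G.Subgraph),
      IsDecomposition G (Fin.cons K L) ∧ IsAtomicGraph K.coe ∧ v ∈ K.verts ∧
      ∀ i, v ∉ (L i).verts ∧ ((L i).verts ∩ K.verts).Nonempty) := by
  induction K using WellFoundedLT.induction generalizing ι with
  | _ K ih =>
  by_cases hvL : ∃ j, v ∈ (L j).verts
  · obtain ⟨j, hj⟩ := hvL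
    exact .inl (h.exists_two_pieces_of_mem hv hj)
  by_cases hK : IsAtomicGraph K.coe
  · exact .inr (h.exists_cons_of_isAtomicGraph hK hv (not_exists.mp hvL))
  obtain ⟨m, D, hD⟩ := exists_isDecomposition_of_not_isAtomicGraph
    (Subgraph.connected_iff'.mp h.connected)
    (Set.image_nonempty.mp (K.image_coe_edgeSet_coe ▸ h.edgeSet_nonempty)) hK
  have hE := hD.coeSubgraph
  obtain ⟨a, ha⟩ := hE.exists_mem_verts hv
  obtain ⟨w', hM⟩ := hE.isStar a
  have := hE.nonempty_adj a
  exact ih _ hM.lt (h.trans hM) ha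

/-- For a vertex `v` of a connected non-atomic graph `G`, either (1) `G` admits a
decomposition into two subgraphs both containing `v`, or (2) `G` admits a decomposition
`{K, L 0, …, L (n-1)}` where `K` is atomic (as a graph), `v ∈ K`, `v` lies in no `L i`,
and every `L i` shares a vertex with `K` (the decomposition graph is a star
centered at `K`). -/
theorem decomposition_two_options {V : Type*} [Fintype V] (G : SimpleGraph V)
    (hconn : G.Connected) (hedge : G.edgeSet.Nonempty) (hna : ¬ IsAtomicGraph G)
    (v : V) :
    (∃ L : Fin 2 → G.Subgraph, IsDecomposition G L ∧ ∀ i, v ∈ (L i).verts) ∨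
    (∃ (n : ℕ) (K : G.Subgraph) (L : Fin n → G.Subgraph),
      IsDecomposition G (Fin.cons K L) ∧ IsAtomicGraph K.coe ∧ v ∈ K.verts ∧
      ∀ i, v ∉ (L i).verts ∧ ((L i).verts ∩ K.verts).Nonempty) := by
  obtain ⟨m, D, hD⟩ := exists_isDecomposition_of_not_isAtomicGraph hconn hedge hna
  obtain ⟨a, ha⟩ := hD.exists_mem_verts (Set.mem_univ v)
  obtain ⟨w, hM⟩ := hD.isStar a
  have := hD.nonempty_adj a
  exact decomposition_two_options_of_isStar hM ha
end

section
/- Let G be a connected atomic finite simple graph and let X be a connected subgraph of G containing at least one edge, such that some vertex of G does not belong to X. Then there exist an edge e = {u,v} of G with u a vertex of X and v not a vertex of X, and a path in G from v to some vertex of X that does not pass through u and does not use the edge e. -/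
/-!
Suppose there is no such escape path. Take an edge `uv` leaving `X` and let `R` be the set of
vertices reached from `u` by a walk that leaves `X` at its first step and never returns. Every
neighbour in `X` of a vertex of `R` must then be `u`, so `u` is a cut vertex: the subgraphs
induced on `R ∪ {u}` and on the complement of `R` are connected, have edges, meet only in `u`
and together cover `G`. This two-piece decomposition contradicts atomicity.
-/

open SimpleGraph

namespace SimpleGraph

variable {V : Type*} {G : SimpleGraph V}

theorem isTree_of_adj_zero_one {H : SimpleGraph (Fin 2)} (h : H.Adj 0 1) : H.IsTree where
  preconnected i j := by
    fin_cases i <;> fin_cases j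
    exacts [.rfl, h.reachable, h.reachable.symm, .rfl]
  isAcyclic := .of_card_le_two (by simp)

theorem Subgraph.edgeSet_inter_eq_empty_of_verts_inter_subsingleton {H₁ H₂ : G.Subgraph}
    (h : (H₁.verts ∩ H₂.verts).Subsingleton) : H₁.edgeSet ∩ H₂.edgeSet = ∅ := by
  refine Set.eq_empty_of_forall_notMem fun e ⟨he₁, he₂⟩ => ?_
  induction e using Sym2.ind with
  | _ a b =>
    have hab : G.Adj a b := H₁.adj_sub he₁
    exact hab.ne (h ⟨H₁.edge_vert he₁, H₂.edge_vert he₂⟩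
      ⟨H₁.edge_vert he₁.symm, H₂.edge_vert he₂.symm⟩)

theorem Subgraph.connected_induce_top_of_forall_walk {s : Set V} {r : V} (hr : r ∈ s)
    (h : ∀ w ∈ s, ∃ p : G.Walk r w, ∀ x ∈ p.support, x ∈ s) :
    ((⊤ : G.Subgraph).induce s).Connected := by
  refine (connected_iff_forall_exists_walk_subgraph _).2 ⟨⟨r, hr⟩, fun {a b} ha hb => ?_⟩
  obtain ⟨p, hp⟩ := h a ha
  obtain ⟨q, hq⟩ := h b hb
  refine ⟨p.reverse.append q, (p.reverse.append q).toSubgraph_le_induce_support.trans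
    (induce_mono_right fun x hx => ?_)⟩
  rw [Set.mem_ofPred_eq, Walk.mem_support_append_iff, Walk.support_reverse, List.mem_reverse] at hx
  exact hx.elim (hp x) (hq x)

theorem Subgraph.induce_sup_induce_eq_top {s t : Set V} (hst : s ∪ t = Set.univ)
    (h : ∀ a b, G.Adj a b → a ∈ s ∧ b ∈ s ∨ a ∈ t ∧ b ∈ t) :
    (⊤ : G.Subgraph).induce s ⊔ (⊤ : G.Subgraph).induce t = ⊤ := by
  ext a b
  · simp [hst]
  · simp only [sup_adj, induce_adj, top_adj]
    exact ⟨fun hab => hab.elim (·.2.2) (·.2.2), fun hab => (h a b hab).imp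
      (fun ⟨ha, hb⟩ => ⟨ha, hb, hab⟩) (fun ⟨ha, hb⟩ => ⟨ha, hb, hab⟩)⟩

theorem isDecomposition_pair {H₁ H₂ : G.Subgraph} {u : V} (h₁ : H₁.Connected)
    (h₂ : H₂.Connected) (he₁ : H₁.edgeSet.Nonempty) (he₂ : H₂.edgeSet.Nonempty)
    (hinter : H₁.verts ∩ H₂.verts = {u}) (hsup : H₁ ⊔ H₂ = ⊤) :
    IsDecomposition G ![H₁, H₂] := by
  have hsub : ∀ i j : Fin 2, i ≠ j →
      ((![H₁, H₂] i).verts ∩ (![H₁, H₂] j).verts).Subsingleton := by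
    intro i j hij
    fin_cases i <;> fin_cases j <;> simp_all [Set.inter_comm H₂.verts]
  refine ⟨le_rfl, fun _ => le_top, Fin.forall_fin_two.2 ⟨h₁, h₂⟩,
    Fin.forall_fin_two.2 ⟨he₁, he₂⟩,
    fun i j hij => Subgraph.edgeSet_inter_eq_empty_of_verts_inter_subsingleton (hsub i j hij),
    hsub, ?_, ?_, isTree_of_adj_zero_one ⟨by decide, ⟨u, by simp [hinter]⟩⟩⟩
  · rw [← hsup]
    ext; simp [Fin.exists_fin_two]
  · rw [← hsup]
    ext; simp [Fin.exists_fin_two]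

inductive OutsideReach (G : SimpleGraph V) (S : Set V) (u : V) : V → Prop
  | adj {v : V} : G.Adj u v → v ∉ S → OutsideReach G S u v
  | tail {w z : V} : OutsideReach G S u w → G.Adj w z → z ∉ S → OutsideReach G S u z

namespace OutsideReach

variable {S : Set V} {u w z : V}

theorem notMem (h : G.OutsideReach S u w) : w ∉ S := by
  cases h <;> assumption

theorem exists_walk (h : G.OutsideReach S u w) :
    ∃ v, G.Adj u v ∧ ∃ p : G.Walk v w, ∀ x ∈ p.support, G.OutsideReach S u x := by
  induction h with
  | adj huv hv => exact ⟨_, huv, .nil, by simpa using .adj huv hv⟩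
  | tail _ hwz hz ih =>
    obtain ⟨v, huv, p, hp⟩ := ih
    refine ⟨v, huv, p.concat hwz, fun x hx => ?_⟩
    rw [Walk.support_concat, List.mem_append, List.mem_singleton] at hx
    rcases hx with hx | rfl
    exacts [hp x hx, .tail (hp _ p.end_mem_support) hwz hz]

theorem exists_escape_path (hu : u ∈ S) (h : G.OutsideReach S u w) (hwz : G.Adj w z)
    (hzu : z ≠ u) :
    ∃ v, G.Adj u v ∧ v ∉ S ∧ ∃ p : G.Walk v z, p.IsPath ∧ u ∉ p.support ∧ s(u, v) ∉ p.edges := by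
  classical
  obtain ⟨v, huv, p, hp⟩ := h.exists_walk
  have hu' : u ∉ (p.concat hwz).support := by
    rw [Walk.support_concat, List.mem_append, List.mem_singleton, not_or]
    exact ⟨fun hup => (hp u hup).notMem hu, hzu.symm⟩
  have hbypass : u ∉ (p.concat hwz).bypass.support :=
    fun hup => hu' ((p.concat hwz).support_bypass_subset_support hup)
  exact ⟨v, huv, (hp v p.start_mem_support).notMem, _, (p.concat hwz).bypass_isPath, hbypass,
    fun he => hbypass (Walk.fst_mem_support_of_mem_edges _ he)⟩

theorem adj_mem_insert
    (hsep : ∀ w z, G.OutsideReach S u w → G.Adj w z → z ∈ S → z = u)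
    (h : G.OutsideReach S u w) (hwz : G.Adj w z) :
    z ∈ insert u {x | G.OutsideReach S u x} := by
  by_cases hz : z ∈ S
  · exact .inl (hsep w z h hwz hz)
  · exact .inr (h.tail hwz hz)

end OutsideReach

variable {S : Set V} {u : V}

theorem exists_walk_not_outsideReach {w y : V} (q : G.Walk w y) (hy : y ∈ S)
    (hw : ¬ G.OutsideReach S u w) :
    ∃ x ∈ S, ∃ p : G.Walk w x, ∀ z ∈ p.support, ¬ G.OutsideReach S u z := by
  induction q with
  | nil => exact ⟨_, hy, .nil, by simpa⟩
  | @cons w b _ hwb _ ih =>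
    by_cases hwS : w ∈ S
    · exact ⟨w, hwS, .nil, by simpa⟩
    obtain ⟨x, hx, p, hp⟩ := ih hy fun hb => hw (hb.tail hwb.symm hwS)
    exact ⟨x, hx, .cons hwb p, by simpa [hw] using hp⟩

theorem isDecomposition_induce_outsideReach {X : G.Subgraph} {v : V} (hG : G.Preconnected)
    (hX : X.Connected) (hXe : X.edgeSet.Nonempty) (hu : u ∈ X.verts) (huv : G.Adj u v)
    (hv : v ∉ X.verts)
    (hsep : ∀ w z, G.OutsideReach X.verts u w → G.Adj w z → z ∈ X.verts → z = u) :
    IsDecomposition G ![(⊤ : G.Subgraph).induce {w | G.OutsideReach X.verts u w}ᶜ,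
      (⊤ : G.Subgraph).induce (insert u {w | G.OutsideReach X.verts u w})] := by
  set R := {w | G.OutsideReach X.verts u w}
  have hXR : X.verts ⊆ Rᶜ := fun x hx h => h.notMem hx
  apply isDecomposition_pair (u := u)
  · obtain ⟨r, hr⟩ := hX.nonempty
    refine Subgraph.connected_induce_top_of_forall_walk (hXR hr) fun w hw => ?_
    obtain ⟨x, hx, p, hp⟩ := exists_walk_not_outsideReach (hG w r).some hr hw
    obtain ⟨q, hq⟩ := ((Subgraph.connected_iff_forall_exists_walk_subgraph X).1 hX).2 hr hx
    refine ⟨q.append p.reverse, fun y hy => ?_⟩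
    rw [Walk.mem_support_append_iff, Walk.support_reverse, List.mem_reverse] at hy
    refine hy.elim (fun hy => hXR ?_) (hp y)
    exact Subgraph.verts_mono hq (q.verts_toSubgraph ▸ hy)
  · refine Subgraph.connected_induce_top_of_forall_walk (Set.mem_insert u R) fun w hw => ?_
    rcases hw with rfl | hw
    · exact ⟨.nil, by simp⟩
    obtain ⟨v, huv, p, hp⟩ := hw.exists_walk
    refine ⟨.cons huv p, fun x hx => ?_⟩
    rw [Walk.support_cons, List.mem_cons] at hx
    exact hx.imp id (hp x)
  · obtain ⟨e, he⟩ := hXe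
    exact ⟨e, Subgraph.edgeSet_mono (Subgraph.le_induce_top_verts.trans
      (Subgraph.induce_mono_right hXR)) he⟩
  · exact ⟨s(u, v), Set.mem_insert u R, .inr (.adj huv hv), huv⟩
  · ext w
    refine ⟨fun ⟨hwR, hw⟩ => hw.resolve_right hwR, ?_⟩
    rintro rfl
    exact ⟨fun h => h.notMem hu, Set.mem_insert w R⟩
  · refine Subgraph.induce_sup_induce_eq_top (Set.eq_univ_of_forall fun w =>
      (em (w ∈ R)).elim (fun h => .inr (.inr h)) .inl) fun a b hab => ?_
    by_cases ha : a ∈ R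
    · exact .inr ⟨.inr ha, ha.adj_mem_insert hsep hab⟩
    by_cases hb : b ∈ R
    · exact .inr ⟨hb.adj_mem_insert hsep hab.symm, .inr hb⟩
    exact .inl ⟨ha, hb⟩

end SimpleGraph

theorem atomic_escape_path_general {V : Type*} (G : SimpleGraph V)
    (hatom : IsAtomicGraph G)
    (X : G.Subgraph) (hXconn : X.Connected) (hXedge : X.edgeSet.Nonempty)
    (hout : ∃ w : V, w ∉ X.verts) :
    ∃ u v : V, u ∈ X.verts ∧ v ∉ X.verts ∧ G.Adj u v ∧
      ∃ (x : V) (p : G.Walk v x), x ∈ X.verts ∧ p.IsPath ∧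
        u ∉ p.support ∧ s(u, v) ∉ p.edges := by
  obtain ⟨x, hx⟩ := hXconn.nonempty
  obtain ⟨w, hw⟩ := hout
  obtain ⟨d, -, hu, hv⟩ := (hatom.1 x w).some.exists_boundary_dart X.verts hx hw
  by_contra hno
  have hsep : ∀ y z, G.OutsideReach X.verts d.fst y → G.Adj y z → z ∈ X.verts → z = d.fst := by
    intro y z hy hyz hz
    by_contra hzu
    obtain ⟨v, huv, hv, p, hp⟩ := hy.exists_escape_path hu hyz hzu
    exact hno ⟨d.fst, v, hu, hv, huv, z, p, hz, hp⟩
  exact hatom.2.2 2 _ (isDecomposition_induce_outsideReach hatom.1.preconnected hXconn hXedge hu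
    d.adj hv hsep)

/-- In a connected atomic graph `G`, for any connected subgraph `X` with at least one
edge which does not contain all vertices, there is an edge `{u, v}` of `G` with
`u ∈ X` and `v ∉ X`, together with a path in `G` from `v` back to some vertex of `X`
which avoids the vertex `u` (and in particular does not use the edge `{u, v}`). -/
theorem atomic_escape_path {V : Type*} [Fintype V] (G : SimpleGraph V)
    (hatom : IsAtomicGraph G)
    (X : G.Subgraph) (hXconn : X.Connected) (hXedge : X.edgeSet.Nonempty)
    (hout : ∃ w : V, w ∉ X.verts) :
    ∃ u v : V, u ∈ X.verts ∧ v ∉ X.verts ∧ G.Adj u v ∧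
      ∃ (x : V) (p : G.Walk v x), x ∈ X.verts ∧ p.IsPath ∧
        u ∉ p.support ∧ s(u, v) ∉ p.edges :=
  atomic_escape_path_general G hatom X hXconn hXedge hout
end
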